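/- arXiv:1212.6049 — 8 statements merged into one kernel-verified Lean document; each statement's English description precedes it below -/
import Mathlib

section
/- For any commutative ring R, any N ≥ 1, and any partition λ with ℓ(λ) ≤ N, the following identity holds in MvPolynomial (Fin N) R: det_{1≤i,j≤N} ( X_i^{λ_j + N − j} ) = s_λ · ∏_{1≤i<j≤N} ( X_i − X_j ), where s_λ = det_{1≤i,j≤N} ( h_{λ_i − i + j} ) is the Jacobi–Trudi determinant (here λ is padded with zero parts up to length N). -/
set_option linter.unusedSectionVars false
set_option linter.unusedVariables false

open MvPolynomial Finset

section Aux

variable {σ : Type*} [Fintype σ] [DecidableEq σ] {R : Type*} [CommRing R]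

/-- elementary symmetric in variables from `s`. -/
noncomputable def eS (R : Type*) [CommRing R] (s : Finset σ) (k : ℕ) : MvPolynomial σ R :=
  ∑ A ∈ s.powersetCard k, ∏ x ∈ A, X x

/-- complete homogeneous symmetric in variables from `s`. -/
noncomputable def hS (R : Type*) [CommRing R] (s : Finset σ) (n : ℕ) : MvPolynomial σ R :=
  ∑ m ∈ Finset.univ.filter (fun m : Sym σ n => ∀ x ∈ (m : Multiset σ), x ∈ s),
    ((m : Multiset σ).map X).prod

theorem eS_zero (s : Finset σ) : eS R s 0 = 1 := by
  simp [eS]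

theorem eS_of_card_lt {s : Finset σ} {k : ℕ} (h : s.card < k) : eS R s k = 0 := by
  rw [eS, Finset.powersetCard_eq_empty.2 h, Finset.sum_empty]

theorem eS_insert {a : σ} {s : Finset σ} (ha : a ∉ s) (k : ℕ) :
    eS R (insert a s) (k + 1) = eS R s (k + 1) + X a * eS R s k := by
  rw [eS, Finset.powersetCard_succ_insert ha, Finset.sum_union, eS, eS, Finset.mul_sum]
  · congr 1
    rw [Finset.sum_image]
    · refine Finset.sum_congr rfl fun A hA => ?_
      rw [Finset.prod_insert fun hc => ha ((Finset.mem_powersetCard.1 hA).1 hc)]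
    · intro A hA B hB hAB
      have hA' := (Finset.mem_powersetCard.1 hA).1
      have hB' := (Finset.mem_powersetCard.1 hB).1
      have h1 : a ∉ A := fun hc => ha (hA' hc)
      have h2 : a ∉ B := fun hc => ha (hB' hc)
      rw [← Finset.erase_insert h1, ← Finset.erase_insert h2, hAB]
  · rw [Finset.disjoint_left]
    intro A hA hA'
    obtain ⟨B, hB, rfl⟩ := Finset.mem_image.1 hA'
    exact ha ((Finset.mem_powersetCard.1 hA).1 (Finset.mem_insert_self a B))

noncomputable def PhiPS (R : Type*) [CommRing R] (s : Finset σ) :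
    PowerSeries (MvPolynomial σ R) :=
  ∏ x ∈ s, (1 - PowerSeries.C (X x) * PowerSeries.X)

noncomputable def HPS (R : Type*) [CommRing R] (s : Finset σ) :
    PowerSeries (MvPolynomial σ R) :=
  PowerSeries.mk fun n => hS R s n

noncomputable def GPS (R : Type*) [CommRing R] (a : σ) :
    PowerSeries (MvPolynomial σ R) :=
  PowerSeries.mk fun n => (X a : MvPolynomial σ R) ^ n

theorem geom_inv (a : σ) :
    (1 - PowerSeries.C (X a) * PowerSeries.X) * GPS R a = 1 := by
  ext n
  rw [sub_mul, one_mul, mul_assoc, map_sub]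
  cases n with
  | zero => simp [GPS]
  | succ n =>
      rw [PowerSeries.coeff_C_mul, PowerSeries.coeff_succ_X_mul]
      simp [GPS, pow_succ, mul_comm]

theorem prod_map_fill (a : σ) {n : ℕ} (i : Fin (n + 1)) (m : Sym σ (n - (i : ℕ))) :
    (((m.fill a i : Sym σ n) : Multiset σ).map (X : σ → MvPolynomial σ R)).prod
      = X a ^ (i : ℕ) * ((m : Multiset σ).map X).prod := by
  rw [Sym.coe_fill, Multiset.map_add, Multiset.prod_add, Sym.coe_replicate,
    Multiset.map_replicate, Multiset.prod_replicate, mul_comm]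

theorem hS_insert {a : σ} {s : Finset σ} (ha : a ∉ s) (n : ℕ) :
    hS R (insert a s) n = ∑ i ∈ Finset.range (n + 1), X a ^ i * hS R s (n - i) := by
  rw [← Fin.sum_univ_eq_sum_range fun i => X a ^ i * hS R s (n - i)]
  simp only [hS, Finset.mul_sum]
  rw [Finset.sum_sigma']
  refine Finset.sum_nbij' (fun m => m.filterNe a) (fun x => x.2.fill a x.1) ?_ ?_ ?_ ?_ ?_
  · intro m hm
    rw [Finset.mem_sigma]
    refine ⟨Finset.mem_univ _, Finset.mem_filter.2 ⟨Finset.mem_univ _, ?_⟩⟩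
    intro x hx
    have hx' := Multiset.mem_filter.1 hx
    have := (Finset.mem_filter.1 hm).2 _ hx'.1
    rcases Finset.mem_insert.1 this with h | h
    · exact absurd h.symm hx'.2
    · exact h
  · intro x hx
    refine Finset.mem_filter.2 ⟨Finset.mem_univ _, ?_⟩
    intro y hy
    rw [Sym.coe_fill, Multiset.mem_add] at hy
    rcases hy with h | h
    · exact Finset.mem_insert_of_mem ((Finset.mem_filter.1 (Finset.mem_sigma.1 hx).2).2 _ h)
    · rw [Multiset.eq_of_mem_replicate h]
      exact Finset.mem_insert_self a s
  · intro m _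
    exact Sym.fill_filterNe a m
  · intro x hx
    refine Sym.filter_ne_fill a x ?_
    intro hmem
    exact ha ((Finset.mem_filter.1 (Finset.mem_sigma.1 hx).2).2 _ hmem)
  · intro m hm
    conv_lhs => rw [← Sym.fill_filterNe a m]
    exact prod_map_fill a _ _

theorem hS_empty (n : ℕ) : hS R (∅ : Finset σ) n = if n = 0 then 1 else 0 := by
  rw [hS]
  cases n with
  | zero =>
      rw [if_pos rfl]
      have h : Finset.univ.filter
          (fun m : Sym σ 0 => ∀ x ∈ (m : Multiset σ), x ∈ (∅ : Finset σ))
          = {(Sym.nil : Sym σ 0)} := by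
        ext m
        rw [Sym.eq_nil_of_card_zero m]
        simp
        exact Subsingleton.elim _ _
      rw [h, Finset.sum_singleton]
      simp
  | succ n =>
      rw [if_neg (Nat.succ_ne_zero n)]
      refine Finset.sum_eq_zero fun m hm => ?_
      exfalso
      have hcard : (m : Multiset σ).card = n + 1 := m.2
      obtain ⟨x, hx⟩ := Multiset.card_pos_iff_exists_mem.1 (by rw [hcard]; exact n.succ_pos)
      exact absurd ((Finset.mem_filter.1 hm).2 x hx) (Finset.notMem_empty x)

theorem HPS_empty : HPS R (∅ : Finset σ) = 1 := by
  refine PowerSeries.ext fun n => ?_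
  rw [HPS, PowerSeries.coeff_mk, hS_empty, PowerSeries.coeff_one]

theorem HPS_insert {a : σ} {s : Finset σ} (ha : a ∉ s) :
    HPS R (insert a s) = GPS R a * HPS R s := by
  refine PowerSeries.ext fun n => ?_
  rw [HPS, PowerSeries.coeff_mk, hS_insert ha, PowerSeries.coeff_mul,
    Finset.Nat.sum_antidiagonal_eq_sum_range_succ_mk]
  exact Finset.sum_congr rfl fun k _ => by
    simp only [GPS, HPS, PowerSeries.coeff_mk]

theorem Phi_mul_HPS (s : Finset σ) : PhiPS R s * HPS R s = 1 := by
  classical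
  induction s using Finset.induction_on with
  | empty => rw [PhiPS, Finset.prod_empty, HPS_empty, one_mul]
  | @insert a s ha ih =>
      rw [PhiPS, Finset.prod_insert ha, HPS_insert ha, ← PhiPS]
      calc (1 - PowerSeries.C (X a) * PowerSeries.X) * PhiPS R s * (GPS R a * HPS R s)
          = ((1 - PowerSeries.C (X a) * PowerSeries.X) * GPS R a) * (PhiPS R s * HPS R s) := by
            ring
        _ = 1 := by rw [geom_inv, ih, one_mul]

theorem hS_univ (n : ℕ) : hS R (Finset.univ : Finset σ) n = hsymm σ R n := by
  rw [hS, hsymm, Finset.filter_true_of_mem (fun m _ => fun x _ => Finset.mem_univ x)]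
  exact Finset.sum_congr rfl fun m _ => rfl

theorem Phi_erase_mul (a : σ) :
    PhiPS R ((Finset.univ : Finset σ).erase a) * HPS R (Finset.univ : Finset σ) = GPS R a := by
  have h1 : (1 - PowerSeries.C (X a) * PowerSeries.X) * PhiPS R (Finset.univ.erase a)
      = PhiPS R (Finset.univ : Finset σ) := by
    simp only [PhiPS]
    exact Finset.mul_prod_erase Finset.univ
      (fun x => 1 - PowerSeries.C (X x) * PowerSeries.X) (Finset.mem_univ a)
  have h2 : (1 - PowerSeries.C (X a) * PowerSeries.X)
      * (PhiPS R (Finset.univ.erase a) * HPS R (Finset.univ : Finset σ)) = 1 := by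
    rw [← mul_assoc, h1, Phi_mul_HPS]
  have h3 := geom_inv (R := R) a
  calc PhiPS R (Finset.univ.erase a) * HPS R (Finset.univ : Finset σ)
      = ((1 - PowerSeries.C (X a) * PowerSeries.X) * GPS R a)
          * (PhiPS R (Finset.univ.erase a) * HPS R (Finset.univ : Finset σ)) := by
        rw [h3, one_mul]
    _ = ((1 - PowerSeries.C (X a) * PowerSeries.X)
          * (PhiPS R (Finset.univ.erase a) * HPS R (Finset.univ : Finset σ))) * GPS R a := by
        ring
    _ = GPS R a := by rw [h2, one_mul]

theorem coeff_Phi (s : Finset σ) (k : ℕ) :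
    (PowerSeries.coeff (R := MvPolynomial σ R) k) (PhiPS R s) = (-1) ^ k * eS R s k := by
  classical
  induction s using Finset.induction_on generalizing k with
  | empty =>
      rw [PhiPS, Finset.prod_empty, PowerSeries.coeff_one]
      cases k with
      | zero => simp [eS_zero]
      | succ k =>
          rw [if_neg (Nat.succ_ne_zero k), eS_of_card_lt (by simp), mul_zero]
  | @insert a s ha ih =>
      rw [PhiPS, Finset.prod_insert ha, ← PhiPS, sub_mul, one_mul, map_sub, mul_assoc,
        PowerSeries.coeff_C_mul]
      cases k with
      | zero =>
          rw [PowerSeries.coeff_zero_eq_constantCoeff, map_mul, PowerSeries.constantCoeff_X,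
            zero_mul, mul_zero, sub_zero, ← PowerSeries.coeff_zero_eq_constantCoeff, ih,
            eS_zero, eS_zero]
      | succ k =>
          rw [PowerSeries.coeff_succ_X_mul, ih, ih, eS_insert ha]
          ring

theorem hsymm_expand (a : σ) (p : ℕ) :
    (X a : MvPolynomial σ R) ^ p
      = ∑ k ∈ Finset.range (p + 1),
          (-1) ^ k * eS R (Finset.univ.erase a) k * hsymm σ R (p - k) := by
  have h := congrArg (PowerSeries.coeff (R := MvPolynomial σ R) p) (Phi_erase_mul (R := R) a)
  rw [PowerSeries.coeff_mul, Finset.Nat.sum_antidiagonal_eq_sum_range_succ_mk] at h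
  rw [GPS, PowerSeries.coeff_mk] at h
  rw [← h]
  exact Finset.sum_congr rfl fun k _ => by
    rw [coeff_Phi, HPS, PowerSeries.coeff_mk, hS_univ]

end Aux

/-- The complete homogeneous symmetric polynomial `h_k` in `N` variables, indexed by an
integer `k`, with `h_k = 0` for `k < 0` and `h_0 = 1`. -/
noncomputable def hInt (R : Type*) [CommRing R] (N : ℕ) (k : ℤ) : MvPolynomial (Fin N) R :=
  if 0 ≤ k then hsymm (Fin N) R k.toNat else 0

/-- The Jacobi–Trudi Schur polynomial `s_λ = det_{1≤i,j≤L} (h_{λ_i - i + j})` in `N`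
variables, where the parts of `λ` are `lam 0 ≥ lam 1 ≥ …` (0-indexed) and the
determinant has size `L`. -/
noncomputable def jtSchur (R : Type*) [CommRing R] (N : ℕ) (lam : ℕ → ℕ) (L : ℕ) :
    MvPolynomial (Fin N) R :=
  Matrix.det (Matrix.of fun i j : Fin L => hInt R N ((lam i : ℤ) + j - i))

theorem lemA {R : Type*} [CommRing R] {N : ℕ} (i : Fin N) (p : ℕ) :
    (X i : MvPolynomial (Fin N) R) ^ p
      = ∑ k : Fin N, (-1) ^ (k : ℕ) * eS R (Finset.univ.erase i) (k : ℕ)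
          * hInt R N ((p : ℤ) - (k : ℕ)) := by
  set F : ℕ → MvPolynomial (Fin N) R := fun k =>
    (-1) ^ k * eS R (Finset.univ.erase i) k * hInt R N ((p : ℤ) - k) with hF
  have hFp : ∀ k, p < k → F k = 0 := by
    intro k hk
    have : ¬ (0 : ℤ) ≤ (p : ℤ) - k := by omega
    rw [hF]
    simp only [hInt, if_neg this, mul_zero]
  have hFN : ∀ k, N ≤ k → F k = 0 := by
    intro k hk
    have hNpos : 0 < N := i.pos
    have hcard : (Finset.univ.erase i).card < k := by
      rw [Finset.card_erase_of_mem (Finset.mem_univ i), Finset.card_univ, Fintype.card_fin]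
      omega
    rw [hF]
    simp only [eS_of_card_lt hcard, mul_zero, zero_mul]
  have h1 : (X i : MvPolynomial (Fin N) R) ^ p = ∑ k ∈ Finset.range (p + 1), F k := by
    rw [hsymm_expand i p]
    refine Finset.sum_congr rfl fun k hk => ?_
    have hk' : k ≤ p := Nat.lt_succ_iff.1 (Finset.mem_range.1 hk)
    have h0 : (0 : ℤ) ≤ (p : ℤ) - k := by omega
    have ht : ((p : ℤ) - k).toNat = p - k := by omega
    rw [hF]
    simp only [hInt, if_pos h0, ht]
  have h2 : ∑ k ∈ Finset.range (p + 1), F k = ∑ k ∈ Finset.range (p + 1 + N), F k := by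
    refine Finset.sum_subset (Finset.range_subset_range.2 (by omega)) fun k hkt hks => ?_
    exact hFp k (by
      have h1 : ¬ k < p + 1 := fun hc => hks (Finset.mem_range.2 hc)
      omega)
  have h3 : ∑ k ∈ Finset.range N, F k = ∑ k ∈ Finset.range (p + 1 + N), F k := by
    refine Finset.sum_subset (Finset.range_subset_range.2 (by omega)) fun k hkt hks => ?_
    exact hFN k (by
      have h1 : ¬ k < N := fun hc => hks (Finset.mem_range.2 hc)
      omega)
  rw [h1, h2, ← h3, ← Fin.sum_univ_eq_sum_range F N]

noncomputable def Emat (R : Type*) [CommRing R] (N : ℕ) :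
    Matrix (Fin N) (Fin N) (MvPolynomial (Fin N) R) :=
  Matrix.of fun i k => (-1) ^ (k : ℕ) * eS R (Finset.univ.erase i) (k : ℕ)

noncomputable def Hmat (R : Type*) [CommRing R] (N : ℕ) (mu : ℕ → ℕ) :
    Matrix (Fin N) (Fin N) (MvPolynomial (Fin N) R) :=
  Matrix.of fun k j => hInt R N ((mu (j : ℕ) : ℤ) + ((N - 1 - (j : ℕ) : ℕ) : ℤ) - (k : ℕ))

theorem M_decomp {R : Type*} [CommRing R] (N : ℕ) (mu : ℕ → ℕ) :
    (Matrix.of fun i j : Fin N => (X i : MvPolynomial (Fin N) R) ^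
        (mu (j : ℕ) + (N - 1 - (j : ℕ)))) = Emat R N * Hmat R N mu := by
  refine Matrix.ext fun i j => ?_
  rw [Matrix.mul_apply, Matrix.of_apply, lemA i (mu (j : ℕ) + (N - 1 - (j : ℕ)))]
  refine Finset.sum_congr rfl fun k _ => ?_
  simp only [Emat, Hmat, Matrix.of_apply]
  have harg : ((mu (j : ℕ) + (N - 1 - (j : ℕ)) : ℕ) : ℤ) - ((k : ℕ) : ℤ)
      = (mu (j : ℕ) : ℤ) + ((N - 1 - (j : ℕ) : ℕ) : ℤ) - ((k : ℕ) : ℤ) := by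
    push_cast
    ring
  rw [harg]

theorem Hmat_rev {R : Type*} [CommRing R] (N : ℕ) (mu : ℕ → ℕ) :
    (Hmat R N mu).submatrix Fin.revPerm id
      = Matrix.of fun k j : Fin N => hInt R N ((mu (j : ℕ) : ℤ) + (k : ℕ) - (j : ℕ)) := by
  refine Matrix.ext fun k j => ?_
  simp only [Matrix.submatrix_apply, Hmat, Matrix.of_apply, id_eq, Fin.revPerm_apply]
  congr 1
  have hj := j.isLt
  have hk := k.isLt
  have : ((Fin.rev k : Fin N) : ℕ) = N - (k + 1) := Fin.val_rev k
  omega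

theorem jt_eq_det {R : Type*} [CommRing R] (N : ℕ) (lam : ℕ → ℕ) :
    jtSchur R N lam N
      = Matrix.det (Matrix.of fun k j : Fin N => hInt R N ((lam (j : ℕ) : ℤ) + (k : ℕ) - (j : ℕ))) := by
  rw [jtSchur, ← Matrix.det_transpose]
  rfl

theorem Hmat_zero_det {R : Type*} [CommRing R] (N : ℕ) :
    Matrix.det ((Hmat R N (fun _ => 0)).submatrix Fin.revPerm id) = 1 := by
  rw [Hmat_rev]
  rw [Matrix.det_of_lowerTriangular _ (fun i j hij => ?_)]
  · refine Finset.prod_eq_one fun i _ => ?_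
    have h : (((fun _ => 0 : ℕ → ℕ) (i : ℕ) : ℕ) : ℤ) + (i : ℕ) - (i : ℕ) = 0 := by
      simp
    rw [Matrix.of_apply, h]
    simp [hInt, hsymm_zero]
  · have h : ¬ (0 : ℤ) ≤ (((fun _ => 0 : ℕ → ℕ) (j : ℕ) : ℕ) : ℤ) + (i : ℕ) - (j : ℕ) := by
      have : (i : ℕ) < (j : ℕ) := hij
      simp only [Int.not_le]
      omega
    rw [Matrix.of_apply, hInt, if_neg h]

theorem prod_pairs {A : Type*} [CommRing A] {N : ℕ} (g : Fin N → Fin N → A) :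
    ∏ p ∈ Finset.univ.filter (fun p : Fin N × Fin N => p.1 < p.2), g p.1 p.2
      = ∏ i, ∏ j ∈ Finset.Ioi i, g i j := by
  rw [Finset.prod_filter, Fintype.prod_prod_type]
  refine Finset.prod_congr rfl fun i _ => ?_
  rw [← Finset.prod_filter]
  congr 1
  ext j
  simp [Finset.mem_Ioi]

theorem prod_pairs_rev {R : Type*} [CommRing R] {N : ℕ} :
    ∏ p ∈ Finset.univ.filter (fun p : Fin N × Fin N => p.1 < p.2),
        ((X p.2.rev : MvPolynomial (Fin N) R) - X p.1.rev)
      = ∏ p ∈ Finset.univ.filter (fun p : Fin N × Fin N => p.1 < p.2), (X p.1 - X p.2) := by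
  refine Finset.prod_nbij' (fun p => (p.2.rev, p.1.rev)) (fun p => (p.2.rev, p.1.rev))
    ?_ ?_ ?_ ?_ ?_
  · intro p hp
    refine Finset.mem_filter.2 ⟨Finset.mem_univ _, ?_⟩
    exact Fin.rev_lt_rev.2 (Finset.mem_filter.1 hp).2
  · intro p hp
    refine Finset.mem_filter.2 ⟨Finset.mem_univ _, ?_⟩
    exact Fin.rev_lt_rev.2 (Finset.mem_filter.1 hp).2
  · intro p _
    simp [Fin.rev_rev]
  · intro p _
    simp [Fin.rev_rev]
  · intro p _
    rfl

theorem vdm_det {R : Type*} [CommRing R] (N : ℕ) :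
    Matrix.det (Matrix.of fun i j : Fin N =>
        (X i : MvPolynomial (Fin N) R) ^ (N - 1 - (j : ℕ)))
      = ∏ p ∈ Finset.univ.filter (fun p : Fin N × Fin N => p.1 < p.2), (X p.1 - X p.2) := by
  classical
  set v : Fin N → MvPolynomial (Fin N) R := fun i => X i with hv
  -- step a : our matrix is column-reversed vandermonde
  have ha : (Matrix.of fun i j : Fin N => (X i : MvPolynomial (Fin N) R) ^ (N - 1 - (j : ℕ)))
      = (Matrix.vandermonde v).submatrix id Fin.revPerm := by
    refine Matrix.ext fun i j => ?_
    simp only [Matrix.submatrix_apply, Matrix.vandermonde, Matrix.of_apply, id_eq,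
      Fin.revPerm_apply, hv]
    congr 1
    have hj := j.isLt
    have : ((Fin.rev j : Fin N) : ℕ) = N - (j + 1) := Fin.val_rev j
    omega
  -- step b : rename by rev applied to det_vandermonde
  have hb : ((Matrix.vandermonde v).submatrix Fin.revPerm id).det
      = ∏ p ∈ Finset.univ.filter (fun p : Fin N × Fin N => p.1 < p.2), (X p.1 - X p.2) := by
    have hmap : (Matrix.vandermonde v).map (rename (Fin.rev : Fin N → Fin N)).toRingHom
        = (Matrix.vandermonde v).submatrix Fin.revPerm id := by
      refine Matrix.ext fun i j => ?_
      simp [Matrix.vandermonde, hv, map_pow]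
    have hdet := RingHom.map_det (rename (Fin.rev : Fin N → Fin N)).toRingHom
      (Matrix.vandermonde v)
    rw [RingHom.mapMatrix_apply, hmap] at hdet
    rw [← hdet, AlgHom.toRingHom_eq_coe, RingHom.coe_coe,
      Matrix.det_vandermonde, ← prod_pairs (fun i j => v j - v i)]
    rw [map_prod]
    rw [← prod_pairs_rev (R := R) (N := N)]
    refine Finset.prod_congr rfl fun p _ => ?_
    simp [hv]
  rw [ha]
  have h1 : ((Matrix.vandermonde v).submatrix id Fin.revPerm).det
      = ((Equiv.Perm.sign (Fin.revPerm : Equiv.Perm (Fin N)) : ℤ) : MvPolynomial (Fin N) R)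
        * (Matrix.vandermonde v).det := by
    exact_mod_cast Matrix.det_permute' Fin.revPerm (Matrix.vandermonde v)
  have h2 : ((Matrix.vandermonde v).submatrix Fin.revPerm id).det
      = ((Equiv.Perm.sign (Fin.revPerm : Equiv.Perm (Fin N)) : ℤ) : MvPolynomial (Fin N) R)
        * (Matrix.vandermonde v).det := by
    exact_mod_cast Matrix.det_permute Fin.revPerm (Matrix.vandermonde v)
  rw [h1, ← h2, hb]

/-- **Bialternant formula for Schur polynomials.**
For a partition `λ` (weakly decreasing, with exactly `L ≤ N` nonzero parts, padded by
zeros up to length `N`), the alternant `det_{1≤i,j≤N} (X_i^(λ_j + N - j))` equals the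
Jacobi–Trudi Schur polynomial `s_λ` (of size `N`) times the Vandermonde product
`∏_{i<j} (X_i - X_j)`.  (Indices are 0-indexed: `lam i` is `λ_{i+1}`.) -/
theorem bialternant_eq_jacobiTrudi_mul_vandermonde
    {R : Type*} [CommRing R] (N : ℕ) (hN : 1 ≤ N)
    (lam : ℕ → ℕ) (L : ℕ) (hanti : Antitone lam)
    (hlen : ∀ i, lam i ≠ 0 ↔ i < L) (hL : L ≤ N) :
    Matrix.det (Matrix.of fun i j : Fin N => (X i : MvPolynomial (Fin N) R) ^
        (lam (j : ℕ) + (N - 1 - (j : ℕ)))) =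
      jtSchur R N lam N *
        ∏ p ∈ Finset.univ.filter (fun p : Fin N × Fin N => p.1 < p.2), (X p.1 - X p.2) := by
  have h1 := congrArg Matrix.det (M_decomp (R := R) N lam)
  rw [Matrix.det_mul] at h1
  have h2 := congrArg Matrix.det (M_decomp (R := R) N (fun _ => 0))
  rw [Matrix.det_mul] at h2
  simp only [Nat.zero_add] at h2
  rw [vdm_det] at h2
  have h3 := Matrix.det_permute (Fin.revPerm : Equiv.Perm (Fin N)) (Hmat R N (fun _ => 0))
  rw [Hmat_zero_det] at h3
  have h4 := Matrix.det_permute (Fin.revPerm : Equiv.Perm (Fin N)) (Hmat R N lam)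
  rw [Hmat_rev, ← jt_eq_det] at h4
  rw [h4, h2]
  linear_combination h1 + (Emat R N).det * (Hmat R N lam).det * h3
end

section
/- Giambelli formula: for any commutative ring R, any N ∈ ℕ, and any partition λ with Frobenius coordinates (α_1,…,α_d | β_1,…,β_d), one has in MvPolynomial (Fin N) R: s_λ = det_{1≤i,j≤d} ( s_{(α_i | β_j)} ), where (α | β) denotes the hook partition (α+1, 1^β) and s_μ is the Jacobi–Trudi Schur polynomial of μ. -/
open MvPolynomial

/-- The conjugate partition: `conjP lam L j = #{i < L : lam i ≥ j+1}` (0-indexed). -/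
def conjP (lam : ℕ → ℕ) (L : ℕ) (j : ℕ) : ℕ :=
  ((Finset.range L).filter fun i => j + 1 ≤ lam i).card

/-- The hook partition `(a | b) = (a+1, 1^b)` as a 0-indexed sequence of parts;
it has length `b + 1`. -/
def hookP (a b : ℕ) : ℕ → ℕ := fun i => if i = 0 then a + 1 else if i ≤ b then 1 else 0


namespace GbAux

open Finset Equiv Equiv.Perm

section EePart
variable {S : Type*} [CommRing S]

noncomputable def Ee (H : ℤ → S) : ℕ → S
  | 0 => 1
  | b+1 => ∑ t ∈ Finset.range (b+1), (-1)^t * H ((t : ℤ)+1) * Ee H (b - t)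
decreasing_by exact Nat.lt_succ_of_le (Nat.sub_le b t)

noncomputable def EeZ (H : ℤ → S) (k : ℤ) : S := if 0 ≤ k then Ee H k.toNat else 0

lemma Ee_succ (H : ℤ → S) (b : ℕ) :
    Ee H (b+1) = ∑ t ∈ Finset.range (b+1), (-1)^t * H ((t : ℤ)+1) * Ee H (b - t) := by
  rw [Ee]

lemma R1 (H : ℤ → S) (h0 : H 0 = 1) (m : ℕ) :
    ∑ k ∈ Finset.range (m+1), (-1 : S)^k * H (k : ℤ) * Ee H (m - k)
      = if m = 0 then 1 else 0 := by
  cases m with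
  | zero => simp [Ee, h0]
  | succ b =>
    rw [Finset.sum_range_succ']
    have hterm : ∀ i ∈ Finset.range (b+1),
        (-1 : S)^(i+1) * H ((i+1 : ℕ) : ℤ) * Ee H (b+1 - (i+1))
          = -((-1)^i * H ((i : ℤ)+1) * Ee H (b - i)) := by
      intro i _
      have h1 : b + 1 - (i + 1) = b - i := by omega
      have h2 : ((i+1 : ℕ) : ℤ) = (i : ℤ) + 1 := by push_cast; ring
      rw [h1, h2, pow_succ]
      ring
    rw [Finset.sum_congr rfl hterm]
    simp only [Finset.sum_neg_distrib]
    rw [← Ee_succ H b]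
    simp [h0]

lemma hook_det (H : ℤ → S) (h0 : H 0 = 1) (hneg : ∀ k : ℤ, k < 0 → H k = 0) :
    ∀ b a : ℕ,
      Matrix.det (Matrix.of fun i j : Fin (b+1) => H ((hookP a b i : ℤ) + j - i))
        = ∑ t ∈ Finset.range (b+1), (-1 : S)^t * H ((a : ℤ) + 1 + t) * Ee H (b - t) := by
  intro b
  induction b with
  | zero =>
    intro a
    rw [show ((0:ℕ)+1) = 1 from rfl]
    rw [Matrix.det_fin_one]
    simp [hookP, Ee]
  | succ b IH =>
    intro a
    rw [Matrix.det_succ_column_zero]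
    rw [Fin.sum_univ_succ, Fin.sum_univ_succ]
    have hzero : ∀ i : Fin b,
        (-1 : S) ^ ((i.succ.succ : Fin (b+2)) : ℕ) *
          (Matrix.of fun i j : Fin (b+1+1) => H ((hookP a (b+1) i : ℤ) + j - i)) i.succ.succ 0 *
          ((Matrix.of fun i j : Fin (b+1+1) => H ((hookP a (b+1) i : ℤ) + j - i)).submatrix
            (Fin.succAbove i.succ.succ) Fin.succ).det = 0 := by
      intro i
      have h1 : hookP a (b+1) ((i.succ.succ : Fin (b+2)) : ℕ) = 1 := by
        simp only [hookP]
        have : ((i.succ.succ : Fin (b+2)) : ℕ) = (i : ℕ) + 2 := by simp [Fin.val_succ]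
        rw [this]
        have hi : (i:ℕ) + 2 ≤ b + 1 := by omega
        simp [hi]
      have h2 : H ((hookP a (b+1) ((i.succ.succ : Fin (b+2)) : ℕ) : ℤ) + ((0 : Fin (b+2)) : ℕ) - ((i.succ.succ : Fin (b+2)) : ℕ)) = 0 := by
        apply hneg
        rw [h1]
        have hv : ((i.succ.succ : Fin (b+2)) : ℕ) = (i : ℕ) + 2 := by simp [Fin.val_succ]
        rw [hv]
        simp only [Fin.val_zero, Nat.cast_zero]
        push_cast
        omega
      simp only [Matrix.of_apply]
      rw [h2]
      ring
    rw [Finset.sum_congr rfl (fun i _ => hzero i), Finset.sum_const_zero, add_zero]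
    -- minor at row 0
    have hm0 : ((Matrix.of fun i j : Fin (b+1+1) => H ((hookP a (b+1) i : ℤ) + j - i)).submatrix
          (Fin.succAbove 0) Fin.succ)
        = Matrix.of fun i j : Fin (b+1) => H ((hookP 0 b i : ℤ) + j - i) := by
      ext i j
      simp only [Matrix.submatrix_apply, Matrix.of_apply, Fin.succAbove_zero]
      congr 1
      have h1 : hookP a (b+1) ((i.succ : Fin (b+2)) : ℕ) = 1 := by
        simp only [hookP, Fin.val_succ]
        have : (i:ℕ) + 1 ≤ b + 1 := by omega
        simp [this]
      have h2 : hookP 0 b (i : ℕ) = 1 := by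
        simp only [hookP]
        by_cases h : (i:ℕ) = 0
        · simp [h]
        · have : (i:ℕ) ≤ b := by omega
          simp [h, this]
      rw [h1, h2]
      simp [Fin.val_succ]
      push_cast
      ring
    -- minor at row 1
    have hm1 : ((Matrix.of fun i j : Fin (b+1+1) => H ((hookP a (b+1) i : ℤ) + j - i)).submatrix
          (Fin.succAbove 1) Fin.succ)
        = Matrix.of fun i j : Fin (b+1) => H ((hookP (a+1) b i : ℤ) + j - i) := by
      ext i j
      simp only [Matrix.submatrix_apply, Matrix.of_apply]
      congr 1
      rcases Fin.eq_zero_or_eq_succ i with hi | ⟨i', rfl⟩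
      · subst hi
        have hsa : (Fin.succAbove 1 (0 : Fin (b+1))) = (0 : Fin (b+2)) := by
          simp [Fin.succAbove]
        rw [hsa]
        have h1 : hookP a (b+1) ((0 : Fin (b+2)) : ℕ) = a + 1 := by simp [hookP]
        have h2 : hookP (a+1) b ((0 : Fin (b+1)) : ℕ) = a + 2 := by simp [hookP]
        rw [h1, h2]
        simp [Fin.val_succ]
        push_cast
        ring
      · have hsa : (Fin.succAbove 1 (i'.succ : Fin (b+1))) = i'.succ.succ := by
          simp [Fin.succAbove, Fin.lt_def]
        rw [hsa]
        have h1 : hookP a (b+1) ((i'.succ.succ : Fin (b+2)) : ℕ) = 1 := by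
          simp only [hookP, Fin.val_succ]
          have : (i':ℕ) + 1 + 1 ≤ b + 1 := by omega
          simp [this]
        have h2 : hookP (a+1) b ((i'.succ : Fin (b+1)) : ℕ) = 1 := by
          simp only [hookP, Fin.val_succ]
          have : (i':ℕ) + 1 ≤ b := by omega
          simp [this]
        rw [h1, h2]
        simp [Fin.val_succ]
        push_cast
        ring
    rw [Fin.succ_zero_eq_one, hm0, hm1]
    have hEb : (Matrix.of fun i j : Fin (b+1) => H ((hookP 0 b i : ℤ) + j - i)).det
        = Ee H (b+1) := by
      rw [IH 0, Ee_succ]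
      apply Finset.sum_congr rfl
      intro t _
      have harg : ((0:ℕ):ℤ) + 1 + (t:ℤ) = (t:ℤ) + 1 := by push_cast; ring
      rw [harg]
    rw [hEb, IH (a+1)]
    have hA00 : (Matrix.of fun i j : Fin (b+1+1) => H ((hookP a (b+1) i : ℤ) + j - i)) 0 0
        = H ((a:ℤ)+1) := by
      simp only [Matrix.of_apply]
      have harg : ((hookP a (b+1) ((0:Fin (b+2)):ℕ) : ℤ) + ((0:Fin (b+2)):ℕ) - ((0:Fin (b+2)):ℕ)) = (a:ℤ)+1 := by
        simp [hookP]
      rw [harg]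
    have hA10 : (Matrix.of fun i j : Fin (b+1+1) => H ((hookP a (b+1) i : ℤ) + j - i)) 1 0
        = 1 := by
      simp only [Matrix.of_apply]
      have h1 : hookP a (b+1) ((1 : Fin (b+2)) : ℕ) = 1 := by simp [hookP]
      have harg : ((hookP a (b+1) ((1 : Fin (b+2)) : ℕ) : ℤ) + ((0 : Fin (b+2)):ℕ) - ((1 : Fin (b+2)):ℕ)) = 0 := by
        rw [h1]; simp
      rw [harg, h0]
    rw [hA00, hA10]
    have hre : ∀ i ∈ Finset.range (b+1),
        (-1:S)^(i+1) * H ((a:ℤ)+1+((i+1:ℕ):ℤ)) * Ee H (b+1-(i+1))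
          = -((-1:S)^i * H (((a+1:ℕ):ℤ) + 1 + (i:ℤ)) * Ee H (b-i)) := by
      intro i _
      have h1 : b+1-(i+1) = b - i := by omega
      have h2 : (a:ℤ)+1+((i+1:ℕ):ℤ) = ((a+1:ℕ):ℤ) + 1 + (i:ℤ) := by push_cast; ring
      rw [h1, h2, pow_succ]
      ring
    have hRHS : ∑ t ∈ Finset.range (b+1+1), (-1:S)^t * H ((a:ℤ)+1+(t:ℤ)) * Ee H (b+1-t)
        = H ((a:ℤ)+1) * Ee H (b+1)
          - ∑ t ∈ Finset.range (b+1), (-1:S)^t * H (((a+1:ℕ):ℤ) + 1 + (t:ℤ)) * Ee H (b-t) := by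
      rw [Finset.sum_range_succ', Finset.sum_congr rfl hre, Finset.sum_neg_distrib]
      simp
      ring
    rw [hRHS]
    simp only [Fin.val_zero, Fin.val_one, pow_zero, pow_one]
    ring

end EePart

lemma strictMono_le_apply {n : ℕ} (f : Fin n → Fin n) (hf : StrictMono f) :
    ∀ i : Fin n, (i : ℕ) ≤ (f i : ℕ) := by
  suffices h : ∀ k (i : Fin n), (i : ℕ) = k → k ≤ (f i : ℕ) by
    intro i; exact h (i : ℕ) i rfl
  intro k
  induction k with
  | zero => omega
  | succ k IHk =>
    intro i hik
    have hklt : k < n := by omega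
    have hlt : (⟨k, hklt⟩ : Fin n) < i := by rw [Fin.lt_def]; simp; omega
    have h1 := IHk ⟨k, hklt⟩ rfl
    have h2 := hf hlt
    rw [Fin.lt_def] at h2
    omega

theorem Perm.apply_inv_self {α : Type*} (f : Perm α) (x : α) : f (f⁻¹ x) = x :=
  f.apply_symm_apply x

theorem Perm.inv_apply_self {α : Type*} (f : Perm α) (x : α) : f⁻¹ (f x) = x :=
  f.symm_apply_apply x

lemma strictMono_perm_eq_one {n : ℕ} (π : Perm (Fin n)) (hf : StrictMono ⇑π) : π = 1 := by
  have hinv : StrictMono ⇑π⁻¹ := by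
    intro a b hab
    rcases lt_trichotomy (π⁻¹ a) (π⁻¹ b) with h | h | h
    · exact h
    · exact absurd (by rw [← Perm.apply_inv_self π a, ← Perm.apply_inv_self π b, h]) hab.ne
    · have hmono := hf.monotone h.le
      rw [Perm.apply_inv_self, Perm.apply_inv_self] at hmono
      exact absurd hmono (not_le.mpr hab)
  ext i
  have h1 := strictMono_le_apply _ hf i
  have h2 := strictMono_le_apply _ hinv (π i)
  rw [Perm.inv_apply_self] at h2
  simp only [Perm.coe_one, id_eq]
  omega

/-- Restriction of a permutation of `Fin (n+1)` fixing `last` to `Fin n`. -/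
def restrictLast {n : ℕ} (σ : Perm (Fin (n+1))) (h : σ (Fin.last n) = Fin.last n) :
    Perm (Fin n) where
  toFun i := (σ i.castSucc).castLT (by
    refine Fin.val_lt_last fun he => ?_
    exact absurd (σ.injective (he.trans h.symm)) (Fin.castSucc_lt_last i).ne)
  invFun i := (σ⁻¹ i.castSucc).castLT (by
    have hlast : σ⁻¹ (Fin.last n) = Fin.last n := by
      conv_lhs => rw [← h]
      rw [Perm.inv_apply_self]
    refine Fin.val_lt_last fun he => ?_
    exact absurd (σ⁻¹.injective (he.trans hlast.symm)) (Fin.castSucc_lt_last i).ne)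
  left_inv i := by
    ext
    simp [Fin.castSucc_castLT]
  right_inv i := by
    ext
    simp [Fin.castSucc_castLT]

lemma restrictLast_val {n : ℕ} (σ : Perm (Fin (n+1))) (h : σ (Fin.last n) = Fin.last n)
    (i : Fin n) : ((restrictLast σ h i : Fin n) : ℕ) = ((σ i.castSucc : Fin (n+1)) : ℕ) := rfl

lemma sign_restrictLast {n : ℕ} (σ : Perm (Fin (n+1))) (h : σ (Fin.last n) = Fin.last n) :
    Perm.sign (restrictLast σ h) = Perm.sign σ := by
  classical
  let p : Fin (n+1) → Prop := fun x => (x : ℕ) < n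
  let eqv : Fin n ≃ Subtype p := {
    toFun := fun i => ⟨i.castSucc, by simpa [p] using i.2⟩
    invFun := fun x => ⟨(x.1 : ℕ), x.2⟩
    left_inv := fun i => by ext; simp
    right_inv := fun x => by ext; simp }
  have key : σ = (restrictLast σ h).extendDomain eqv := by
    ext x
    by_cases hx : p x
    · rw [Perm.extendDomain_apply_subtype _ eqv hx]
      have h1 : (eqv.symm ⟨x, hx⟩) = Fin.castLT x hx := by
        ext; simp [eqv]
      rw [h1]
      have h2 : ((eqv (restrictLast σ h (Fin.castLT x hx)) : Subtype p) : Fin (n+1))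
          = (restrictLast σ h (Fin.castLT x hx)).castSucc := rfl
      rw [h2]
      rw [Fin.coe_castSucc, restrictLast_val, Fin.castSucc_castLT]
    · rw [Perm.extendDomain_apply_not_subtype _ eqv hx]
      have hx' : x = Fin.last n := by
        ext
        simp only [Fin.val_last]
        have h2 := x.2
        simp only [p, not_lt] at hx
        omega
      rw [hx', h]
  calc Perm.sign (restrictLast σ h)
      = Perm.sign ((restrictLast σ h).extendDomain eqv) := (Perm.sign_extendDomain _ _).symm
    _ = Perm.sign σ := by rw [← key]

lemma sign_descAsc (L : ℕ) : ∀ (d : ℕ), d ≤ L → ∀ (π : Perm (Fin L)),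
    (∀ j j' : Fin L, (j:ℕ) < (j':ℕ) → (j':ℕ) < d → ((π j' : Fin L):ℕ) < ((π j : Fin L):ℕ)) →
    (∀ i i' : Fin L, d ≤ (i:ℕ) → (i:ℕ) < (i':ℕ) → ((π i : Fin L):ℕ) < ((π i' : Fin L):ℕ)) →
    Perm.sign π = (-1) ^ (∑ j : Fin L, if (j:ℕ) < d then ((π j : Fin L):ℕ) else 0) := by
  induction L with
  | zero =>
    intro d _ π _ _
    have hπ : π = 1 := by ext i; exact i.elim0
    subst hπ; simp
  | succ L' IH =>
    intro d hdL π hdec hinc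
    by_cases hd0 : d = 0
    · subst hd0
      have hmono : StrictMono ⇑π := fun a b hab => by
        rw [Fin.lt_def]; exact hinc a b (Nat.zero_le _) (Fin.lt_def.mp hab)
      rw [strictMono_perm_eq_one π hmono]
      simp
    · have hp : π⁻¹ (Fin.last L') = 0 ∨ π⁻¹ (Fin.last L') = Fin.last L' := by
        set q := π⁻¹ (Fin.last L') with hq
        have hqv : π q = Fin.last L' := Perm.apply_inv_self π _
        by_contra hcon
        push_neg at hcon
        obtain ⟨h1, h2⟩ := hcon
        by_cases hqd : (q:ℕ) < d
        · have hq0 : (q:ℕ) ≠ 0 := fun hh => h1 (Fin.ext (by simp [hh]))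
          have hcmp := hdec ⟨(q:ℕ)-1, by omega⟩ q (by show (q:ℕ)-1 < (q:ℕ); omega) hqd
          rw [hqv] at hcmp
          have hle := Fin.is_le (π ⟨(q:ℕ)-1, by omega⟩)
          simp only [Fin.val_last] at hcmp
          omega
        · have hqlast : (q:ℕ) ≠ L' := fun hh => h2 (Fin.ext (by simp [hh]))
          have hql : (q:ℕ) < L' := by have := Fin.is_le q; omega
          have hcmp := hinc q ⟨(q:ℕ)+1, by omega⟩ (by omega) (by simp)
          rw [hqv] at hcmp
          have hle := Fin.is_le (π ⟨(q:ℕ)+1, by omega⟩)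
          simp only [Fin.val_last] at hcmp
          omega
      rcases hp with hp0 | hplast
      · -- π 0 = last : use rotation
        have hπ0 : π 0 = Fin.last L' := by rw [← hp0, Perm.apply_inv_self]
        set ρ : Perm (Fin (L'+1)) := π * (finRotate (L'+1)) with hρ
        have hρlast : ρ (Fin.last L') = Fin.last L' := by
          rw [hρ]
          simp only [Perm.mul_apply, finRotate_succ_apply]
          rw [Fin.last_add_one]
          exact hπ0
        set τ := restrictLast ρ hρlast with hτ
        have hτv : ∀ i : Fin L', ((τ i : Fin L'):ℕ) = ((π i.succ : Fin (L'+1)):ℕ) := by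
          intro i
          rw [hτ, restrictLast_val]
          rw [hρ]
          simp only [Perm.mul_apply, finRotate_succ_apply]
          rw [Fin.coeSucc_eq_succ]
        have hdec' : ∀ j j' : Fin L', (j:ℕ) < (j':ℕ) → (j':ℕ) < d-1 →
            ((τ j' : Fin L'):ℕ) < ((τ j : Fin L'):ℕ) := by
          intro j j' hjj hj'
          rw [hτv, hτv]
          exact hdec j.succ j'.succ (by simp only [Fin.val_succ]; omega)
            (by simp only [Fin.val_succ]; omega)
        have hinc' : ∀ i i' : Fin L', d-1 ≤ (i:ℕ) → (i:ℕ) < (i':ℕ) →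
            ((τ i : Fin L'):ℕ) < ((τ i' : Fin L'):ℕ) := by
          intro i i' hi hii
          rw [hτv, hτv]
          exact hinc i.succ i'.succ (by simp only [Fin.val_succ]; omega)
            (by simp only [Fin.val_succ]; omega)
        have hsτ := IH (d-1) (by omega) τ hdec' hinc'
        have hsign : Perm.sign π = (-1:ℤˣ)^L' * Perm.sign τ := by
          have hfact : π = ρ * (finRotate (L'+1))⁻¹ := by rw [hρ]; group
          rw [hτ, sign_restrictLast ρ hρlast]
          rw [hfact, map_mul, map_inv, sign_finRotate, Nat.add_sub_cancel]
          have hu : ((-1:ℤˣ)^L')⁻¹ = (-1:ℤˣ)^L' := by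
            rw [← inv_pow]
            congr 1
          rw [hu]
          exact mul_comm _ _
        have hsum : (∑ j : Fin (L'+1), if (j:ℕ) < d then ((π j : Fin (L'+1)):ℕ) else 0)
            = L' + ∑ i : Fin L', (if (i:ℕ) < d-1 then ((τ i : Fin L'):ℕ) else 0) := by
          rw [Fin.sum_univ_succ]
          congr 1
          · simp only [Fin.val_zero]
            simp only [Nat.pos_of_ne_zero hd0, ↓reduceIte]; rw [hπ0, Fin.val_last]
          · apply Finset.sum_congr rfl
            intro i _
            by_cases h : (i:ℕ) < d-1
            · rw [if_pos (by simp only [Fin.val_succ]; omega), if_pos h, hτv]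
            · rw [if_neg (by simp only [Fin.val_succ]; omega), if_neg h]
        rw [hsign, hsτ, hsum, pow_add]
      · -- π last = last
        have hπl : π (Fin.last L') = Fin.last L' := by
          conv_lhs => rw [← hplast]
          exact Perm.apply_inv_self π _
        by_cases hL0 : L' = 0
        · subst hL0
          have hπ1 : π = 1 := by
            ext i
            have h1 := Fin.is_le (π i)
            have h2 := Fin.is_le i
            omega
          subst hπ1
          simp
        · have hdle : d ≤ L' := by
            by_contra hcon
            have hd' : d = L'+1 := by omega
            have hcmp := hdec 0 (Fin.last L') (by simp [Fin.val_last]; omega)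
              (by simp [Fin.val_last]; omega)
            rw [hπl] at hcmp
            have hle := Fin.is_le (π 0)
            simp only [Fin.val_last] at hcmp
            omega
          set τ := restrictLast π hπl with hτ
          have hτv : ∀ i : Fin L', ((τ i : Fin L'):ℕ) = ((π i.castSucc : Fin (L'+1)):ℕ) :=
            fun i => by rw [hτ, restrictLast_val]
          have hdec' : ∀ j j' : Fin L', (j:ℕ) < (j':ℕ) → (j':ℕ) < d →
              ((τ j' : Fin L'):ℕ) < ((τ j : Fin L'):ℕ) := by
            intro j j' hjj hj'
            rw [hτv, hτv]
            exact hdec j.castSucc j'.castSucc (by simp only [Fin.coe_castSucc]; omega)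
              (by simp only [Fin.coe_castSucc]; omega)
          have hinc' : ∀ i i' : Fin L', d ≤ (i:ℕ) → (i:ℕ) < (i':ℕ) →
              ((τ i : Fin L'):ℕ) < ((τ i' : Fin L'):ℕ) := by
            intro i i' hi hii
            rw [hτv, hτv]
            exact hinc i.castSucc i'.castSucc (by simp only [Fin.coe_castSucc]; omega)
              (by simp only [Fin.coe_castSucc]; omega)
          have hsτ := IH d hdle τ hdec' hinc'
          have hsign : Perm.sign π = Perm.sign τ := (sign_restrictLast π hπl).symm
          have hsum : (∑ j : Fin (L'+1), if (j:ℕ) < d then ((π j : Fin (L'+1)):ℕ) else 0)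
              = ∑ i : Fin L', (if (i:ℕ) < d then ((τ i : Fin L'):ℕ) else 0) := by
            rw [Fin.sum_univ_castSucc]
            have hlz : (if ((Fin.last L' : Fin (L'+1)):ℕ) < d
                then ((π (Fin.last L') : Fin (L'+1)):ℕ) else 0) = 0 := by
              rw [if_neg (by simp only [Fin.val_last]; omega)]
            rw [hlz, add_zero]
            apply Finset.sum_congr rfl
            intro i _
            by_cases h : (i:ℕ) < d
            · rw [if_pos (by simp only [Fin.coe_castSucc]; omega), if_pos h, hτv]
            · rw [if_neg (by simp only [Fin.coe_castSucc]; omega), if_neg h]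
          rw [hsign, hsτ, hsum]


section GswPart
variable {d L : ℕ}

/-- partial product of transpositions (inl j, inr j) for j < k -/
def gsw (d L : ℕ) (hdL : d ≤ L) : ℕ → Perm (Fin d ⊕ Fin L)
  | 0 => 1
  | k+1 =>
    if h : k < d then
      gsw d L hdL k * Equiv.swap (Sum.inl ⟨k, h⟩) (Sum.inr ⟨k, lt_of_lt_of_le h hdL⟩)
    else gsw d L hdL k

lemma gsw_apply (hdL : d ≤ L) : ∀ k (hk : k ≤ d),
    (∀ j : Fin d, gsw d L hdL k (Sum.inl j) =
      if (j:ℕ) < k then Sum.inr ⟨(j:ℕ), lt_of_lt_of_le j.2 hdL⟩ else Sum.inl j) ∧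
    (∀ i : Fin L, gsw d L hdL k (Sum.inr i) =
      if h : (i:ℕ) < k then Sum.inl ⟨(i:ℕ), by omega⟩ else Sum.inr i) := by
  intro k
  induction k with
  | zero => intro _; constructor <;> intro x <;> simp [gsw]
  | succ k IHk =>
    intro hk
    have hkd : k < d := by omega
    obtain ⟨IH1, IH2⟩ := IHk (by omega)
    constructor
    · intro j
      rw [gsw, dif_pos hkd, Perm.mul_apply]
      by_cases hjk : (j:ℕ) = k
      · have hj : j = ⟨k, hkd⟩ := Fin.ext hjk
        rw [hj, Equiv.swap_apply_left, IH2, dif_neg (by simp)]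
        rw [if_pos (by simp)]
        try simp
      · rw [Equiv.swap_apply_of_ne_of_ne (by simp [Fin.ext_iff, hjk]) (by simp), IH1]
        by_cases h2 : (j:ℕ) < k
        · rw [if_pos h2, if_pos (by omega)]
        · rw [if_neg h2, if_neg (by omega)]
    · intro i
      rw [gsw, dif_pos hkd, Perm.mul_apply]
      by_cases hik : (i:ℕ) = k
      · have hi : i = ⟨k, lt_of_lt_of_le hkd hdL⟩ := Fin.ext hik
        rw [hi, Equiv.swap_apply_right, IH1, if_neg (by simp)]
        rw [dif_pos (by simp)]
        try simp
      · rw [Equiv.swap_apply_of_ne_of_ne (by simp) (by simp [Fin.ext_iff, hik]), IH2]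
        by_cases h2 : (i:ℕ) < k
        · rw [dif_pos h2, dif_pos (by omega)]
        · rw [dif_neg h2, dif_neg (by omega)]

lemma gsw_sign (hdL : d ≤ L) : ∀ k, k ≤ d → Perm.sign (gsw d L hdL k) = (-1)^k := by
  intro k
  induction k with
  | zero => intro _; simp [gsw]
  | succ k IHk =>
    intro hk
    have hkd : k < d := by omega
    rw [gsw, dif_pos hkd, map_mul, IHk (by omega), Equiv.Perm.sign_swap (by simp), pow_succ]

end GswPart

variable {S : Type*} [CommRing S]

lemma initseg (L : ℕ) (p : ℕ → Prop) [DecidablePred p]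
    (hdown : ∀ i i', i' ≤ i → p i → p i') (hlt : ∀ i, p i → i < L) (i : ℕ) :
    p i ↔ i < ((Finset.range L).filter p).card := by
  constructor
  · intro hpi
    have hsub : Finset.range (i+1) ⊆ (Finset.range L).filter p := by
      intro x hx
      rw [Finset.mem_range] at hx
      have hpx : p x := hdown i x (by omega) hpi
      rw [Finset.mem_filter, Finset.mem_range]
      exact ⟨hlt x hpx, hpx⟩
    have := Finset.card_le_card hsub
    rw [Finset.card_range] at this
    omega
  · intro hi
    have hns : ¬ ((Finset.range L).filter p ⊆ Finset.range i) := by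
      intro hsub
      have := Finset.card_le_card hsub
      rw [Finset.card_range] at this
      omega
    obtain ⟨x, hx1, hx2⟩ := Finset.not_subset.mp hns
    rw [Finset.mem_filter] at hx1
    rw [Finset.mem_range, not_lt] at hx2
    exact hdown x i hx2 hx1.2

theorem abstract_giambelli (H : ℤ → S) (h0 : H 0 = 1)
    (hneg : ∀ k : ℤ, k < 0 → H k = 0)
    (lam : ℕ → ℕ) (L : ℕ) (hanti : Antitone lam) (hlen : ∀ i, lam i ≠ 0 ↔ i < L)
    (d : ℕ) (hd : d = ((Finset.range L).filter fun i => i + 1 ≤ lam i).card) :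
    Matrix.det (Matrix.of fun i j : Fin L => H ((lam i : ℤ) + j - i)) =
      Matrix.det (Matrix.of fun i j : Fin d =>
        Matrix.det (Matrix.of fun i' j' : Fin (conjP lam L (j:ℕ) - ((j:ℕ) + 1) + 1) =>
          H ((hookP (lam (i:ℕ) - ((i:ℕ) + 1)) (conjP lam L (j:ℕ) - ((j:ℕ) + 1)) i' : ℤ)
            + j' - i'))) := by
  classical
  have hF1 : ∀ i, (i + 1 ≤ lam i ↔ i < d) := by
    intro i
    rw [hd]
    exact initseg L (fun i => i + 1 ≤ lam i)
      (fun a c hca hpa => by have := hanti hca; omega)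
      (fun a hpa => (hlen a).mp (by omega)) i
  have hFc : ∀ j i, (j + 1 ≤ lam i ↔ i < conjP lam L j) := by
    intro j i
    unfold conjP
    exact initseg L (fun i => j + 1 ≤ lam i)
      (fun a c hca hpa => by have := hanti hca; omega)
      (fun a hpa => (hlen a).mp (by omega)) i
  have hdL : d ≤ L := by
    rw [hd]
    calc ((Finset.range L).filter fun i => i + 1 ≤ lam i).card
        ≤ (Finset.range L).card := Finset.card_filter_le _ _
      _ = L := Finset.card_range L
  have hcle : ∀ j, conjP lam L j ≤ L := by
    intro j
    unfold conjP
    calc ((Finset.range L).filter fun i => j + 1 ≤ lam i).card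
        ≤ (Finset.range L).card := Finset.card_filter_le _ _
      _ = L := Finset.card_range L
  have hcd : ∀ j, j < d → d ≤ conjP lam L j := by
    intro j hj
    have hd1 : d - 1 < d := by omega
    have hlam : (d-1) + 1 ≤ lam (d-1) := (hF1 (d-1)).mpr hd1
    have hjlam : j + 1 ≤ lam (d-1) := by omega
    have := (hFc j (d-1)).mp hjlam
    omega
  set b : ℕ → ℕ := fun j => conjP lam L j - (j + 1) with hb
  have hbj : ∀ jn : ℕ, conjP lam L jn - (jn + 1) = b jn := fun _ => rfl
  have hblt : ∀ j, j < d → b j + 1 ≤ L := by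
    intro j hj
    have h1 := hcd j hj
    have h2 := hcle j
    simp only [hb]
    omega
  have hbanti : ∀ j j', j < j' → j' < d → b j' < b j := by
    intro j j' h1 h2
    have hc1 : conjP lam L j' ≤ conjP lam L j := by
      apply Finset.card_le_card
      intro x hx
      rw [Finset.mem_filter] at hx ⊢
      exact ⟨hx.1, by omega⟩
    have := hcd j' h2
    simp only [hb]
    omega
  have hdisj : ∀ j, j < d → ∀ i, d ≤ i → i < L → b j ≠ i - lam i := by
    intro j hj i hdi hiL heq
    have hlami : lam i ≤ i := by
      by_contra hcon
      have := (hF1 i).mp (by omega)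
      omega
    have hcj := hcd j hj
    by_cases hcase : j + 1 ≤ lam i
    · have := (hFc j i).mp hcase
      simp only [hb] at heq
      omega
    · have hge : ¬ (i < conjP lam L j) := fun hcc => hcase ((hFc j i).mpr hcc)
      simp only [hb] at heq
      omega
  have hlamle : ∀ i : Fin L, ¬((i:ℕ) < d) → lam (i:ℕ) ≤ (i:ℕ) := by
    intro i hi
    by_contra hcon
    have := (hF1 (i:ℕ)).mp (by omega)
    omega
  -- the permutation pfun / π
  set pfun : Fin L → Fin L := fun i =>
    if h : (i:ℕ) < d then ⟨b (i:ℕ), by have := hblt _ h; omega⟩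
    else ⟨(i:ℕ) - lam (i:ℕ), by have := i.2; omega⟩ with hpfun
  have hpinj : Function.Injective pfun := by
    intro x y hxy
    by_cases hx : (x:ℕ) < d <;> by_cases hy : (y:ℕ) < d
    · simp only [hpfun, dif_pos hx, dif_pos hy, Fin.mk.injEq] at hxy
      rcases lt_trichotomy (x:ℕ) (y:ℕ) with h | h | h
      · exact absurd hxy (hbanti _ _ h hy).ne'
      · exact Fin.ext h
      · exact absurd hxy (hbanti _ _ h hx).ne
    · simp only [hpfun, dif_pos hx, dif_neg hy, Fin.mk.injEq] at hxy
      exact absurd hxy (hdisj _ hx _ (by omega) y.2)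
    · simp only [hpfun, dif_neg hx, dif_pos hy, Fin.mk.injEq] at hxy
      exact absurd hxy.symm (hdisj _ hy _ (by omega) x.2)
    · simp only [hpfun, dif_neg hx, dif_neg hy, Fin.mk.injEq] at hxy
      have h1 := hlamle x hx
      have h2 := hlamle y hy
      rcases lt_trichotomy (x:ℕ) (y:ℕ) with h | h | h
      · have := hanti (le_of_lt h)
        omega
      · exact Fin.ext h
      · have := hanti (le_of_lt h)
        omega
  have hpbij : Function.Bijective pfun := Finite.injective_iff_bijective.mp hpinj
  set π : Perm (Fin L) := Equiv.ofBijective pfun hpbij with hπ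
  have hπval : ∀ i : Fin L, π i = pfun i := fun i => rfl
  -- matrices
  set A : Matrix (Fin L) (Fin L) S :=
    Matrix.of (fun i j : Fin L => H ((lam i : ℤ) + j - i)) with hA
  set P : Matrix (Fin d) (Fin L) S :=
    Matrix.of (fun (i : Fin d) (t : Fin L) => H ((lam (i:ℕ) : ℤ) + t - (i:ℕ))) with hP
  set Q : Matrix (Fin L) (Fin d) S :=
    Matrix.of (fun (t : Fin L) (j : Fin d) =>
      (-1:S)^(t:ℕ) * EeZ H ((b (j:ℕ) : ℤ) - (t:ℕ))) with hQ
  set H0 : Matrix (Fin L) (Fin L) S :=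
    Matrix.of (fun s t : Fin L => H ((t:ℤ) - (s:ℕ))) with hH0
  have hH0tri : H0.BlockTriangular id := by
    intro i j hji
    show H ((j:ℤ) - (i:ℕ)) = 0
    apply hneg
    have hlt : (j:ℕ) < (i:ℕ) := hji
    omega
  have hdetH0 : H0.det = 1 := by
    rw [Matrix.det_of_upperTriangular hH0tri]
    apply Finset.prod_eq_one
    intro i _
    show H ((i:ℤ) - (i:ℕ)) = 1
    simp [h0]
  have hHQ : ∀ (s : Fin L) (j : Fin d),
      (H0 * Q) s j = if (s:ℕ) = b (j:ℕ) then (-1:S)^(s:ℕ) else 0 := by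
    intro s j
    rw [Matrix.mul_apply]
    have hconv : (∑ t : Fin L, H0 s t * Q t j) = ∑ x ∈ Finset.range L,
        H ((x:ℤ) - (s:ℕ)) * ((-1:S)^x * EeZ H ((b (j:ℕ) : ℤ) - (x:ℕ))) := by
      rw [← Fin.sum_univ_eq_sum_range]
      exact Finset.sum_congr rfl (fun t _ => rfl)
    rw [hconv]
    by_cases hs : (s:ℕ) ≤ b (j:ℕ)
    · have hsub : Finset.Ico (s:ℕ) (b (j:ℕ) + 1) ⊆ Finset.range L := by
        intro x hx
        rw [Finset.mem_Ico] at hx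
        rw [Finset.mem_range]
        have := hblt _ j.2
        omega
      have hvan : ∀ x ∈ Finset.range L, x ∉ Finset.Ico (s:ℕ) (b (j:ℕ) + 1) →
          H ((x:ℤ) - ((s:ℕ):ℤ)) * ((-1:S)^x * EeZ H ((b (j:ℕ) : ℤ) - (x:ℕ))) = 0 := by
        intro x hx hxn
        rw [Finset.mem_range] at hx
        rw [Finset.mem_Ico] at hxn
        push_neg at hxn
        by_cases hxs : x < (s:ℕ)
        · rw [hneg ((x:ℤ) - ((s:ℕ):ℤ)) (by omega)]
          ring
        · have hxb : b (j:ℕ) + 1 ≤ x := hxn (by omega)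
          rw [show EeZ H ((b (j:ℕ):ℤ) - (x:ℕ)) = 0 from by
            unfold EeZ; rw [if_neg (by omega)]]
          ring
      rw [← Finset.sum_subset hsub hvan]
      rw [Finset.sum_Ico_eq_sum_range]
      have hm : b (j:ℕ) + 1 - (s:ℕ) = (b (j:ℕ) - (s:ℕ)) + 1 := by omega
      rw [hm]
      have hterm : ∀ k ∈ Finset.range ((b (j:ℕ) - (s:ℕ)) + 1),
          H (((((s:ℕ) + k : ℕ)):ℤ) - ((s:ℕ):ℤ)) * ((-1:S)^((s:ℕ)+k) * EeZ H ((b (j:ℕ):ℤ) - (((s:ℕ)+k : ℕ):ℤ)))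
          = (-1:S)^(s:ℕ) * ((-1:S)^k * H (k:ℤ) * Ee H ((b (j:ℕ) - (s:ℕ)) - k)) := by
        intro k hk
        rw [Finset.mem_range] at hk
        have h1 : ((((s:ℕ) + k : ℕ)):ℤ) - ((s:ℕ):ℤ) = (k:ℤ) := by push_cast; ring
        have h2 : EeZ H ((b (j:ℕ):ℤ) - (((s:ℕ)+k : ℕ):ℤ)) = Ee H ((b (j:ℕ) - (s:ℕ)) - k) := by
          unfold EeZ
          rw [if_pos (by omega)]
          congr 1
          omega
        rw [h1, h2, pow_add]
        ring
      rw [Finset.sum_congr rfl hterm, ← Finset.mul_sum, R1 H h0]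
      by_cases hsb : (s:ℕ) = b (j:ℕ)
      · rw [if_pos hsb, if_pos (by omega), mul_one]
      · rw [if_neg hsb, if_neg (by omega), mul_zero]
    · rw [if_neg (by omega)]
      apply Finset.sum_eq_zero
      intro x hx
      by_cases hxs : x < (s:ℕ)
      · rw [hneg ((x:ℤ) - ((s:ℕ):ℤ)) (by omega)]
        ring
      · rw [show EeZ H ((b (j:ℕ):ℤ) - (x:ℕ)) = 0 from by
          unfold EeZ; rw [if_neg (by omega)]]
        ring
  -- block matrices
  set M1 : Matrix (Fin d ⊕ Fin L) (Fin d ⊕ Fin L) S := Matrix.fromBlocks 0 P Q 1 with hM1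
  set M2 : Matrix (Fin d ⊕ Fin L) (Fin d ⊕ Fin L) S :=
    Matrix.fromBlocks 0 P (H0 * Q) H0 with hM2
  have hM2eq : Matrix.fromBlocks (1 : Matrix (Fin d) (Fin d) S) 0 0 H0 * M1 = M2 := by
    rw [hM1, hM2, Matrix.fromBlocks_multiply]
    simp
  have hdetM2 : M2.det = M1.det := by
    rw [← hM2eq, Matrix.det_mul, Matrix.det_fromBlocks_zero₂₁, Matrix.det_one, hdetH0]
    ring
  have hdetM1 : M1.det = (-1:S)^d * (P * Q).det := by
    rw [hM1, Matrix.det_fromBlocks_one₂₂, zero_sub, Matrix.det_neg, Fintype.card_fin]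
  -- the permutation f
  set f : Perm (Fin d ⊕ Fin L) := (Equiv.Perm.sumCongr 1 π) * (gsw d L hdL d) with hf
  have hfl : ∀ j : Fin d, f (Sum.inl j)
      = Sum.inr (π ⟨(j:ℕ), lt_of_lt_of_le j.2 hdL⟩) := by
    intro j
    rw [hf, Perm.mul_apply, (gsw_apply hdL d le_rfl).1 j, if_pos j.2]
    simp
  have hfr : ∀ i : Fin L, f (Sum.inr i)
      = if h : (i:ℕ) < d then Sum.inl ⟨(i:ℕ), h⟩ else Sum.inr (π i) := by
    intro i
    rw [hf, Perm.mul_apply, (gsw_apply hdL d le_rfl).2 i]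
    by_cases h : (i:ℕ) < d
    · rw [dif_pos h, dif_pos h]
      simp
    · rw [dif_neg h, dif_neg h]
      simp
  -- sign of f
  have hπdec : ∀ j j' : Fin L, (j:ℕ) < (j':ℕ) → (j':ℕ) < d →
      ((π j' : Fin L):ℕ) < ((π j : Fin L):ℕ) := by
    intro j j' h1 h2
    rw [hπval, hπval]
    simp only [hpfun]
    rw [dif_pos h2, dif_pos (by omega)]
    exact hbanti _ _ h1 h2
  have hπinc : ∀ i i' : Fin L, d ≤ (i:ℕ) → (i:ℕ) < (i':ℕ) →
      ((π i : Fin L):ℕ) < ((π i' : Fin L):ℕ) := by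
    intro i i' h1 h2
    rw [hπval, hπval]
    simp only [hpfun]
    rw [dif_neg (by omega), dif_neg (by omega)]
    have ha := hanti (le_of_lt h2)
    have hl1 := hlamle i (by omega)
    simp only []
    omega
  have hsignπ := sign_descAsc L d hdL π hπdec hπinc
  set s0 : ℕ := ∑ j ∈ Finset.range d, b j with hs0
  have hsum_eq : (∑ j : Fin L, if (j:ℕ) < d then ((π j : Fin L):ℕ) else 0) = s0 := by
    have hconv2 : (∑ j : Fin L, if (j:ℕ) < d then ((π j : Fin L):ℕ) else 0)
        = ∑ x ∈ Finset.range L, (if x < d then b x else 0) := by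
      rw [← Fin.sum_univ_eq_sum_range]
      apply Finset.sum_congr rfl
      intro j _
      show (if (j:ℕ) < d then ((π j : Fin L):ℕ) else 0) = (if (j:ℕ) < d then b (j:ℕ) else 0)
      by_cases h : (j:ℕ) < d
      · rw [if_pos h, if_pos h]
        rw [hπval]
        simp only [hpfun]
        rw [dif_pos h]
      · rw [if_neg h, if_neg h]
    rw [hconv2]
    rw [← Finset.sum_subset (Finset.range_subset_range.mpr hdL) (fun x _ hxn => by
      rw [Finset.mem_range] at hxn
      rw [if_neg (by omega)])]
    rw [hs0]
    apply Finset.sum_congr rfl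
    intro x hx
    rw [Finset.mem_range] at hx
    rw [if_pos hx]
  have hsignf : Perm.sign f = (-1:ℤˣ)^(d + s0) := by
    rw [hf, map_mul, gsw_sign hdL d le_rfl, Equiv.Perm.sign_sumCongr, map_one, one_mul,
      hsignπ, hsum_eq, pow_add]
    exact mul_comm _ _
  -- M3 and its block form
  set M3 : Matrix (Fin d ⊕ Fin L) (Fin d ⊕ Fin L) S := M2.submatrix f id with hM3
  have hdetM3 := Matrix.det_permute f M2
  set Dg : Matrix (Fin d) (Fin d) S :=
    Matrix.of (fun j j' : Fin d =>
      if b (j:ℕ) = b ((j':ℕ)) then (-1:S)^(b (j:ℕ)) else 0) with hDg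
  set Cg : Matrix (Fin d) (Fin L) S :=
    Matrix.of (fun (j : Fin d) (t : Fin L) => H ((t:ℤ) - (b (j:ℕ) : ℕ))) with hCg
  have hπj : ∀ j : Fin d, π ⟨(j:ℕ), lt_of_lt_of_le j.2 hdL⟩
      = ⟨b (j:ℕ), by have := hblt _ j.2; omega⟩ := by
    intro j
    rw [hπval]
    simp only [hpfun]
    rw [dif_pos (by simpa using j.2)]
  have hM3blocks : M3 = Matrix.fromBlocks Dg Cg (0 : Matrix (Fin L) (Fin d) S) A := by
    ext u v
    cases u with
    | inl j =>
      cases v with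
      | inl j' =>
        show M2 (f (Sum.inl j)) (Sum.inl j') = Dg j j'
        rw [hfl j, hπj j]
        show (H0 * Q) _ j' = Dg j j'
        rw [hHQ]
        rfl
      | inr t =>
        show M2 (f (Sum.inl j)) (Sum.inr t) = Cg j t
        rw [hfl j, hπj j]
        rfl
    | inr i =>
      by_cases h : (i:ℕ) < d
      · have hfi : f (Sum.inr i) = Sum.inl ⟨(i:ℕ), h⟩ := by rw [hfr, dif_pos h]
        cases v with
        | inl j' =>
          show M2 (f (Sum.inr i)) (Sum.inl j') = 0
          rw [hfi]
          rfl
        | inr t =>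
          show M2 (f (Sum.inr i)) (Sum.inr t) = A i t
          rw [hfi]
          rfl
      · have hfi : f (Sum.inr i) = Sum.inr (π i) := by rw [hfr, dif_neg h]
        have hπi : π i = ⟨(i:ℕ) - lam (i:ℕ), by have := i.2; omega⟩ := by
          rw [hπval]
          simp only [hpfun]
          rw [dif_neg h]
        cases v with
        | inl j' =>
          show M2 (f (Sum.inr i)) (Sum.inl j') = 0
          rw [hfi, hπi]
          show (H0 * Q) _ j' = 0
          rw [hHQ, if_neg ?_]
          exact fun heq => (hdisj _ j'.2 _ (by omega) i.2) heq.symm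
        | inr t =>
          show M2 (f (Sum.inr i)) (Sum.inr t) = A i t
          rw [hfi, hπi]
          show H ((t:ℤ) - (((i:ℕ) - lam (i:ℕ) : ℕ) : ℕ)) = H ((lam (i:ℕ) : ℤ) + t - (i:ℕ))
          congr 1
          have hlami := hlamle i h
          rw [Nat.cast_sub hlami]
          ring
  have hdetM3' : M3.det = Dg.det * A.det := by
    rw [hM3blocks, Matrix.det_fromBlocks_zero₂₁]
  have hdetDg : Dg.det = (-1:S)^s0 := by
    have hdiag : Dg = Matrix.diagonal (fun j : Fin d => (-1:S)^(b (j:ℕ))) := by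
      ext j j'
      by_cases h : j = j'
      · subst h
        rw [Matrix.diagonal_apply_eq]
        show (if b (j:ℕ) = b (j:ℕ) then (-1:S)^(b (j:ℕ)) else 0) = _
        rw [if_pos rfl]
      · have hbne : b (j:ℕ) ≠ b ((j':ℕ)) := by
          rcases lt_trichotomy (j:ℕ) ((j':ℕ)) with hlt | heq | hgt
          · exact (hbanti _ _ hlt j'.2).ne'
          · exact absurd (Fin.ext heq) h
          · exact (hbanti _ _ hgt j.2).ne
        rw [Matrix.diagonal_apply_ne _ h]
        show (if b (j:ℕ) = b ((j':ℕ)) then (-1:S)^(b (j:ℕ)) else 0) = 0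
        rw [if_neg hbne]
    rw [hdiag, Matrix.det_diagonal, Finset.prod_pow_eq_pow_sum, hs0,
      Fin.sum_univ_eq_sum_range]
  -- Giambelli entries
  have hGmat : (Matrix.of fun i j : Fin d =>
      Matrix.det (Matrix.of fun i' j' : Fin (conjP lam L (j:ℕ) - ((j:ℕ) + 1) + 1) =>
        H ((hookP (lam (i:ℕ) - ((i:ℕ) + 1)) (conjP lam L (j:ℕ) - ((j:ℕ) + 1)) i' : ℤ)
          + j' - i'))) = P * Q := by
    ext i j
    show Matrix.det _ = (P * Q) i j
    rw [hook_det H h0 hneg (conjP lam L (j:ℕ) - ((j:ℕ)+1)) (lam (i:ℕ) - ((i:ℕ)+1))]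
    rw [Matrix.mul_apply]
    have hconv3 : (∑ t : Fin L, P i t * Q t j) = ∑ x ∈ Finset.range L,
        H ((lam (i:ℕ) : ℤ) + x - (i:ℕ)) * ((-1:S)^x * EeZ H ((b (j:ℕ) : ℤ) - (x:ℕ))) := by
      rw [← Fin.sum_univ_eq_sum_range]
      exact Finset.sum_congr rfl (fun t _ => rfl)
    rw [hconv3]
    have hsub3 : Finset.range (conjP lam L (j:ℕ) - ((j:ℕ)+1) + 1) ⊆ Finset.range L := by
      rw [Finset.range_subset_range]
      exact hblt _ j.2
    have hvan3 : ∀ x ∈ Finset.range L, x ∉ Finset.range (conjP lam L (j:ℕ) - ((j:ℕ)+1) + 1) →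
        H ((lam (i:ℕ) : ℤ) + x - (i:ℕ)) * ((-1:S)^x * EeZ H ((b (j:ℕ) : ℤ) - (x:ℕ))) = 0 := by
      intro x _ hxn
      rw [Finset.mem_range] at hxn
      rw [show EeZ H ((b (j:ℕ):ℤ) - (x:ℕ)) = 0 from by
        unfold EeZ
        rw [if_neg (by simp only [hb]; omega)]]
      ring
    rw [← Finset.sum_subset hsub3 hvan3]
    apply Finset.sum_congr rfl
    intro x hx
    rw [Finset.mem_range] at hx
    have hlam_i : (i:ℕ) + 1 ≤ lam (i:ℕ) := (hF1 (i:ℕ)).mpr i.2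
    have harg : ((lam (i:ℕ) - ((i:ℕ)+1) : ℕ) : ℤ) + 1 + (x:ℤ)
        = (lam (i:ℕ) : ℤ) + (x:ℤ) - ((i:ℕ):ℤ) := by
      rw [Nat.cast_sub hlam_i]
      push_cast
      ring
    rw [harg]
    have hEe3 : EeZ H ((b (j:ℕ):ℤ) - (x:ℕ)) = Ee H (conjP lam L (j:ℕ) - ((j:ℕ)+1) - x) := by
      unfold EeZ
      rw [if_pos (by simp only [hb]; omega)]
      congr 1
      simp only [hb]
      omega
    rw [hEe3]
    ring
  -- final chain
  have hcast : ((Perm.sign f : ℤ) : S) = (-1:S)^(d+s0) := by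
    rw [hsignf]
    push_cast
    ring
  have hchain : (-1:S)^s0 * A.det = (-1:S)^(d+s0) * ((-1:S)^d * (P*Q).det) := by
    calc (-1:S)^s0 * A.det = Dg.det * A.det := by rw [hdetDg]
      _ = M3.det := hdetM3'.symm
      _ = ((Perm.sign f : ℤ):S) * M2.det := hdetM3
      _ = (-1:S)^(d+s0) * M2.det := by rw [hcast]
      _ = (-1:S)^(d+s0) * ((-1:S)^d * (P*Q).det) := by rw [hdetM2, hdetM1]
  have hone : ∀ n : ℕ, (-1:S)^n * (-1:S)^n = 1 := fun n => by
    rw [← pow_add]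
    exact Even.neg_one_pow ⟨n, by ring⟩
  rw [hGmat]
  calc A.det = (-1:S)^s0 * ((-1:S)^s0 * A.det) := by rw [← mul_assoc, hone, one_mul]
    _ = (-1:S)^s0 * ((-1:S)^(d+s0) * ((-1:S)^d * (P*Q).det)) := by rw [hchain]
    _ = ((-1:S)^s0 * (-1:S)^s0) * (((-1:S)^d * (-1:S)^d) * (P*Q).det) := by
        rw [pow_add]
        ring
    _ = (P*Q).det := by rw [hone, hone, one_mul, one_mul]


end GbAux

/-- **Giambelli formula.**
For a partition `λ` with Frobenius coordinates `(α_1,…,α_d | β_1,…,β_d)`, where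
`d = #{i : λ_i ≥ i}`, `α_i = λ_i - i`, `β_i = λ'_i - i` (all 1-indexed), one has
`s_λ = det_{1≤i,j≤d} ( s_{(α_i | β_j)} )`, the hook `(α|β)` being `(α+1, 1^β)`. -/
theorem giambelli_formula
    {R : Type*} [CommRing R] (N : ℕ)
    (lam : ℕ → ℕ) (L : ℕ) (hanti : Antitone lam)
    (hlen : ∀ i, lam i ≠ 0 ↔ i < L)
    (d : ℕ) (hd : d = ((Finset.range L).filter fun i => i + 1 ≤ lam i).card) :
    jtSchur R N lam L =
      Matrix.det (Matrix.of fun i j : Fin d =>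
        jtSchur R N
          (hookP (lam (i : ℕ) - ((i : ℕ) + 1)) (conjP lam L (j : ℕ) - ((j : ℕ) + 1)))
          (conjP lam L (j : ℕ) - ((j : ℕ) + 1) + 1)) := by
  have h0 : hInt R N (0:ℤ) = 1 := by
    unfold hInt
    rw [if_pos le_rfl]
    simp [hsymm_zero]
  have hneg : ∀ k : ℤ, k < 0 → hInt R N k = 0 := by
    intro k hk
    unfold hInt
    rw [if_neg (by omega)]
  unfold jtSchur
  exact GbAux.abstract_giambelli (hInt R N) h0 hneg lam L hanti hlen d hd
end

section
/- Content formula: for any partition λ with ℓ = ℓ(λ) parts and any u ∈ ℚ (equivalently, as an identity of polynomials in ℚ[u]), det_{1≤i,j≤ℓ} ( (u)_{λ_i − i + j} / (λ_i − i + j)! ) = (u)_λ / H_λ, where the matrix entry is interpreted as 0 whenever λ_i − i + j < 0. -/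
/-- The product of all hook lengths of the partition `lam` (with `L` nonzero parts,
0-indexed): `H_λ = ∏_{(i,j)∈λ} (λ_i + λ'_j − i − j + 1)` (1-indexed formula). -/
def hookProd (lam : ℕ → ℕ) (L : ℕ) : ℕ :=
  ∏ i ∈ Finset.range L, ∏ j ∈ Finset.range (lam i),
    (lam i + conjP lam L j - i - j - 1)

/-- The content product `(u)_λ = ∏_{(i,j)∈λ} (u + j − i)` (boxes 1-indexed;
0-indexed boxes `(i,j)` contribute `u + j − i` as well). -/
noncomputable def contentProd (lam : ℕ → ℕ) (L : ℕ) (u : ℚ) : ℚ :=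
  ∏ i ∈ Finset.range L, ∏ j ∈ Finset.range (lam i), (u + (j : ℚ) - (i : ℚ))

open Finset Polynomial Nat

namespace CF

/-! ### small arithmetic lemmas -/

lemma prodDesc (x s : ℕ) (h : s ≤ x) :
    (∏ k ∈ range s, ((x : ℚ) - k)) * ((x - s)! : ℕ) = (x ! : ℕ) := by
  induction s with
  | zero => simp
  | succ s ih =>
    have hs : s ≤ x := by omega
    rw [Finset.prod_range_succ]
    have hfac : ((x - s)! : ℚ) = ((x : ℚ) - s) * ((x - (s+1))! : ℕ) := by
      have h1 : x - s = (x - (s+1)) + 1 := by omega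
      rw [h1, Nat.factorial_succ]
      push_cast
      have : ((x - (s+1) : ℕ) : ℚ) = (x : ℚ) - (s+1) := by
        push_cast [Nat.cast_sub (by omega : s + 1 ≤ x)]
        ring
      rw [this]; ring
    calc (∏ k ∈ range s, ((x : ℚ) - k)) * ((x:ℚ) - s) * ((x - (s+1))! : ℕ)
        = (∏ k ∈ range s, ((x : ℚ) - k)) * (((x:ℚ) - s) * ((x - (s+1))! : ℕ)) := by ring
      _ = (∏ k ∈ range s, ((x : ℚ) - k)) * ((x - s)! : ℕ) := by rw [hfac]
      _ = (x ! : ℕ) := ih hs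

noncomputable def pc (k : ℕ) : Polynomial ℚ :=
  ∏ t ∈ range k, (X + C (t : ℚ))

lemma pc_eq_ascPochhammer (k : ℕ) : pc k = ascPochhammer ℚ k := by
  induction k with
  | zero => simp [pc, ascPochhammer_zero]
  | succ k ih =>
    rw [ascPochhammer_succ_right, ← ih, pc, pc, Finset.prod_range_succ,
      Polynomial.C_eq_natCast]

lemma det_eval {S : Type*} [CommRing S] {n : ℕ} (q : Fin n → Polynomial S)
    (hq : ∀ j, (q j).natDegree < n) (y : Fin n → S) :
    Matrix.det (Matrix.of fun i j => (q j).eval (y i)) =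
      (Matrix.vandermonde y).det *
        Matrix.det (Matrix.of fun m j : Fin n => (q j).coeff (m : ℕ)) := by
  rw [← Matrix.det_mul]
  congr 1
  ext i j
  simp only [Matrix.of_apply, Matrix.mul_apply, Matrix.vandermonde_apply]
  rw [Polynomial.eval_eq_sum_range' (hq j), ← Fin.sum_univ_eq_sum_range]
  simp [mul_comm]

/-! ### conjugate partition facts and the hook identity -/

variable (lam : ℕ → ℕ) (L : ℕ)

lemma conj_le (j : ℕ) : conjP lam L j ≤ L := by
  classical
  exact le_trans (Finset.card_filter_le _ _) (by simp)

lemma conj_anti {j j' : ℕ} (h : j ≤ j') : conjP lam L j' ≤ conjP lam L j := by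
  classical
  apply Finset.card_le_card
  intro a ha
  simp only [Finset.mem_filter] at ha ⊢
  exact ⟨ha.1, by omega⟩

lemma conj_ge (hanti : Antitone lam) {i j : ℕ} (hi : i < L) (hj : j < lam i) :
    i + 1 ≤ conjP lam L j := by
  classical
  have : Finset.range (i+1) ⊆ (Finset.range L).filter fun a => j + 1 ≤ lam a := by
    intro a ha
    simp only [Finset.mem_range] at ha
    simp only [Finset.mem_filter, Finset.mem_range]
    have := hanti (show a ≤ i by omega)
    exact ⟨by omega, by omega⟩
  simpa [conjP] using Finset.card_le_card this

lemma conj_lt (hanti : Antitone lam) {k j : ℕ} (h : lam k ≤ j) :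
    conjP lam L j ≤ k := by
  classical
  have : ((Finset.range L).filter fun a => j + 1 ≤ lam a) ⊆ Finset.range k := by
    intro a ha
    simp only [Finset.mem_filter, Finset.mem_range] at ha ⊢
    by_contra hak
    have := hanti (show k ≤ a by omega)
    omega
  simpa [conjP] using Finset.card_le_card this

lemma row_hook (hanti : Antitone lam) (hlen : ∀ i, lam i ≠ 0 ↔ i < L)
    {i : ℕ} (hi : i < L) :
    (∏ j ∈ Finset.range (lam i), (lam i + conjP lam L j - i - j - 1)) *
      (∏ k ∈ Finset.Ioo i L, ((lam i + (L - 1 - i)) - (lam k + (L - 1 - k)))) =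
    (lam i + (L - 1 - i))! := by
  classical
  set n := lam i + (L - 1 - i) with hn
  have hlami : 1 ≤ lam i := by have := (hlen i).mpr hi; omega
  set pmap : ℕ → ℕ := fun j => L + j - conjP lam L j with hpmap
  set qmap : ℕ → ℕ := fun k => lam k + (L - 1 - k) with hqmap
  have pmapmono : ∀ {a b : ℕ}, a < b → pmap a < pmap b := by
    intro a b hab
    have h1 := conj_anti lam L (show a ≤ b by omega)
    have h2 := conj_le lam L a
    simp only [hpmap]
    omega
  have pmapinj : Set.InjOn pmap (Finset.range (lam i)) := by
    intro a _ b _ hab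
    rcases lt_trichotomy a b with h | h | h
    · exact absurd hab (by have := pmapmono h; omega)
    · exact h
    · exact absurd hab (by have := pmapmono h; omega)
  have qmapinj : Set.InjOn qmap (Finset.Ioo i L) := by
    intro a ha b hb hab
    simp only [Finset.coe_Ioo, Set.mem_Ioo] at ha hb
    rcases lt_trichotomy a b with h | h | h
    · have := hanti (le_of_lt h); simp only [hqmap] at hab; omega
    · exact h
    · have := hanti (le_of_lt h); simp only [hqmap] at hab; omega
  set s1 := (Finset.range (lam i)).image pmap with hs1
  set s2 := (Finset.Ioo i L).image qmap with hs2
  have hs1sub : s1 ⊆ Finset.range n := by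
    intro t ht
    rcases Finset.mem_image.mp ht with ⟨j, hj, rfl⟩
    simp only [Finset.mem_range] at hj ⊢
    have h1 := conj_ge lam L hanti hi hj
    have h2 := conj_le lam L j
    simp only [hpmap]; omega
  have hs2sub : s2 ⊆ Finset.range n := by
    intro t ht
    rcases Finset.mem_image.mp ht with ⟨k, hk, rfl⟩
    simp only [Finset.mem_Ioo] at hk
    simp only [Finset.mem_range]
    have := hanti (le_of_lt hk.1)
    simp only [hqmap]; omega
  have hdisj : Disjoint s1 s2 := by
    rw [Finset.disjoint_left]
    intro t ht1 ht2
    rcases Finset.mem_image.mp ht1 with ⟨j, hj, rfl⟩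
    rcases Finset.mem_image.mp ht2 with ⟨k, hk, hkj⟩
    simp only [Finset.mem_range] at hj
    simp only [Finset.mem_Ioo] at hk
    have h2 := conj_le lam L j
    rcases le_or_gt (lam k) j with hcase | hcase
    · have := conj_lt lam L hanti hcase
      simp only [hqmap, hpmap] at hkj; omega
    · have := conj_ge lam L hanti hk.2 hcase
      simp only [hqmap, hpmap] at hkj; omega
  have hcard1 : s1.card = lam i := by
    rw [hs1, Finset.card_image_of_injOn pmapinj, Finset.card_range]
  have hcard2 : s2.card = L - 1 - i := by
    rw [hs2, Finset.card_image_of_injOn qmapinj, Nat.card_Ioo]; omega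
  have hunion : s1 ∪ s2 = Finset.range n := by
    apply Finset.eq_of_subset_of_card_le (Finset.union_subset hs1sub hs2sub)
    rw [Finset.card_union_of_disjoint hdisj, hcard1, hcard2, Finset.card_range]
  have key : (∏ t ∈ s1, (n - t)) * (∏ t ∈ s2, (n - t)) = n ! := by
    rw [← Finset.prod_union hdisj, hunion]
    rw [← Finset.prod_range_reflect, ← Finset.prod_range_add_one_eq_factorial]
    apply Finset.prod_congr rfl
    intro j hj
    have := Finset.mem_range.mp hj
    omega
  have e1 : (∏ j ∈ Finset.range (lam i), (lam i + conjP lam L j - i - j - 1))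
      = ∏ t ∈ s1, (n - t) := by
    rw [hs1, Finset.prod_image pmapinj]
    apply Finset.prod_congr rfl
    intro j hj
    have hj' := Finset.mem_range.mp hj
    have h1 := conj_ge lam L hanti hi hj'
    have h2 := conj_le lam L j
    simp only [hpmap]; omega
  have e2 : (∏ k ∈ Finset.Ioo i L, ((lam i + (L - 1 - i)) - (lam k + (L - 1 - k))))
      = ∏ t ∈ s2, (n - t) := by
    rw [hs2, Finset.prod_image qmapinj]
  rw [e1, e2, key]

lemma hook_master (hanti : Antitone lam) (hlen : ∀ i, lam i ≠ 0 ↔ i < L) :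
    hookProd lam L *
      (∏ i ∈ Finset.range L, ∏ k ∈ Finset.Ioo i L,
        ((lam i + (L - 1 - i)) - (lam k + (L - 1 - k)))) =
    ∏ i ∈ Finset.range L, (lam i + (L - 1 - i))! := by
  rw [hookProd, ← Finset.prod_mul_distrib]
  apply Finset.prod_congr rfl
  intro i hi
  exact row_hook lam L hanti hlen (Finset.mem_range.mp hi)

/-! ### entry factorization -/

lemma entry_factor (L x s j m : ℕ) (hm : m + s = x) (hL : s + j + 1 = L) :
    (C (((m ! : ℕ) : ℚ)⁻¹) * pc m) *
      (C (((x ! : ℕ) : ℚ)) * ∏ t ∈ Finset.range (L - 1), (X + C ((x : ℚ) - L + 1 + t))) =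
    pc x * ((∏ k ∈ Finset.range s, (C ((x : ℚ)) - C ((k : ℚ)))) *
      ∏ t ∈ Finset.range j, (X + C ((x : ℚ) - L + 1 + t))) := by
  have hsx : s ≤ x := by omega
  have hLq : (L : ℚ) = (s : ℚ) + j + 1 := by exact_mod_cast congrArg (Nat.cast (R := ℚ)) hL.symm
  have hxq : (x : ℚ) = (m : ℚ) + s := by exact_mod_cast congrArg (Nat.cast (R := ℚ)) hm.symm
  have hprod : (∏ k ∈ range s, ((x : ℚ) - k)) * ((m ! : ℕ) : ℚ) = ((x ! : ℕ) : ℚ) := by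
    have h := prodDesc x s hsx
    rwa [show x - s = m by omega] at h
  have hCprod : (∏ k ∈ Finset.range s, (C ((x : ℚ)) - C ((k : ℚ))))
      = C (∏ k ∈ range s, ((x : ℚ) - k)) := by
    rw [map_prod]
    exact Finset.prod_congr rfl fun k _ => by rw [map_sub]
  have hpcx : pc x = pc m * ∏ t ∈ range s, (X + C ((m : ℚ) + t)) := by
    rw [pc, ← hm, Finset.prod_range_add]
    congr 1
    apply Finset.prod_congr rfl
    intro t _
    congr 1
    push_cast
    ring
  have hsplit : (∏ t ∈ range (L - 1), (X + C ((x : ℚ) - L + 1 + t)))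
      = (∏ t ∈ range j, (X + C ((x : ℚ) - L + 1 + t))) * ∏ t ∈ range s, (X + C ((m : ℚ) + t)) := by
    rw [show L - 1 = j + s by omega, Finset.prod_range_add]
    congr 1
    apply Finset.prod_congr rfl
    intro t _
    congr 1
    push_cast
    rw [hxq, hLq]
    ring
  have hmfac : (C (((m ! : ℕ) : ℚ)⁻¹)) * C (((m ! : ℕ) : ℚ)) = 1 := by
    rw [← map_mul, inv_mul_cancel₀ (by exact_mod_cast Nat.factorial_ne_zero m), map_one]
  rw [hsplit, hpcx, hCprod, ← hprod, map_mul]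
  have hrearr : (C (((m ! : ℕ) : ℚ)⁻¹) * pc m) *
      ((C (∏ k ∈ range s, ((x : ℚ) - k)) * C (((m ! : ℕ) : ℚ))) *
        ((∏ t ∈ range j, (X + C ((x : ℚ) - L + 1 + t))) * ∏ t ∈ range s, (X + C ((m : ℚ) + t))))
      = (C (((m ! : ℕ) : ℚ)⁻¹) * C (((m ! : ℕ) : ℚ))) *
        ((pc m * ∏ t ∈ range s, (X + C ((m : ℚ) + t))) *
          (C (∏ k ∈ range s, ((x : ℚ) - k)) * ∏ t ∈ range j, (X + C ((x : ℚ) - L + 1 + t)))) := by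
    ring
  rw [hrearr, hmfac, one_mul]

lemma prod_Ioi_fin {M : Type*} [CommMonoid M] {L : ℕ} (i : Fin L) (f : ℕ → M) :
    ∏ j ∈ Finset.Ioi i, f (j : ℕ) = ∏ k ∈ Finset.Ioo (i : ℕ) L, f k := by
  have hL : 0 < L := i.pos
  have h1 : Finset.Ioo (i : ℕ) L = Finset.Ioc (i : ℕ) (L - 1) := by
    ext a
    simp only [Finset.mem_Ioo, Finset.mem_Ioc]
    omega
  rw [← Fin.map_valEmbedding_Ioi, Finset.prod_map]
  rfl

noncomputable def qpoly (L : ℕ) (j : ℕ) : Polynomial (Polynomial ℚ) :=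
  (∏ k ∈ range (L - 1 - j), (X - C (C (k : ℚ)))) *
    ∏ t ∈ range j, (X + C (X + C ((t : ℚ) - L + 1)))

lemma qpoly_natDegree_le (L j : ℕ) (hj : j < L) : (qpoly L j).natDegree ≤ L - 1 := by
  apply le_trans (Polynomial.natDegree_mul_le)
  have h1 : (∏ k ∈ range (L - 1 - j), (X - C (C (k : ℚ)))).natDegree ≤ L - 1 - j := by
    apply le_trans (Polynomial.natDegree_prod_le _ _)
    apply le_trans (Finset.sum_le_card_nsmul _ _ 1 ?_)
    · simp
    · intro k _
      exact le_of_eq (Polynomial.natDegree_X_sub_C _)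
  have h2 : (∏ t ∈ range j, (X + C (X + C ((t : ℚ) - L + 1)))).natDegree ≤ j := by
    apply le_trans (Polynomial.natDegree_prod_le _ _)
    apply le_trans (Finset.sum_le_card_nsmul _ _ 1 ?_)
    · simp
    · intro k _
      exact le_of_eq (Polynomial.natDegree_X_add_C _)
  omega

lemma qpoly_eval (L j : ℕ) (c : Polynomial ℚ) :
    (qpoly L j).eval c =
      (∏ k ∈ range (L - 1 - j), (c - C (k : ℚ))) *
        ∏ t ∈ range j, (c + (X + C ((t : ℚ) - L + 1))) := by
  simp [qpoly, eval_prod]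

/-! ### more infrastructure for the main proof -/

def xN (lam : ℕ → ℕ) (L i : ℕ) : ℕ := lam i + (L - 1 - i)

lemma hook_master' (lam : ℕ → ℕ) (L : ℕ) (hanti : Antitone lam)
    (hlen : ∀ i, lam i ≠ 0 ↔ i < L) :
    hookProd lam L *
      (∏ i ∈ Finset.range L, ∏ k ∈ Finset.Ioo i L, (xN lam L i - xN lam L k)) =
    ∏ i ∈ Finset.range L, (xN lam L i)! := by
  simpa [xN] using hook_master lam L hanti hlen

lemma hvand {L : ℕ} (w : Fin L → ℚ) :
    (Matrix.vandermonde (fun i => C (w i))).det =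
      C (∏ i : Fin L, ∏ jj ∈ Finset.Ioi i, (w jj - w i)) := by
  rw [Matrix.det_vandermonde, map_prod]
  apply Finset.prod_congr rfl
  intro i _
  rw [map_prod]
  apply Finset.prod_congr rfl
  intro jj _
  rw [map_sub]

/-- the special-point factorial computation -/
lemma prod_self_sub (s : ℕ) : (∏ k ∈ range s, ((s : ℚ) - k)) = (s ! : ℕ) := by
  have h := prodDesc s s le_rfl
  simpa using h

end CF

set_option maxHeartbeats 2000000 in
open Finset Polynomial Nat CF in
/-- **Content formula.**
For any partition `λ` with `L = ℓ(λ)` parts and any `u ∈ ℚ`,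
`det_{1≤i,j≤ℓ} ( (u)_{λ_i−i+j} / (λ_i−i+j)! ) = (u)_λ / H_λ`, the matrix entry being
`0` whenever `λ_i − i + j < 0`; `(u)_k` is the ascending Pochhammer symbol. -/
theorem content_formula_det
    (lam : ℕ → ℕ) (L : ℕ) (hanti : Antitone lam) (hlen : ∀ i, lam i ≠ 0 ↔ i < L)
    (u : ℚ) :
    Matrix.det (Matrix.of fun i j : Fin L =>
        if (i : ℕ) ≤ lam (i : ℕ) + (j : ℕ) then
          (ascPochhammer ℚ (lam (i : ℕ) + (j : ℕ) - (i : ℕ))).eval u /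
            (Nat.factorial (lam (i : ℕ) + (j : ℕ) - (i : ℕ)) : ℚ)
        else 0) =
      contentProd lam L u / (hookProd lam L : ℚ) := by
  classical
  rcases Nat.eq_zero_or_pos L with hL0 | hL
  · subst hL0
    simp [contentProd, hookProd, Matrix.det_isEmpty]
  -- main case : L > 0
  have hcastL : ∀ i : ℕ, i < L → ((L - 1 - i : ℕ) : ℚ) = (L : ℚ) - 1 - i := by
    intro i hi
    have h1 : (L - 1 - i) + (i + 1) = L := by omega
    have h2 := congrArg (Nat.cast (R := ℚ)) h1
    push_cast at h2
    linarith
  have hxq : ∀ i : ℕ, i < L → ((xN lam L i : ℕ) : ℚ) = (lam i : ℚ) + L - 1 - i := by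
    intro i hi
    have h1 : ((lam i + (L - 1 - i) : ℕ) : ℚ) = (lam i : ℚ) + ((L - 1 - i : ℕ) : ℚ) := by
      push_cast; ring
    simp only [xN]
    rw [h1, hcastL i hi]
    ring
  -- matrices and polynomial quantities
  set MA : Matrix (Fin L) (Fin L) (Polynomial ℚ) := Matrix.of fun i j =>
    if (i : ℕ) ≤ lam (i : ℕ) + (j : ℕ) then
      C (((lam (i : ℕ) + (j : ℕ) - (i : ℕ))! : ℚ)⁻¹) *
        pc (lam (i : ℕ) + (j : ℕ) - (i : ℕ))
    else 0 with hMAdef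
  set Rm : Matrix (Fin L) (Fin L) (Polynomial ℚ) :=
    Matrix.of (fun i j => (qpoly L (j : ℕ)).eval (C ((xN lam L (i : ℕ) : ℕ) : ℚ))) with hRmdef
  set Rm0 : Matrix (Fin L) (Fin L) (Polynomial ℚ) :=
    Matrix.of (fun i j => (qpoly L (j : ℕ)).eval (C ((L - 1 - (i : ℕ) : ℕ) : ℚ))) with hRm0def
  set DD : Polynomial ℚ :=
    Matrix.det (Matrix.of fun m j : Fin L => (qpoly L (j : ℕ)).coeff (m : ℕ)) with hDDdef
  set G : Polynomial ℚ := ∏ i : Fin L, (C (((xN lam L (i : ℕ))! : ℚ)) *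
    ∏ t ∈ Finset.range (L - 1),
      (X + C (((xN lam L (i : ℕ) : ℕ) : ℚ) - L + 1 + t))) with hGdef
  set pgrP : Polynomial ℚ := ∏ i : Fin L, ∏ t ∈ Finset.range (L - 1),
      (X + C (((xN lam L (i : ℕ) : ℕ) : ℚ) - L + 1 + t)) with hpgrPdef
  set PC : Polynomial ℚ := ∏ i : Fin L, pc (xN lam L (i : ℕ)) with hPCdef
  set Up : Polynomial ℚ := ∏ i : Fin L, ∏ t ∈ Finset.range (i : ℕ),
      (X + C ((t : ℚ) - (i : ℕ))) with hUpdef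
  set CA : Polynomial ℚ := ∏ i : Fin L, ∏ jj ∈ Finset.range (lam (i : ℕ)),
      (X + C ((jj : ℚ) - (i : ℕ))) with hCAdef
  -- rational quantities
  set vx : ℚ := ∏ i : Fin L, ∏ jj ∈ Finset.Ioi i,
      (((xN lam L (jj : ℕ) : ℕ) : ℚ) - ((xN lam L (i : ℕ) : ℕ) : ℚ)) with hvxdef
  set v0 : ℚ := ∏ i : Fin L, ∏ jj ∈ Finset.Ioi i,
      (((L - 1 - (jj : ℕ) : ℕ) : ℚ) - ((L - 1 - (i : ℕ) : ℕ) : ℚ)) with hv0def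
  set sgn : ℚ := ∏ i : Fin L, ∏ _jj ∈ Finset.Ioi i, (-1 : ℚ) with hsgndef
  set WQ : ℚ := ((∏ i ∈ Finset.range L, ∏ k ∈ Finset.Ioo i L,
      (xN lam L i - xN lam L k) : ℕ) : ℚ) with hWQdef
  set F0Q : ℚ := ((∏ i ∈ Finset.range L, (L - 1 - i)! : ℕ) : ℚ) with hF0Qdef
  set PQ : ℚ := ((∏ i ∈ Finset.range L, (xN lam L i)! : ℕ) : ℚ) with hPQdef
  set HQ : ℚ := ((hookProd lam L : ℕ) : ℚ) with hHQdef
  -- degrees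
  have hdeg : ∀ j : Fin L, (qpoly L (j : ℕ)).natDegree < L := fun j =>
    lt_of_le_of_lt (qpoly_natDegree_le L (j : ℕ) j.isLt) (by omega)
  -- eq2 : generalized Vandermonde factorisations
  have eq2 : Rm.det =
      (Matrix.vandermonde fun i : Fin L => C ((xN lam L (i : ℕ) : ℕ) : ℚ)).det * DD :=
    det_eval _ hdeg _
  have eq2' : Rm0.det =
      (Matrix.vandermonde fun i : Fin L => C ((L - 1 - (i : ℕ) : ℕ) : ℚ)).det * DD :=
    det_eval _ hdeg _
  -- entry factorization / eq1
  have hscale : (Matrix.of fun i j : Fin L =>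
        (C (((xN lam L (i : ℕ))! : ℚ)) *
          ∏ t ∈ Finset.range (L - 1),
            (X + C (((xN lam L (i : ℕ) : ℕ) : ℚ) - L + 1 + t))) * MA i j)
      = Matrix.of fun i j : Fin L => pc (xN lam L (i : ℕ)) * Rm i j := by
    refine Matrix.ext fun i j => ?_
    have hiL := i.isLt
    have hjL := j.isLt
    simp only [Matrix.of_apply, hMAdef, hRmdef]
    by_cases hcond : (i : ℕ) ≤ lam (i : ℕ) + (j : ℕ)
    · rw [if_pos hcond, qpoly_eval]
      have hm : (lam (i : ℕ) + (j : ℕ) - (i : ℕ)) + (L - 1 - (j : ℕ)) = xN lam L (i : ℕ) := by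
        simp only [xN]; omega
      have hLL : (L - 1 - (j : ℕ)) + (j : ℕ) + 1 = L := by omega
      have hfac := entry_factor L (xN lam L (i : ℕ)) (L - 1 - (j : ℕ)) (j : ℕ)
        (lam (i : ℕ) + (j : ℕ) - (i : ℕ)) hm hLL
      have hup : (∏ t ∈ Finset.range (j : ℕ),
            (C ((xN lam L (i : ℕ) : ℕ) : ℚ) + (X + C ((t : ℚ) - L + 1))))
          = ∏ t ∈ Finset.range (j : ℕ),
            (X + C (((xN lam L (i : ℕ) : ℕ) : ℚ) - L + 1 + t)) := by
        apply Finset.prod_congr rfl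
        intro t _
        have h3 : ((xN lam L (i : ℕ) : ℕ) : ℚ) - L + 1 + t
            = ((xN lam L (i : ℕ) : ℕ) : ℚ) + ((t : ℚ) - L + 1) := by ring
        rw [h3, map_add C ((xN lam L (i : ℕ) : ℕ) : ℚ) ((t : ℚ) - L + 1)]
        ring
      rw [hup]
      linear_combination hfac
    · rw [if_neg hcond, mul_zero, qpoly_eval]
      have hmem : xN lam L (i : ℕ) ∈ Finset.range (L - 1 - (j : ℕ)) := by
        simp only [Finset.mem_range, xN]; omega
      symm
      rw [Finset.prod_eq_zero hmem (show C ((xN lam L (i : ℕ) : ℕ) : ℚ) -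
        C ((xN lam L (i : ℕ) : ℕ) : ℚ) = 0 from sub_self _), zero_mul, mul_zero]
  have eq1 : MA.det * G = PC * Rm.det := by
    have h1 := Matrix.det_mul_column (fun i : Fin L =>
      C (((xN lam L (i : ℕ))! : ℚ)) *
        ∏ t ∈ Finset.range (L - 1),
          (X + C (((xN lam L (i : ℕ) : ℕ) : ℚ) - L + 1 + t))) MA
    have h2 := Matrix.det_mul_column (fun i : Fin L => pc (xN lam L (i : ℕ))) Rm
    rw [mul_comm MA.det G, hGdef, ← h1, hscale, h2, ← hPCdef]
  -- eq3 : triangular evaluation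
  have eq3 : Rm0.det = C F0Q * Up := by
    have htri : Rm0.BlockTriangular id := by
      intro i j hij
      simp only [hRm0def, Matrix.of_apply, qpoly_eval]
      have hij' : (j : ℕ) < (i : ℕ) := hij
      have hmem : (L - 1 - (i : ℕ)) ∈ Finset.range (L - 1 - (j : ℕ)) := by
        simp only [Finset.mem_range]
        have := i.isLt
        omega
      rw [Finset.prod_eq_zero hmem (show C ((L - 1 - (i : ℕ) : ℕ) : ℚ) -
        C ((L - 1 - (i : ℕ) : ℕ) : ℚ) = 0 from sub_self _), zero_mul]
    rw [Matrix.det_of_upperTriangular htri]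
    have hdiag : ∀ j : Fin L, Rm0 j j = C (((L - 1 - (j : ℕ))! : ℚ)) *
        ∏ t ∈ Finset.range (j : ℕ), (X + C ((t : ℚ) - (j : ℕ))) := by
      intro j
      simp only [hRm0def, Matrix.of_apply, qpoly_eval]
      congr 1
      · rw [show (∏ k ∈ Finset.range (L - 1 - (j : ℕ)),
            (C ((L - 1 - (j : ℕ) : ℕ) : ℚ) - C ((k : ℚ))))
            = C (∏ k ∈ Finset.range (L - 1 - (j : ℕ)),
              (((L - 1 - (j : ℕ) : ℕ) : ℚ) - (k : ℚ))) from by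
          rw [map_prod]
          exact Finset.prod_congr rfl fun k _ => (map_sub C _ _).symm]
        rw [prod_self_sub (L - 1 - (j : ℕ))]
      · apply Finset.prod_congr rfl
        intro t _
        have hc : (t : ℚ) - (j : ℕ) = ((L - 1 - (j : ℕ) : ℕ) : ℚ) + ((t : ℚ) - L + 1) := by
          rw [hcastL (j : ℕ) j.isLt]; ring
        rw [hc, map_add C ((L - 1 - (j : ℕ) : ℕ) : ℚ) ((t : ℚ) - L + 1)]
        ring
    rw [Finset.prod_congr rfl (fun j _ => hdiag j), Finset.prod_mul_distrib, hUpdef]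
    congr 1
    rw [← map_prod]
    congr 1
    rw [hF0Qdef, Nat.cast_prod]
    exact Fin.prod_univ_eq_prod_range (fun i => (((L - 1 - i)! : ℕ) : ℚ)) L
  -- eq4 : content row identity
  have hrow : ∀ i : Fin L,
      (∏ jj ∈ Finset.range (lam (i : ℕ)), (X + C ((jj : ℚ) - (i : ℕ)))) *
        (∏ t ∈ Finset.range (L - 1),
          (X + C (((xN lam L (i : ℕ) : ℕ) : ℚ) - L + 1 + t)))
      = pc (xN lam L (i : ℕ)) *
          ∏ t ∈ Finset.range (i : ℕ), (X + C ((t : ℚ) - (i : ℕ))) := by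
    intro i
    have hiL := i.isLt
    have hT1 : ∏ t ∈ Finset.range (lam (i : ℕ) + (L - 1)), (X + C ((t : ℚ) - (i : ℕ)))
        = (∏ jj ∈ Finset.range (lam (i : ℕ)), (X + C ((jj : ℚ) - (i : ℕ)))) *
          (∏ t ∈ Finset.range (L - 1),
            (X + C (((xN lam L (i : ℕ) : ℕ) : ℚ) - L + 1 + t))) := by
      rw [Finset.prod_range_add]
      congr 1
      apply Finset.prod_congr rfl
      intro t _
      congr 1
      rw [hxq (i : ℕ) hiL]
      push_cast
      ring
    have hT2 : ∏ t ∈ Finset.range ((i : ℕ) + xN lam L (i : ℕ)), (X + C ((t : ℚ) - (i : ℕ)))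
        = (∏ t ∈ Finset.range (i : ℕ), (X + C ((t : ℚ) - (i : ℕ)))) * pc (xN lam L (i : ℕ)) := by
      rw [Finset.prod_range_add]
      congr 1
      apply Finset.prod_congr rfl
      intro t _
      congr 1
      push_cast
      ring
    have hrange : lam (i : ℕ) + (L - 1) = (i : ℕ) + xN lam L (i : ℕ) := by
      simp only [xN]; omega
    rw [← hT1, hrange, hT2]
    ring
  have eq4 : CA * pgrP = PC * Up := by
    rw [hCAdef, hpgrPdef, hPCdef, hUpdef, ← Finset.prod_mul_distrib, ← Finset.prod_mul_distrib]
    exact Finset.prod_congr rfl fun i _ => hrow i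
  -- sign bookkeeping for the two Vandermonde determinants
  have hsx : ∀ i jj : Fin L, i < jj → xN lam L (jj : ℕ) ≤ xN lam L (i : ℕ) := by
    intro i jj hij
    have h := hanti (le_of_lt (show (i : ℕ) < (jj : ℕ) from hij))
    have := jj.isLt
    simp only [xN]
    omega
  have hvx : vx = sgn * WQ := by
    rw [hvxdef, show (∏ i : Fin L, ∏ jj ∈ Finset.Ioi i,
        (((xN lam L (jj : ℕ) : ℕ) : ℚ) - ((xN lam L (i : ℕ) : ℕ) : ℚ)))
        = ∏ i : Fin L, ∏ jj ∈ Finset.Ioi i,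
          ((-1 : ℚ) * (((xN lam L (i : ℕ) - xN lam L (jj : ℕ) : ℕ)) : ℚ)) from
      Finset.prod_congr rfl fun i _ => Finset.prod_congr rfl fun jj hjj => by
        have hij : i < jj := Finset.mem_Ioi.mp hjj
        rw [Nat.cast_sub (hsx i jj hij)]
        ring]
    simp only [Finset.prod_mul_distrib]
    rw [hsgndef]
    congr 1
    calc ∏ i : Fin L, ∏ jj ∈ Finset.Ioi i, (((xN lam L (i : ℕ) - xN lam L (jj : ℕ) : ℕ)) : ℚ)
        = ∏ i : Fin L, ∏ k ∈ Finset.Ioo (i : ℕ) L, (((xN lam L (i : ℕ) - xN lam L k : ℕ)) : ℚ) :=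
          Finset.prod_congr rfl fun i _ => prod_Ioi_fin i
            (fun k => (((xN lam L (i : ℕ) - xN lam L k : ℕ)) : ℚ))
      _ = ∏ i ∈ Finset.range L, ∏ k ∈ Finset.Ioo i L, (((xN lam L i - xN lam L k : ℕ)) : ℚ) :=
          Fin.prod_univ_eq_prod_range
            (fun i => ∏ k ∈ Finset.Ioo i L, (((xN lam L i - xN lam L k : ℕ)) : ℚ)) L
      _ = WQ := by
          rw [hWQdef, Nat.cast_prod]
          exact Finset.prod_congr rfl fun i _ => (Nat.cast_prod _ _).symm
  have hfactIoo : ∀ i : ℕ, i < L →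
      (∏ k ∈ Finset.Ioo i L, ((L - 1 - i) - (L - 1 - k))) = (L - 1 - i)! := by
    intro i hi
    rw [← Finset.Ico_add_one_left_eq_Ioo, Finset.prod_Ico_eq_prod_range]
    rw [show L - (i + 1) = L - 1 - i from by omega]
    rw [← Finset.prod_range_add_one_eq_factorial]
    apply Finset.prod_congr rfl
    intro t ht
    have := Finset.mem_range.mp ht
    omega
  have hv0 : v0 = sgn * F0Q := by
    rw [hv0def, show (∏ i : Fin L, ∏ jj ∈ Finset.Ioi i,
        (((L - 1 - (jj : ℕ) : ℕ) : ℚ) - ((L - 1 - (i : ℕ) : ℕ) : ℚ)))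
        = ∏ i : Fin L, ∏ jj ∈ Finset.Ioi i,
          ((-1 : ℚ) * ((((L - 1 - (i : ℕ)) - (L - 1 - (jj : ℕ)) : ℕ)) : ℚ)) from
      Finset.prod_congr rfl fun i _ => Finset.prod_congr rfl fun jj hjj => by
        have hij0 : i < jj := Finset.mem_Ioi.mp hjj
        have hij : (i : ℕ) < (jj : ℕ) := hij0
        have hjL := jj.isLt
        rw [Nat.cast_sub (by omega : (L - 1 - (jj : ℕ)) ≤ (L - 1 - (i : ℕ)))]
        ring]
    simp only [Finset.prod_mul_distrib]
    rw [hsgndef]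
    congr 1
    calc ∏ i : Fin L, ∏ jj ∈ Finset.Ioi i,
          ((((L - 1 - (i : ℕ)) - (L - 1 - (jj : ℕ)) : ℕ)) : ℚ)
        = ∏ i : Fin L, ∏ k ∈ Finset.Ioo (i : ℕ) L,
            ((((L - 1 - (i : ℕ)) - (L - 1 - k) : ℕ)) : ℚ) :=
          Finset.prod_congr rfl fun i _ => prod_Ioi_fin i
            (fun k => ((((L - 1 - (i : ℕ)) - (L - 1 - k) : ℕ)) : ℚ))
      _ = ∏ i ∈ Finset.range L, ∏ k ∈ Finset.Ioo i L,
            ((((L - 1 - i) - (L - 1 - k) : ℕ)) : ℚ) :=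
          Fin.prod_univ_eq_prod_range
            (fun i => ∏ k ∈ Finset.Ioo i L, ((((L - 1 - i) - (L - 1 - k) : ℕ)) : ℚ)) L
      _ = ∏ i ∈ Finset.range L, (((L - 1 - i)! : ℕ) : ℚ) := by
          apply Finset.prod_congr rfl
          intro i hi
          rw [← Nat.cast_prod, hfactIoo i (Finset.mem_range.mp hi)]
      _ = F0Q := by rw [hF0Qdef, Nat.cast_prod]
  -- the hook-length identity
  have hhook : HQ * WQ = PQ := by
    rw [hHQdef, hWQdef, hPQdef, ← Nat.cast_mul]
    exact_mod_cast congrArg (Nat.cast (R := ℚ)) (hook_master' lam L hanti hlen)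
  have hPQF : HQ * vx * F0Q = PQ * v0 := by
    rw [hvx, hv0]
    linear_combination sgn * F0Q * hhook
  -- Vandermonde determinants as constants
  have hVx : (Matrix.vandermonde fun i : Fin L => C ((xN lam L (i : ℕ) : ℕ) : ℚ)).det
      = C vx := hvand _
  have hV0 : (Matrix.vandermonde fun i : Fin L => C ((L - 1 - (i : ℕ) : ℕ) : ℚ)).det
      = C v0 := hvand _
  -- nonvanishing facts
  have hGne : G ≠ 0 := by
    rw [hGdef, Finset.prod_ne_zero_iff]
    intro i _
    apply mul_ne_zero
    · exact Polynomial.C_ne_zero.mpr (by exact_mod_cast Nat.factorial_ne_zero _)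
    · rw [Finset.prod_ne_zero_iff]
      intro t _
      exact Polynomial.X_add_C_ne_zero _
  have hv0ne : v0 ≠ 0 := by
    rw [hv0]
    apply mul_ne_zero
    · rw [hsgndef, Finset.prod_ne_zero_iff]
      intro i _
      rw [Finset.prod_ne_zero_iff]
      intro t _
      norm_num
    · rw [hF0Qdef, Nat.cast_ne_zero]
      rw [Finset.prod_ne_zero_iff]
      intro i _
      exact Nat.factorial_ne_zero _
  have hHne : HQ ≠ 0 := by
    rw [hHQdef, Nat.cast_ne_zero, hookProd]
    rw [Finset.prod_ne_zero_iff]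
    intro i hi
    rw [Finset.prod_ne_zero_iff]
    intro j hj
    have h1 := conj_ge lam L hanti (Finset.mem_range.mp hi) (Finset.mem_range.mp hj)
    have h2 := Finset.mem_range.mp hj
    omega
  have hGsplit : G = C PQ * pgrP := by
    rw [hGdef, hpgrPdef, Finset.prod_mul_distrib]
    congr 1
    rw [← map_prod]
    congr 1
    rw [hPQdef, Nat.cast_prod]
    exact Fin.prod_univ_eq_prod_range (fun i => (((xN lam L i)! : ℕ) : ℚ)) L
  -- the key cancellation
  have hKey : C HQ * MA.det = CA := by
    apply mul_right_cancel₀ (b := G * C v0) (mul_ne_zero hGne (Polynomial.C_ne_zero.mpr hv0ne))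
    calc C HQ * MA.det * (G * C v0)
        = C HQ * (MA.det * G) * C v0 := by ring
      _ = C HQ * (PC * Rm.det) * C v0 := by rw [eq1]
      _ = C HQ * PC * (Rm.det * C v0) := by ring
      _ = C HQ * PC * (Rm.det *
          (Matrix.vandermonde fun i : Fin L => C ((L - 1 - (i : ℕ) : ℕ) : ℚ)).det) := by
          rw [hV0]
      _ = C HQ * PC *
          ((Matrix.vandermonde fun i : Fin L => C ((xN lam L (i : ℕ) : ℕ) : ℚ)).det *
            DD *
            (Matrix.vandermonde fun i : Fin L => C ((L - 1 - (i : ℕ) : ℕ) : ℚ)).det) := by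
          rw [eq2]
      _ = C HQ * PC *
          ((Matrix.vandermonde fun i : Fin L => C ((xN lam L (i : ℕ) : ℕ) : ℚ)).det *
            Rm0.det) := by
          rw [eq2']; ring
      _ = C HQ * PC * (C vx * (C F0Q * Up)) := by rw [hVx, eq3]
      _ = (C HQ * C vx * C F0Q) * (PC * Up) := by ring
      _ = C (HQ * vx * F0Q) * (PC * Up) := by rw [map_mul, map_mul]
      _ = C (PQ * v0) * (PC * Up) := by rw [hPQF]
      _ = C PQ * (PC * Up) * C v0 := by rw [map_mul]; ring
      _ = C PQ * (CA * pgrP) * C v0 := by rw [eq4]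
      _ = CA * (C PQ * pgrP) * C v0 := by ring
      _ = CA * G * C v0 := by rw [← hGsplit]
      _ = CA * (G * C v0) := by ring
  have hdet : MA.det = C (HQ⁻¹) * CA := by
    calc MA.det = (C (HQ⁻¹) * C HQ) * MA.det := by
          rw [← map_mul, inv_mul_cancel₀ hHne, map_one, one_mul]
      _ = C (HQ⁻¹) * (C HQ * MA.det) := by ring
      _ = C (HQ⁻¹) * CA := by rw [hKey]
  -- evaluate at u
  have hmapm : (Matrix.of fun i j : Fin L =>
      if (i : ℕ) ≤ lam (i : ℕ) + (j : ℕ) then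
        (ascPochhammer ℚ (lam (i : ℕ) + (j : ℕ) - (i : ℕ))).eval u /
          (Nat.factorial (lam (i : ℕ) + (j : ℕ) - (i : ℕ)) : ℚ)
      else 0)
      = (Polynomial.evalRingHom u).mapMatrix MA := by
    ext i j
    simp only [RingHom.mapMatrix_apply, Matrix.map_apply, Matrix.of_apply, hMAdef]
    rw [apply_ite (Polynomial.evalRingHom u)]
    simp only [map_mul, Polynomial.coe_evalRingHom, Polynomial.eval_C, map_zero]
    split_ifs with h
    · rw [pc_eq_ascPochhammer, div_eq_mul_inv, mul_comm]
    · rfl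
  rw [hmapm, ← RingHom.map_det, hdet]
  rw [map_mul, Polynomial.coe_evalRingHom, Polynomial.eval_C]
  have hCAeval : Polynomial.eval u CA
      = ∏ i : Fin L, ∏ jj ∈ Finset.range (lam (i : ℕ)), (u + ((jj : ℚ) - (i : ℕ))) := by
    rw [hCAdef, Polynomial.eval_prod]
    apply Finset.prod_congr rfl
    intro i _
    rw [Polynomial.eval_prod]
    apply Finset.prod_congr rfl
    intro jj _
    simp
  rw [hCAeval]
  have hcontent : (∏ i : Fin L, ∏ jj ∈ Finset.range (lam (i : ℕ)), (u + ((jj : ℚ) - (i : ℕ))))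
      = contentProd lam L u := by
    rw [contentProd]
    rw [← Fin.prod_univ_eq_prod_range
      (fun i => ∏ j ∈ Finset.range (lam i), (u + (j : ℚ) - (i : ℚ))) L]
    apply Finset.prod_congr rfl
    intro i _
    apply Finset.prod_congr rfl
    intro jj _
    ring
  rw [hcontent, div_eq_mul_inv, mul_comm]
end

section
/- Frobenius form of the content product: for any partition λ with Frobenius coordinates (α_1,…,α_d | β_1,…,β_d), one has the identity in ℤ[u] (equivalently for every u ∈ ℚ): (u)_λ = ∏_{i=1}^{d} (−1)^{β_i} (u)_{α_i + 1} (1 − u)_{β_i}. -/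
/-- A downward-closed predicate whose members are `< L` is characterized by its count. -/
lemma lower_filter_card {L : ℕ} (p : ℕ → Prop) [DecidablePred p]
    (hdc : ∀ ⦃i j⦄, j ≤ i → p i → p j) (hL : ∀ i, p i → i < L) (i : ℕ) :
    p i ↔ i < ((Finset.range L).filter fun k => p k).card := by
  constructor
  · intro hp
    have hsub : Finset.range (i + 1) ⊆ (Finset.range L).filter fun k => p k := by
      intro j hj
      simp only [Finset.mem_range] at hj
      have hpj : p j := hdc (Nat.lt_succ_iff.mp hj) hp
      simp only [Finset.mem_filter, Finset.mem_range]
      exact ⟨hL j hpj, hpj⟩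
    have := Finset.card_le_card hsub
    simpa using this
  · intro hlt
    by_contra hp
    have hsub : ((Finset.range L).filter fun k => p k) ⊆ Finset.range i := by
      intro j hj
      simp only [Finset.mem_filter, Finset.mem_range] at hj
      simp only [Finset.mem_range]
      by_contra hji
      exact hp (hdc (Nat.le_of_not_lt hji) hj.2)
    have := Finset.card_le_card hsub
    simp only [Finset.card_range] at this
    omega

lemma asc_eval_prod (n : ℕ) (x : ℚ) :
    (ascPochhammer ℚ n).eval x = ∏ i ∈ Finset.range n, (x + (i : ℚ)) := by
  induction n with
  | zero => simp
  | succ n ih => rw [ascPochhammer_succ_eval, ih, Finset.prod_range_succ]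

/-- **Frobenius form of the content product.**
For any partition `λ` with Frobenius coordinates `(α_1,…,α_d | β_1,…,β_d)`, where
`d = #{i : λ_i ≥ i}`, `α_i = λ_i − i`, `β_i = λ'_i − i` (1-indexed), and for every
`u ∈ ℚ`:  `(u)_λ = ∏_{i=1}^{d} (−1)^{β_i} (u)_{α_i+1} (1−u)_{β_i}`. -/
theorem content_prod_frobenius
    (lam : ℕ → ℕ) (L : ℕ) (hanti : Antitone lam) (hlen : ∀ i, lam i ≠ 0 ↔ i < L)
    (d : ℕ) (hd : d = ((Finset.range L).filter fun i => i + 1 ≤ lam i).card)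
    (u : ℚ) :
    contentProd lam L u =
      ∏ i ∈ Finset.range d,
        (-1 : ℚ) ^ (conjP lam L i - (i + 1)) *
          (ascPochhammer ℚ (lam i - (i + 1) + 1)).eval u *
          (ascPochhammer ℚ (conjP lam L i - (i + 1))).eval (1 - u) := by
  induction L using Nat.strong_induction_on generalizing lam d with
  | _ L IH =>
  rcases Nat.eq_zero_or_pos L with hL0 | hLpos
  · subst hL0
    have hd0 : d = 0 := by simp [hd]
    subst hd0
    simp [contentProd]
  -- characterizations
  have hdiff : ∀ i, i + 1 ≤ lam i ↔ i < d := by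
    intro i
    rw [hd]
    exact lower_filter_card (fun k => k + 1 ≤ lam k)
      (fun i j hji hi => le_trans (by omega) (le_trans hi (hanti hji)))
      (fun i hi => (hlen i).mp (by omega)) i
  have hcj : ∀ m i, m + 1 ≤ lam i ↔ i < conjP lam L m := by
    intro m i
    exact lower_filter_card (fun k => m + 1 ≤ lam k)
      (fun i j hji hi => le_trans hi (hanti hji))
      (fun i hi => (hlen i).mp (by omega)) i
  have hc0 : conjP lam L 0 = L := by
    unfold conjP
    rw [Finset.filter_true_of_mem, Finset.card_range]
    intro i hi
    simp only [Finset.mem_range] at hi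
    have := (hlen i).mpr hi
    omega
  have hd1 : 1 ≤ d := by
    have := (hdiff 0).mp (by have := (hlen 0).mpr hLpos; omega)
    omega
  have hlam0 : 1 ≤ lam 0 := by have := (hlen 0).mpr hLpos; omega
  -- the stripped partition
  set mu : ℕ → ℕ := fun i => lam (i + 1) - 1 with hmu
  set L' : ℕ := conjP lam L 1 - 1 with hL'
  have hmu_anti : Antitone mu := fun i j hij => by
    have : lam (j + 1) ≤ lam (i + 1) := hanti (by omega)
    simp only [hmu]
    omega
  have hc1L : conjP lam L 1 ≤ L := by
    have := Finset.card_filter_le (Finset.range L) (fun i => 1 + 1 ≤ lam i)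
    simpa [conjP] using this
  have hc1pos : conjP lam L 1 ≠ 0 → 2 ≤ lam 0 := by
    intro h
    exact (hcj 1 0).mpr (by omega)
  have hmu_len : ∀ i, mu i ≠ 0 ↔ i < L' := by
    intro i
    have h1 : mu i ≠ 0 ↔ 2 ≤ lam (i + 1) := by simp only [hmu]; omega
    have h2 := hcj 1 (i + 1)
    have h3 := hcj 1 0
    constructor
    · intro h
      have := h2.mp (h1.mp h)
      omega
    · intro h
      have hc : 1 ≤ conjP lam L 1 := by omega
      exact h1.mpr (h2.mpr (by omega))
  have hL'lt : L' < L := by omega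
  -- d for mu
  have hmudiff : ∀ i, i + 1 ≤ mu i ↔ i < d - 1 := by
    intro i
    have h1 : i + 1 ≤ mu i ↔ i + 2 ≤ lam (i + 1) := by simp only [hmu]; omega
    have h2 := hdiff (i + 1)
    omega
  have hmud : d - 1 = ((Finset.range L').filter fun i => i + 1 ≤ mu i).card := by
    have hch : ∀ i, i + 1 ≤ mu i ↔
        i < ((Finset.range L').filter fun k => k + 1 ≤ mu k).card :=
      lower_filter_card (fun k => k + 1 ≤ mu k)
        (fun i j hji hi => le_trans (by omega) (le_trans hi (hmu_anti hji)))
        (fun i hi => (hmu_len i).mp (by omega))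
    have ha := (hch (d - 1))
    have hb := hch ((Finset.range L').filter fun k => k + 1 ≤ mu k).card
    have hc := hmudiff (d - 1)
    have hd2 := hmudiff ((Finset.range L').filter fun k => k + 1 ≤ mu k).card
    omega
  -- conjugate relation
  have hconj : ∀ j, j < d - 1 → conjP mu L' j + 1 = conjP lam L (j + 1) := by
    intro j hj
    have hch : ∀ k, j + 1 ≤ mu k ↔ k < conjP mu L' j :=
      lower_filter_card (fun k => j + 1 ≤ mu k)
        (fun i k hki hi => le_trans hi (hmu_anti hki))
        (fun i hi => (hmu_len i).mp (by omega))
    have hsh : ∀ k, k < conjP mu L' j ↔ k + 1 < conjP lam L (j + 1) := by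
      intro k
      have h1 := hch k
      have h2 : j + 1 ≤ mu k ↔ j + 2 ≤ lam (k + 1) := by simp only [hmu]; omega
      have h3 := hcj (j + 1) (k + 1)
      omega
    have hpos : 0 < conjP lam L (j + 1) := by
      have hlj : j + 2 ≤ lam (j + 1) := by have := hdiff (j + 1); omega
      have h0 : j + 2 ≤ lam 0 := le_trans hlj (hanti (Nat.zero_le _))
      have := (hcj (j + 1) 0).mp h0
      omega
    have h1 := hsh (conjP mu L' j)
    have h2 := hsh (conjP mu L' j - 1)
    have h3 := hsh (conjP lam L (j + 1) - 2)
    omega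
  -- split the content product: peel first row and first column
  obtain ⟨L0, rfl⟩ : ∃ L0, L = L0 + 1 := ⟨L - 1, by omega⟩
  have hlampos : ∀ i, i < L0 + 1 → 1 ≤ lam i := fun i hi => by
    have := (hlen i).mpr hi; omega
  have hsplit : contentProd lam (L0 + 1) u
      = (∏ j ∈ Finset.range (lam 0), (u + (j : ℚ)))
        * ((∏ i ∈ Finset.range L0, (u - ((i : ℚ) + 1)))
           * contentProd mu L0 u) := by
    unfold contentProd
    rw [Finset.prod_range_succ']
    have hrow : ∀ i ∈ Finset.range L0,
        (∏ j ∈ Finset.range (lam (i + 1)), (u + (j : ℚ) - ((i + 1 : ℕ) : ℚ)))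
        = (u - ((i : ℚ) + 1)) * ∏ j ∈ Finset.range (mu i), (u + (j : ℚ) - (i : ℚ)) := by
      intro i hi
      simp only [Finset.mem_range] at hi
      have h1 : lam (i + 1) = mu i + 1 := by
        have := hlampos (i + 1) (by omega)
        simp only [hmu]; omega
      rw [h1, Finset.prod_range_succ']
      have h2 : ∀ j, (u + ((j + 1 : ℕ) : ℚ) - ((i + 1 : ℕ) : ℚ))
          = u + (j : ℚ) - (i : ℚ) := by intro j; push_cast; ring
      rw [Finset.prod_congr rfl fun j _ => h2 j]
      push_cast
      ring
    rw [Finset.prod_congr rfl hrow, Finset.prod_mul_distrib]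
    simp only [Nat.cast_zero, sub_zero]
    ring
  have hmu_trunc : contentProd mu L0 u = contentProd mu L' u := by
    unfold contentProd
    refine (Finset.prod_subset (Finset.range_subset_range.mpr (by omega)) ?_).symm
    intro i hi hni
    simp only [Finset.mem_range] at hi hni
    have : mu i = 0 := by
      by_contra h
      exact hni ((hmu_len i).mp h)
    simp [this]
  -- apply induction hypothesis
  have hIH := IH L' hL'lt mu hmu_anti hmu_len (d - 1) hmud
  -- assemble the right-hand side
  obtain ⟨d0, rfl⟩ : ∃ d0, d = d0 + 1 := ⟨d - 1, by omega⟩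
  rw [Finset.prod_range_succ']
  have hterm : ∀ i ∈ Finset.range d0,
      ((-1 : ℚ) ^ (conjP lam (L0 + 1) (i + 1) - (i + 1 + 1)) *
        (ascPochhammer ℚ (lam (i + 1) - (i + 1 + 1) + 1)).eval u *
        (ascPochhammer ℚ (conjP lam (L0 + 1) (i + 1) - (i + 1 + 1))).eval (1 - u))
      = ((-1 : ℚ) ^ (conjP mu L' i - (i + 1)) *
        (ascPochhammer ℚ (mu i - (i + 1) + 1)).eval u *
        (ascPochhammer ℚ (conjP mu L' i - (i + 1))).eval (1 - u)) := by
    intro i hi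
    simp only [Finset.mem_range] at hi
    have hc := hconj i (by omega)
    have he1 : conjP lam (L0 + 1) (i + 1) - (i + 1 + 1) = conjP mu L' i - (i + 1) := by
      omega
    have he2 : lam (i + 1) - (i + 1 + 1) + 1 = mu i - (i + 1) + 1 := by
      simp only [hmu]; omega
    rw [he1, he2]
  rw [Finset.prod_congr rfl hterm]
  -- the first term
  have hfirst : ((-1 : ℚ) ^ (conjP lam (L0 + 1) 0 - (0 + 1)) *
      (ascPochhammer ℚ (lam 0 - (0 + 1) + 1)).eval u *
      (ascPochhammer ℚ (conjP lam (L0 + 1) 0 - (0 + 1))).eval (1 - u))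
      = (∏ j ∈ Finset.range (lam 0), (u + (j : ℚ)))
        * (∏ i ∈ Finset.range L0, (u - ((i : ℚ) + 1))) := by
    have h1 : conjP lam (L0 + 1) 0 - (0 + 1) = L0 := by omega
    have h2 : lam 0 - (0 + 1) + 1 = lam 0 := by omega
    rw [h1, h2, asc_eval_prod, asc_eval_prod]
    have h3 : ∀ i ∈ Finset.range L0, (u - ((i : ℚ) + 1)) = (-1) * (1 - u + (i : ℚ)) := by
      intro i _; ring
    rw [Finset.prod_congr rfl h3, Finset.prod_mul_distrib, Finset.prod_const, Finset.card_range]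
    ring
  simp only [Nat.add_sub_cancel] at hIH
  rw [hfirst, hsplit, hmu_trunc, hIH]
  ring
end

section
/- For all integers α, β ≥ 0 and every u ∈ ℚ (equivalently, as an identity in ℚ[u]): Σ_{m=0}^{β} (−u)_{β−m} (u)_{α+m+1} / ( (β−m)! · (α+m+1)! ) = (u)_{α+1} (1−u)_{β} / ( α! · β! · (α+β+1) ). -/
open Finset

lemma hook_aux (u : ℚ) : ∀ n N : ℕ, n < N →
    ∑ k ∈ range (n + 1),
        (ascPochhammer ℚ k).eval (-u) * (ascPochhammer ℚ (N - k)).eval u /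
          ((Nat.factorial k : ℚ) * (Nat.factorial (N - k) : ℚ)) =
      (ascPochhammer ℚ n).eval (1 - u) * (ascPochhammer ℚ (N - n)).eval u * ((N : ℚ) - n) /
        ((Nat.factorial n : ℚ) * (Nat.factorial (N - n) : ℚ) * N) := by
  intro n
  induction n with
  | zero =>
    intro N hN
    have hN0 : (N : ℚ) ≠ 0 := Nat.cast_ne_zero.mpr (by omega)
    have hF : ((Nat.factorial N : ℚ)) ≠ 0 := Nat.cast_ne_zero.mpr (Nat.factorial_ne_zero N)
    simp only [zero_add, sum_range_one, Nat.sub_zero, ascPochhammer_zero, Polynomial.eval_one,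
      Nat.factorial_zero, Nat.cast_zero, Nat.cast_one, one_mul, sub_zero]
    field_simp
  | succ n ih =>
    intro N hN
    obtain ⟨k, rfl⟩ := Nat.exists_eq_add_of_lt hN
    rw [sum_range_succ, ih _ (by omega)]
    have e1 : n + 1 + k + 1 - (n + 1) = k + 1 := by omega
    have e2 : n + 1 + k + 1 - n = k + 2 := by omega
    rw [e1, e2]
    have p1 : (ascPochhammer ℚ (k + 2)).eval u
        = (ascPochhammer ℚ (k + 1)).eval u * (u + (k + 1)) := by
      rw [ascPochhammer_succ_right]
      push_cast
      simp [Polynomial.eval_mul]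
    have p2 : (ascPochhammer ℚ (n + 1)).eval (-u)
        = (-u) * (ascPochhammer ℚ n).eval (1 - u) := by
      rw [ascPochhammer_succ_left, Polynomial.eval_mul, Polynomial.eval_X,
        Polynomial.eval_comp, Polynomial.eval_add, Polynomial.eval_X, Polynomial.eval_one,
        show -u + 1 = 1 - u from by ring]
    have p3 : (ascPochhammer ℚ (n + 1)).eval (1 - u)
        = (ascPochhammer ℚ n).eval (1 - u) * (1 - u + n) := by
      rw [ascPochhammer_succ_right]
      push_cast
      simp [Polynomial.eval_mul]
    rw [p1, p2, p3]
    have hfn : ((Nat.factorial n : ℚ)) ≠ 0 := Nat.cast_ne_zero.mpr (Nat.factorial_ne_zero n)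
    have hfn1 : ((Nat.factorial (n + 1) : ℚ)) ≠ 0 :=
      Nat.cast_ne_zero.mpr (Nat.factorial_ne_zero (n + 1))
    have hfk1 : ((Nat.factorial (k + 1) : ℚ)) ≠ 0 :=
      Nat.cast_ne_zero.mpr (Nat.factorial_ne_zero (k + 1))
    have hfk2 : ((Nat.factorial (k + 2) : ℚ)) ≠ 0 :=
      Nat.cast_ne_zero.mpr (Nat.factorial_ne_zero (k + 2))
    have hN0 : ((n + 1 + k + 1 : ℕ) : ℚ) ≠ 0 := Nat.cast_ne_zero.mpr (by omega)
    have fk2 : (Nat.factorial (k + 2) : ℚ) = (k + 2) * (Nat.factorial (k + 1) : ℚ) := by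
      rw [Nat.factorial_succ]; push_cast; ring
    have fn1 : (Nat.factorial (n + 1) : ℚ) = (n + 1) * (Nat.factorial n : ℚ) := by
      rw [Nat.factorial_succ]; push_cast; ring
    rw [fk2, fn1]
    push_cast
    field_simp
    ring

/-- **Hook Schur function evaluation identity.**
For all `α, β ∈ ℕ` and every `u ∈ ℚ`:
`Σ_{m=0}^{β} (−u)_{β−m} (u)_{α+m+1} / ((β−m)!(α+m+1)!)
  = (u)_{α+1} (1−u)_{β} / (α! β! (α+β+1))`,
where `(u)_k` is the ascending Pochhammer symbol. -/
theorem hook_schur_evaluation (α β : ℕ) (u : ℚ) :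
    ∑ m ∈ Finset.range (β + 1),
        (ascPochhammer ℚ (β - m)).eval (-u) * (ascPochhammer ℚ (α + m + 1)).eval u /
          ((Nat.factorial (β - m) : ℚ) * (Nat.factorial (α + m + 1) : ℚ)) =
      (ascPochhammer ℚ (α + 1)).eval u * (ascPochhammer ℚ β).eval (1 - u) /
        ((Nat.factorial α : ℚ) * (Nat.factorial β : ℚ) * ((α : ℚ) + (β : ℚ) + 1)) := by
  have key := hook_aux u β (α + β + 1) (by omega)
  have reindex : ∑ m ∈ Finset.range (β + 1),
        (ascPochhammer ℚ (β - m)).eval (-u) * (ascPochhammer ℚ (α + m + 1)).eval u /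
          ((Nat.factorial (β - m) : ℚ) * (Nat.factorial (α + m + 1) : ℚ))
      = ∑ k ∈ range (β + 1),
        (ascPochhammer ℚ k).eval (-u) * (ascPochhammer ℚ (α + β + 1 - k)).eval u /
          ((Nat.factorial k : ℚ) * (Nat.factorial (α + β + 1 - k) : ℚ)) := by
    rw [← Finset.sum_range_reflect]
    apply Finset.sum_congr rfl
    intro m hm
    have hm' : m ≤ β := by simpa [Nat.lt_succ_iff] using hm
    have h0 : β + 1 - 1 - m = β - m := by omega
    have h1 : β - (β - m) = m := by omega
    have h2 : α + (β - m) + 1 = α + β + 1 - m := by omega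
    rw [h0, h1, h2]
  rw [reindex, key]
  have h3 : α + β + 1 - β = α + 1 := by omega
  rw [h3]
  have hfa : ((Nat.factorial α : ℚ)) ≠ 0 := Nat.cast_ne_zero.mpr (Nat.factorial_ne_zero α)
  have hfb : ((Nat.factorial β : ℚ)) ≠ 0 := Nat.cast_ne_zero.mpr (Nat.factorial_ne_zero β)
  have hfa1 : ((Nat.factorial (α + 1) : ℚ)) ≠ 0 :=
    Nat.cast_ne_zero.mpr (Nat.factorial_ne_zero (α + 1))
  have hN0 : (α : ℚ) + β + 1 ≠ 0 := by positivity
  have fa1 : (Nat.factorial (α + 1) : ℚ) = (α + 1) * (Nat.factorial α : ℚ) := by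
    rw [Nat.factorial_succ]; push_cast; ring
  rw [fa1]
  push_cast
  field_simp
  ring
end

section
/- Hook length product in Frobenius coordinates: for any partition λ with Frobenius coordinates (α_1,…,α_d | β_1,…,β_d), H_λ · ∏_{1≤j<j'≤d} (α_j − α_{j'})(β_j − β_{j'}) = ( ∏_{i=1}^{d} α_i! · β_i! ) · ∏_{k=1}^{d} ∏_{l=1}^{d} (α_k + β_l + 1), as an identity of natural numbers (or in ℤ). -/
private lemma lower_eq_range (s : Finset ℕ) (h : ∀ a ∈ s, ∀ b, b < a → b ∈ s) :
    s = Finset.range s.card := by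
  have hsub : Finset.range s.card ⊆ s := by
    intro i hi
    rw [Finset.mem_range] at hi
    by_contra hns
    have hsr : s ⊆ Finset.range i := by
      intro a ha
      rw [Finset.mem_range]
      by_contra hai
      push_neg at hai
      rcases eq_or_lt_of_le hai with h' | h'
      · exact hns (h' ▸ ha)
      · exact hns (h a ha i h')
    have := Finset.card_le_card hsr
    rw [Finset.card_range] at this
    omega
  exact (Finset.eq_of_subset_of_card_le hsub (by rw [Finset.card_range])).symm

private lemma conj_dual (lam : ℕ → ℕ) (L : ℕ) (hanti : Antitone lam)
    (hlen : ∀ i, lam i ≠ 0 ↔ i < L) :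
    ∀ i j, i < conjP lam L j ↔ j < lam i := by
  intro i j
  have hlow : ∀ a ∈ (Finset.range L).filter (fun i => j + 1 ≤ lam i), ∀ b, b < a →
      b ∈ (Finset.range L).filter (fun i => j + 1 ≤ lam i) := by
    intro a ha b hb
    rw [Finset.mem_filter, Finset.mem_range] at ha ⊢
    have hba : lam a ≤ lam b := hanti (le_of_lt hb)
    exact ⟨(hlen b).mp (by omega), by omega⟩
  have hTr : (Finset.range L).filter (fun i => j + 1 ≤ lam i)
      = Finset.range (conjP lam L j) := lower_eq_range _ hlow
  constructor
  · intro hi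
    have hm : i ∈ (Finset.range L).filter (fun i => j + 1 ≤ lam i) := by
      rw [hTr]; exact Finset.mem_range.mpr hi
    rw [Finset.mem_filter] at hm
    omega
  · intro hj
    have hm : i ∈ (Finset.range L).filter (fun i => j + 1 ≤ lam i) := by
      rw [Finset.mem_filter, Finset.mem_range]
      exact ⟨(hlen i).mp (by omega), by omega⟩
    rw [hTr, Finset.mem_range] at hm
    exact hm

private lemma dual_anti (f g : ℕ → ℕ) (hdual : ∀ i j, i < g j ↔ j < f i) :
    ∀ j j', j ≤ j' → g j' ≤ g j := by
  intro j j' hjj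
  by_contra hc
  push_neg at hc
  have h1 : j' < f (g j) := (hdual (g j) j').mp hc
  exact lt_irrefl (g j) ((hdual (g j) j).mpr (lt_of_le_of_lt hjj h1))

private lemma nat_eq_of_lt_iff {a b : ℕ} (h : ∀ i, i < a ↔ i < b) : a = b := by
  by_contra hc
  rcases Nat.lt_or_ge a b with h' | h'
  · exact lt_irrefl a ((h a).mpr h')
  · rcases lt_or_eq_of_le h' with h'' | h''
    · exact lt_irrefl b ((h b).mp h'')
    · exact hc h''.symm

private lemma union_prod (s t : Finset ℕ) (u v : ℕ → ℕ) (N : ℕ) (G : ℕ → ℕ)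
    (hu : ∀ x ∈ s, ∀ y ∈ s, u x = u y → x = y)
    (hv : ∀ x ∈ t, ∀ y ∈ t, v x = v y → x = y)
    (hdisj : ∀ x ∈ s, ∀ y ∈ t, u x ≠ v y)
    (hus : ∀ x ∈ s, u x ∈ Finset.Icc 1 N)
    (hvs : ∀ y ∈ t, v y ∈ Finset.Icc 1 N)
    (hcard : s.card + t.card = N) :
    (∏ x ∈ s, G (u x)) * (∏ y ∈ t, G (v y)) = ∏ c ∈ Finset.Icc 1 N, G c := by
  have hu' : Set.InjOn u s := fun x hx y hy hxy => hu x hx y hy hxy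
  have hv' : Set.InjOn v t := fun x hx y hy hxy => hv x hx y hy hxy
  have h1 : ∏ x ∈ s, G (u x) = ∏ x ∈ s.image u, G x := (Finset.prod_image hu).symm
  have h2 : ∏ y ∈ t, G (v y) = ∏ y ∈ t.image v, G y := (Finset.prod_image hv).symm
  have hdisj' : Disjoint (s.image u) (t.image v) := by
    rw [Finset.disjoint_left]
    intro a ha hb
    obtain ⟨x, hx, rfl⟩ := Finset.mem_image.mp ha
    obtain ⟨y, hy, hxy⟩ := Finset.mem_image.mp hb
    exact hdisj x hx y hy hxy.symm
  have hun : s.image u ∪ t.image v = Finset.Icc 1 N := by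
    apply Finset.eq_of_subset_of_card_le
    · intro a ha
      rcases Finset.mem_union.mp ha with h | h
      · obtain ⟨x, hx, rfl⟩ := Finset.mem_image.mp h; exact hus x hx
      · obtain ⟨y, hy, rfl⟩ := Finset.mem_image.mp h; exact hvs y hy
    · rw [Finset.card_union_of_disjoint hdisj', Finset.card_image_of_injOn hu',
        Finset.card_image_of_injOn hv', Nat.card_Icc]
      omega
  rw [h1, h2, ← Finset.prod_union hdisj', hun]

private lemma lemF (m : ℕ) (A : ℕ) :
    m.factorial * ∏ c ∈ Finset.Icc 1 A, (m + c) = (m + A).factorial := by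
  induction A with
  | zero => simp
  | succ n ihn =>
    rw [Finset.prod_Icc_succ_top (by omega : 1 ≤ n + 1), ← mul_assoc, ihn,
      show m + (n + 1) = (m + n) + 1 by ring, Nat.factorial_succ]
    ring

private lemma lemA_s13 (f g : ℕ → ℕ) (hdual : ∀ i j, i < g j ↔ j < f i) (hf0 : 0 < f 0) :
    (∏ j ∈ Finset.range (f 0), (f 0 + g j - j - 1)) *
      ∏ i ∈ Finset.Ico 1 (g 0), (f 0 - f i + i) = (f 0 + g 0 - 1).factorial := by
  have hganti := dual_anti f g hdual
  have hfanti := dual_anti g f (fun i j => (hdual j i).symm)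
  have hg0 : 0 < g 0 := (hdual 0 0).mpr hf0
  have hgpos : ∀ j, j < f 0 → 0 < g j := fun j hj => (hdual 0 j).mpr hj
  have hfpos : ∀ i, i < g 0 → 0 < f i := fun i hi => (hdual i 0).mp hi
  have hmain := union_prod (Finset.range (f 0)) (Finset.Ico 1 (g 0))
    (fun j => f 0 + g j - j - 1) (fun i => f 0 - f i + i) (f 0 + g 0 - 1) (fun x => x)
    (by
      intro x hx y hy h
      try dsimp only at h
      rw [Finset.mem_range] at hx hy
      rcases lt_trichotomy x y with hlt | he | hlt
      · have h1 := hganti x y (le_of_lt hlt); have h2 := hgpos y hy; omega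
      · exact he
      · have h1 := hganti y x (le_of_lt hlt); have h2 := hgpos x hx; omega)
    (by
      intro x hx y hy h
      try dsimp only at h
      rw [Finset.mem_Ico] at hx hy
      rcases lt_trichotomy x y with hlt | he | hlt
      · have h1 := hfanti x y (le_of_lt hlt)
        have h2 := hfanti 0 x (Nat.zero_le x)
        omega
      · exact he
      · have h1 := hfanti y x (le_of_lt hlt)
        have h2 := hfanti 0 y (Nat.zero_le y)
        omega)
    (by
      intro x hx y hy h
      try dsimp only at h
      rw [Finset.mem_range] at hx
      rw [Finset.mem_Ico] at hy
      by_cases hxy : x < f y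
      · have h1 : y < g x := (hdual y x).mpr hxy
        have h2 := hfanti 0 y (Nat.zero_le y)
        omega
      · push_neg at hxy
        have h1 : g x ≤ y := by
          by_contra hc
          push_neg at hc
          exact absurd ((hdual y x).mp hc) (by omega)
        have h2 := hgpos x hx
        omega)
    (by
      intro x hx
      try dsimp only
      rw [Finset.mem_range] at hx
      rw [Finset.mem_Icc]
      have h1 := hgpos x hx
      have h2 := hganti 0 x (Nat.zero_le x)
      omega)
    (by
      intro y hy
      try dsimp only
      rw [Finset.mem_Ico] at hy
      rw [Finset.mem_Icc]
      have h1 := hfpos y hy.2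
      have h2 := hfanti 0 y (Nat.zero_le y)
      omega)
    (by rw [Finset.card_range, Nat.card_Ico]; omega)
  rw [hmain, ← Finset.Ico_add_one_right_eq_Icc]
  exact Finset.prod_Ico_id_eq_factorial (f 0 + g 0 - 1)

private lemma lemS (f g : ℕ → ℕ) (hdual : ∀ i j, i < g j ↔ j < f i)
    (d : ℕ) (hd : ∀ i, i < d ↔ i < f i) (hd0 : 0 < d) :
    (∏ i ∈ Finset.Ico d (g 0), (f 0 - f i + i)) *
      ∏ j ∈ Finset.range d, (f 0 + g j - j - 1) =
    ∏ c ∈ Finset.Icc 1 (g 0), (f 0 - 1 + c) := by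
  have hganti := dual_anti f g hdual
  have hfanti := dual_anti g f (fun i j => (hdual j i).symm)
  have hf0 : 0 < f 0 := (hd 0).mp hd0
  have hfpos : ∀ i, i < g 0 → 0 < f i := fun i hi => (hdual i 0).mp hi
  have hfle : ∀ i, d ≤ i → f i ≤ i := by
    intro i hi
    have := (hd i).not.mp (by omega)
    omega
  have hgge : ∀ j, j < d → j < g j := fun j hj => (hdual j j).mpr ((hd j).mp hj)
  have hstep1 : ∀ i ∈ Finset.Ico d (g 0), f 0 - f i + i = f 0 - 1 + (i + 1 - f i) := by
    intro i hi
    rw [Finset.mem_Ico] at hi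
    have h1 := hfle i hi.1
    have h2 := hfpos i hi.2
    have h3 := hfanti 0 i (Nat.zero_le i)
    omega
  have hstep2 : ∀ j ∈ Finset.range d, f 0 + g j - j - 1 = f 0 - 1 + (g j - j) := by
    intro j hj
    rw [Finset.mem_range] at hj
    have h1 := hgge j hj
    omega
  rw [Finset.prod_congr rfl hstep1, Finset.prod_congr rfl hstep2]
  apply union_prod (Finset.Ico d (g 0)) (Finset.range d)
    (fun i => i + 1 - f i) (fun j => g j - j) (g 0) (fun x => f 0 - 1 + x)
  · intro x hx y hy h
    try dsimp only at h
    rw [Finset.mem_Ico] at hx hy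
    rcases lt_trichotomy x y with hlt | he | hlt
    · have h1 := hfanti x y (le_of_lt hlt)
      have h2 := hfle x hx.1
      omega
    · exact he
    · have h1 := hfanti y x (le_of_lt hlt)
      have h2 := hfle y hy.1
      omega
  · intro x hx y hy h
    try dsimp only at h
    rw [Finset.mem_range] at hx hy
    rcases lt_trichotomy x y with hlt | he | hlt
    · have h1 := hganti x y (le_of_lt hlt)
      have h2 := hgge y hy
      omega
    · exact he
    · have h1 := hganti y x (le_of_lt hlt)
      have h2 := hgge x hx
      omega
  · intro x hx y hy h
    try dsimp only at h
    rw [Finset.mem_Ico] at hx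
    rw [Finset.mem_range] at hy
    have h2 := hfle x hx.1
    by_cases hxy : y < f x
    · have h1 : x < g y := (hdual x y).mpr hxy
      omega
    · push_neg at hxy
      have h1 : g y ≤ x := by
        by_contra hc
        push_neg at hc
        exact absurd ((hdual x y).mp hc) (by omega)
      have h3 := hgge y hy
      omega
  · intro x hx
    try dsimp only
    rw [Finset.mem_Ico] at hx
    rw [Finset.mem_Icc]
    have h1 := hfle x hx.1
    have h2 := hfpos x hx.2
    omega
  · intro y hy
    try dsimp only
    rw [Finset.mem_range] at hy
    rw [Finset.mem_Icc]
    have h1 := hgge y hy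
    have h2 := hganti 0 y (Nat.zero_le y)
    omega
  · rw [Nat.card_Ico, Finset.card_range]
    have hdg : d ≤ g 0 := by
      have h1 := hgge (d - 1) (by omega)
      have h2 := hganti 0 (d - 1) (Nat.zero_le _)
      omega
    omega

private lemma row_key (f g : ℕ → ℕ) (hdual : ∀ i j, i < g j ↔ j < f i)
    (d : ℕ) (hd : ∀ i, i < d ↔ i < f i) (hd0 : 0 < d) :
    (∏ j ∈ Finset.range (f 0), (f 0 + g j - j - 1)) *
      ∏ i ∈ Finset.Ico 1 d, (f 0 - f i + i) =
    (f 0 - 1).factorial * ∏ j ∈ Finset.range d, (f 0 + g j - j - 1) := by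
  have hganti := dual_anti f g hdual
  have hf0 : 0 < f 0 := (hd 0).mp hd0
  have hg0 : 0 < g 0 := (hdual 0 0).mpr hf0
  have hdg : d ≤ g 0 := by
    have h1 : d - 1 < g (d - 1) := (hdual (d-1) (d-1)).mpr ((hd (d-1)).mp (by omega))
    have h2 := hganti 0 (d - 1) (Nat.zero_le _)
    omega
  have hA := lemA_s13 f g hdual hf0
  have hS := lemS f g hdual d hd hd0
  have hF := lemF (f 0 - 1) (g 0)
  have hsplit := Finset.prod_Ico_consecutive (fun i => f 0 - f i + i)
    (by omega : 1 ≤ d) hdg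
  have hpos : 0 < ∏ c ∈ Finset.Icc 1 (g 0), (f 0 - 1 + c) :=
    Finset.prod_pos (fun c hc => by rw [Finset.mem_Icc] at hc; omega)
  apply Nat.eq_of_mul_eq_mul_right hpos
  calc (∏ j ∈ Finset.range (f 0), (f 0 + g j - j - 1)) *
        (∏ i ∈ Finset.Ico 1 d, (f 0 - f i + i)) *
        ∏ c ∈ Finset.Icc 1 (g 0), (f 0 - 1 + c)
      = (∏ j ∈ Finset.range (f 0), (f 0 + g j - j - 1)) *
        (∏ i ∈ Finset.Ico 1 d, (f 0 - f i + i)) *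
        ((∏ i ∈ Finset.Ico d (g 0), (f 0 - f i + i)) *
          ∏ j ∈ Finset.range d, (f 0 + g j - j - 1)) := by rw [hS]
    _ = (∏ j ∈ Finset.range (f 0), (f 0 + g j - j - 1)) *
        ((∏ i ∈ Finset.Ico 1 d, (f 0 - f i + i)) *
          (∏ i ∈ Finset.Ico d (g 0), (f 0 - f i + i))) *
        ∏ j ∈ Finset.range d, (f 0 + g j - j - 1) := by ring
    _ = (∏ j ∈ Finset.range (f 0), (f 0 + g j - j - 1)) *
        (∏ i ∈ Finset.Ico 1 (g 0), (f 0 - f i + i)) *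
        ∏ j ∈ Finset.range d, (f 0 + g j - j - 1) := by rw [hsplit]
    _ = (f 0 + g 0 - 1).factorial * ∏ j ∈ Finset.range d, (f 0 + g j - j - 1) := by
        rw [hA]
    _ = (f 0 - 1).factorial * (∏ c ∈ Finset.Icc 1 (g 0), (f 0 - 1 + c)) *
        ∏ j ∈ Finset.range d, (f 0 + g j - j - 1) := by
        rw [hF, show f 0 - 1 + g 0 = f 0 + g 0 - 1 by omega]
    _ = (f 0 - 1).factorial * (∏ j ∈ Finset.range d, (f 0 + g j - j - 1)) *
        ∏ c ∈ Finset.Icc 1 (g 0), (f 0 - 1 + c) := by ring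

private lemma pairs_eq (n : ℕ) (F : ℕ → ℕ → ℕ) :
    ∏ p ∈ Finset.univ.filter (fun p : Fin n × Fin n => p.1 < p.2), F p.1 p.2
      = ∏ j ∈ Finset.range n, ∏ i ∈ Finset.range j, F i j := by
  rw [← Finset.prod_sigma (Finset.range n) (fun j => Finset.range j)
    (fun q => F q.2 q.1)]
  apply Finset.prod_bij (fun (p : Fin n × Fin n) _ => (⟨(p.2 : ℕ), (p.1 : ℕ)⟩ : Σ _ : ℕ, ℕ))
  · intro p hp
    rw [Finset.mem_filter] at hp
    rw [Finset.mem_sigma, Finset.mem_range, Finset.mem_range]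
    exact ⟨p.2.isLt, hp.2⟩
  · intro p hp q hq h
    rw [Finset.mem_filter] at hp hq
    have h1 : (p.2 : ℕ) = (q.2 : ℕ) := congrArg Sigma.fst h
    have h2 : (p.1 : ℕ) = (q.1 : ℕ) := by
      have := congrArg Sigma.snd h
      simpa using this
    exact Prod.ext (Fin.ext h2) (Fin.ext h1)
  · intro q hq
    rw [Finset.mem_sigma, Finset.mem_range, Finset.mem_range] at hq
    refine ⟨(⟨q.2, by omega⟩, ⟨q.1, hq.1⟩), ?_, rfl⟩
    rw [Finset.mem_filter]
    exact ⟨Finset.mem_univ _, hq.2⟩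
  · intro p hp
    rfl

private lemma assemble (prow pcol hmu pmu a1 b1 fa fb fmu rbf cbi bmu h00 : ℕ)
    (h1 : prow * a1 = fa * rbf)
    (h2 : pcol * h00 * b1 = fb * (cbi * h00))
    (h3 : hmu * pmu = fmu * bmu)
    (hpos : 0 < h00) :
    hmu * pcol * prow * (pmu * (a1 * b1)) = fmu * (fa * fb) * (bmu * cbi * rbf) := by
  apply Nat.eq_of_mul_eq_mul_right hpos
  calc hmu * pcol * prow * (pmu * (a1 * b1)) * h00
      = (prow * a1) * (pcol * h00 * b1) * (hmu * pmu) := by ring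
    _ = (fa * rbf) * (fb * (cbi * h00)) * (fmu * bmu) := by rw [h1, h2, h3]
    _ = fmu * (fa * fb) * (bmu * cbi * rbf) * h00 := by ring

private lemma pairs_eq' (n : ℕ) (α β : ℕ → ℕ) :
    ∏ p ∈ Finset.univ.filter (fun p : Fin n × Fin n => p.1 < p.2),
        ((α (p.1 : ℕ) - α (p.2 : ℕ)) * (β (p.1 : ℕ) - β (p.2 : ℕ)))
      = ∏ j ∈ Finset.range n, ∏ i ∈ Finset.range j, ((α i - α j) * (β i - β j)) :=
  pairs_eq n (fun i j => (α i - α j) * (β i - β j))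

private lemma conjP_le (lam : ℕ → ℕ) (L j : ℕ) : conjP lam L j ≤ L := by
  have := Finset.card_filter_le (Finset.range L) (fun i => j + 1 ≤ lam i)
  rwa [Finset.card_range] at this

private lemma main_lemma (d : ℕ) : ∀ (lam : ℕ → ℕ) (L : ℕ), Antitone lam →
    (∀ i, lam i ≠ 0 ↔ i < L) →
    (∀ i, i < d ↔ i + 1 ≤ lam i) →
    ∀ (α β : ℕ → ℕ), (∀ i, α i = lam i - (i + 1)) → (∀ i, β i = conjP lam L i - (i + 1)) →
    hookProd lam L *
        ∏ p ∈ Finset.univ.filter (fun p : Fin d × Fin d => p.1 < p.2),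
          ((α (p.1 : ℕ) - α (p.2 : ℕ)) * (β (p.1 : ℕ) - β (p.2 : ℕ))) =
      (∏ i ∈ Finset.range d, Nat.factorial (α i) * Nat.factorial (β i)) *
        ∏ k ∈ Finset.range d, ∏ l ∈ Finset.range d, (α k + β l + 1) := by
  induction d with
  | zero =>
    intro lam L hanti hlen hd α β hα hβ
    have hL : L = 0 := by
      by_contra hL
      have h0 : lam 0 ≠ 0 := (hlen 0).mpr (by omega)
      have h1 := (hd 0).mpr
      omega
    subst hL
    simp [hookProd]
  | succ d ih =>
    intro lam L hanti hlen hd α β hα hβ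
    have hdual := conj_dual lam L hanti hlen
    have hlam0 : 0 < lam 0 := by have := (hd 0).mp (by omega); omega
    have hL0 : 0 < L := by have := (hlen 0).mp (by omega); omega
    obtain ⟨L', rfl⟩ : ∃ L', L = L' + 1 := ⟨L - 1, by omega⟩
    set g : ℕ → ℕ := conjP lam (L' + 1) with hgdef
    have hganti := dual_anti lam g hdual
    have hd' : ∀ i, i < d + 1 ↔ i < lam i := fun i => hd i
    have hdT : ∀ i, i < d + 1 ↔ i < g i := fun i => (hd' i).trans (hdual i i).symm
    have hg0 : g 0 = L' + 1 := by
      apply nat_eq_of_lt_iff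
      intro i
      have h1 := hdual i 0
      have h2 := hlen i
      omega
    set μ : ℕ → ℕ := fun i => lam (i + 1) - 1 with hμdef
    set Lμ : ℕ := g 1 - 1 with hLμdef
    have hg1le : g 1 ≤ L' + 1 := by have := hganti 0 1 (by omega); omega
    have hLμle : Lμ ≤ L' := by rw [hLμdef]; omega
    have hμanti : Antitone μ := by
      intro a b hab
      simp only [hμdef]
      exact Nat.sub_le_sub_right (hanti (by omega)) 1
    have hμlen : ∀ i, μ i ≠ 0 ↔ i < Lμ := by
      intro i
      have h1 := hdual (i + 1) 1
      simp only [hμdef, hLμdef]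
      omega
    have hμd : ∀ i, i < d ↔ i + 1 ≤ μ i := by
      intro i
      have := hd (i + 1)
      simp only [hμdef]
      omega
    have hconjμ : ∀ j, conjP μ Lμ j = g (j + 1) - 1 := by
      intro j
      have hset : (Finset.range Lμ).filter (fun k => j + 1 ≤ μ k)
          = Finset.range (g (j + 1) - 1) := by
        ext k
        simp only [Finset.mem_filter, Finset.mem_range, hμdef]
        have h1 := hdual (k + 1) (j + 1)
        have h2 : g (j + 1) ≤ g 1 := hganti 1 (j + 1) (by omega)
        rw [hLμdef]
        omega
      show ((Finset.range Lμ).filter (fun k => j + 1 ≤ μ k)).card = g (j + 1) - 1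
      rw [hset, Finset.card_range]
    have hα0 : α 0 = lam 0 - 1 := by have := hα 0; omega
    have hβ0 : β 0 = g 0 - 1 := by have := hβ 0; omega
    have hα' : ∀ i, α (i + 1) = μ i - (i + 1) := by
      intro i
      have h1 := hα (i + 1)
      simp only [hμdef]
      omega
    have hβ' : ∀ i, β (i + 1) = conjP μ Lμ i - (i + 1) := by
      intro i
      have h1 := hβ (i + 1)
      rw [hconjμ i]
      omega
    have hIH := ih μ Lμ hμanti hμlen hμd (fun i => α (i + 1)) (fun i => β (i + 1)) hα' hβ'
    rw [pairs_eq' d (fun i => α (i + 1)) (fun i => β (i + 1))] at hIH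
    -- row and column keys
    have hrowkey := row_key lam g hdual (d + 1) hd' (by omega)
    have hcolkey := row_key g lam (fun i j => (hdual j i).symm) (d + 1) hdT (by omega)
    -- hook product decomposition
    have hhook : hookProd lam (L' + 1)
        = hookProd μ Lμ *
          (∏ i ∈ Finset.range L', (g 0 + lam (i + 1) - (i + 1) - 1)) *
          (∏ j ∈ Finset.range (lam 0), (lam 0 + g j - j - 1)) := by
      have hμhook : hookProd μ Lμ
          = ∏ i ∈ Finset.range L', ∏ j ∈ Finset.range (μ i),
              (lam (i + 1) + g (j + 1) - (i + 1) - (j + 1) - 1) := by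
        show (∏ i ∈ Finset.range Lμ, ∏ j ∈ Finset.range (μ i),
            (μ i + conjP μ Lμ j - i - j - 1)) = _
        rw [Finset.prod_subset (Finset.range_subset_range.mpr hLμle) (by
          intro x hx hnx
          have hx0 : μ x = 0 := by
            by_contra hc
            exact hnx (Finset.mem_range.mpr ((hμlen x).mp hc))
          rw [hx0]
          simp)]
        apply Finset.prod_congr rfl
        intro i hi
        rw [Finset.mem_range] at hi
        apply Finset.prod_congr rfl
        intro j hj
        rw [Finset.mem_range] at hj
        rw [hconjμ j]
        have h1 : j + 1 < lam (i + 1) := by simp only [hμdef] at hj; omega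
        have h2 : i + 1 < g (j + 1) := (hdual (i + 1) (j + 1)).mpr h1
        have h3 : μ i = lam (i + 1) - 1 := by simp only [hμdef]
        omega
      show (∏ i ∈ Finset.range (L' + 1), ∏ j ∈ Finset.range (lam i),
          (lam i + g j - i - j - 1)) = _
      rw [Finset.prod_range_succ']
      have hrow0 : ∏ j ∈ Finset.range (lam 0), (lam 0 + g j - 0 - j - 1)
          = ∏ j ∈ Finset.range (lam 0), (lam 0 + g j - j - 1) :=
        Finset.prod_congr rfl (fun j _ => by omega)
      rw [hrow0]
      have hinner : ∀ i ∈ Finset.range L',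
          (∏ j ∈ Finset.range (lam (i + 1)), (lam (i + 1) + g j - (i + 1) - j - 1))
          = (∏ j ∈ Finset.range (μ i), (lam (i + 1) + g (j + 1) - (i + 1) - (j + 1) - 1)) *
            (g 0 + lam (i + 1) - (i + 1) - 1) := by
        intro i hi
        rw [Finset.mem_range] at hi
        have hl : lam (i + 1) = μ i + 1 := by
          simp only [hμdef]
          have : lam (i + 1) ≠ 0 := (hlen (i + 1)).mpr (by omega)
          omega
        rw [hl, Finset.prod_range_succ']
        congr 1
        omega
      rw [Finset.prod_congr rfl hinner, Finset.prod_mul_distrib, hμhook]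
    -- pairs decomposition
    have hpairs : (∏ p ∈ Finset.univ.filter (fun p : Fin (d + 1) × Fin (d + 1) => p.1 < p.2),
          ((α (p.1 : ℕ) - α (p.2 : ℕ)) * (β (p.1 : ℕ) - β (p.2 : ℕ))))
        = (∏ j ∈ Finset.range d, ∏ i ∈ Finset.range j,
            ((α (i + 1) - α (j + 1)) * (β (i + 1) - β (j + 1)))) *
          ((∏ j ∈ Finset.range d, (α 0 - α (j + 1))) *
            (∏ j ∈ Finset.range d, (β 0 - β (j + 1)))) := by
      rw [pairs_eq' (d + 1) α β]
      simp only [Finset.prod_range_succ', Finset.prod_range_zero, mul_one,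
        Finset.prod_mul_distrib]
      ring
    -- RHS decompositions
    have hfact : (∏ i ∈ Finset.range (d + 1), Nat.factorial (α i) * Nat.factorial (β i))
        = (∏ i ∈ Finset.range d, Nat.factorial (α (i + 1)) * Nat.factorial (β (i + 1))) *
          (Nat.factorial (α 0) * Nat.factorial (β 0)) :=
      Finset.prod_range_succ' _ d
    have hbox : (∏ k ∈ Finset.range (d + 1), ∏ l ∈ Finset.range (d + 1), (α k + β l + 1))
        = ((∏ k ∈ Finset.range d, ∏ l ∈ Finset.range d, (α (k + 1) + β (l + 1) + 1)) *
            (∏ k ∈ Finset.range d, (α (k + 1) + β 0 + 1))) *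
          (∏ l ∈ Finset.range (d + 1), (α 0 + β l + 1)) := by
      simp only [Finset.prod_range_succ', Finset.prod_mul_distrib]
      ring
    -- row key in final form
    have h1 : (∏ j ∈ Finset.range (lam 0), (lam 0 + g j - j - 1)) *
          (∏ j ∈ Finset.range d, (α 0 - α (j + 1)))
        = Nat.factorial (α 0) * ∏ l ∈ Finset.range (d + 1), (α 0 + β l + 1) := by
      have ha : ∏ i ∈ Finset.Ico 1 (d + 1), (lam 0 - lam i + i)
          = ∏ j ∈ Finset.range d, (α 0 - α (j + 1)) := by
        rw [Finset.prod_Ico_eq_prod_range]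
        simp only [Nat.add_sub_cancel]
        apply Finset.prod_congr rfl
        intro i hi
        rw [Finset.mem_range] at hi
        try dsimp only
        have e1 := hα (i + 1)
        have e2 := hα 0
        have e3 : (i + 1) + 1 ≤ lam (i + 1) := (hd (i + 1)).mp (by omega)
        have e4 : lam (i + 1) ≤ lam 0 := hanti (by omega)
        rw [show 1 + i = i + 1 by omega]
        omega
      have hb : ∏ j ∈ Finset.range (d + 1), (lam 0 + g j - j - 1)
          = ∏ l ∈ Finset.range (d + 1), (α 0 + β l + 1) := by
        apply Finset.prod_congr rfl
        intro j hj
        rw [Finset.mem_range] at hj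
        have e1 := hβ j
        have e2 : j < g j := (hdT j).mp hj
        omega
      rw [← ha, ← hb, show Nat.factorial (α 0) = Nat.factorial (lam 0 - 1) by rw [hα0]]
      exact hrowkey
    -- column key in final form
    have h2 : (∏ i ∈ Finset.range L', (g 0 + lam (i + 1) - (i + 1) - 1)) *
          (α 0 + β 0 + 1) * (∏ j ∈ Finset.range d, (β 0 - β (j + 1)))
        = Nat.factorial (β 0) *
          ((∏ k ∈ Finset.range d, (α (k + 1) + β 0 + 1)) * (α 0 + β 0 + 1)) := by
      have hc1 : ∏ j ∈ Finset.range (g 0), (g 0 + lam j - j - 1)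
          = (∏ i ∈ Finset.range L', (g 0 + lam (i + 1) - (i + 1) - 1)) * (α 0 + β 0 + 1) := by
        have hr : Finset.range (g 0) = Finset.range (L' + 1) := by rw [hg0]
        rw [hr, Finset.prod_range_succ']
        congr 1
        have e1 := hα 0
        have e2 := hβ 0
        omega
      have hd1 : ∏ i ∈ Finset.Ico 1 (d + 1), (g 0 - g i + i)
          = ∏ j ∈ Finset.range d, (β 0 - β (j + 1)) := by
        rw [Finset.prod_Ico_eq_prod_range]
        simp only [Nat.add_sub_cancel]
        apply Finset.prod_congr rfl
        intro i hi
        rw [Finset.mem_range] at hi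
        try dsimp only
        have e1 := hβ (i + 1)
        have e2 := hβ 0
        have e3 : (i + 1) < g (i + 1) := (hdT (i + 1)).mp (by omega)
        have e4 : g (i + 1) ≤ g 0 := hganti 0 (i + 1) (by omega)
        rw [show 1 + i = i + 1 by omega]
        omega
      have he : ∏ j ∈ Finset.range (d + 1), (g 0 + lam j - j - 1)
          = (∏ k ∈ Finset.range d, (α (k + 1) + β 0 + 1)) * (α 0 + β 0 + 1) := by
        have he1 : ∏ j ∈ Finset.range (d + 1), (g 0 + lam j - j - 1)
            = ∏ k ∈ Finset.range (d + 1), (α k + β 0 + 1) := by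
          apply Finset.prod_congr rfl
          intro j hj
          rw [Finset.mem_range] at hj
          have e1 := hα j
          have e2 : j < lam j := (hd' j).mp hj
          have e3 := hβ 0
          omega
        rw [he1]
        exact Finset.prod_range_succ' _ d
      rw [show Nat.factorial (β 0) = Nat.factorial (g 0 - 1) by rw [hβ0]]
      rw [← hc1, ← hd1, ← he]
      exact hcolkey
    -- final assembly
    rw [hhook, hpairs, hfact, hbox]
    apply Nat.eq_of_mul_eq_mul_right (show 0 < α 0 + β 0 + 1 by omega)
    trans ((∏ j ∈ Finset.range (lam 0), (lam 0 + g j - j - 1)) *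
          (∏ j ∈ Finset.range d, (α 0 - α (j + 1))) *
        ((∏ i ∈ Finset.range L', (g 0 + lam (i + 1) - (i + 1) - 1)) *
          (α 0 + β 0 + 1) * (∏ j ∈ Finset.range d, (β 0 - β (j + 1)))) *
        (hookProd μ Lμ * ∏ j ∈ Finset.range d, ∏ i ∈ Finset.range j,
          ((α (i + 1) - α (j + 1)) * (β (i + 1) - β (j + 1)))))
    · ring
    · rw [h1, h2, hIH]
      ring

/-- **Hook length product in Frobenius coordinates.**
For any partition `λ` with Frobenius coordinates `(α_1,…,α_d | β_1,…,β_d)`, where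
`d = #{i : λ_i ≥ i}`, `α_i = λ_i − i`, `β_i = λ'_i − i` (1-indexed, here realized with
0-indexing as `α i = lam i − (i+1)`, `β i = conjP lam L i − (i+1)` for `i < d`):
`H_λ · ∏_{j<j'} (α_j − α_{j'})(β_j − β_{j'})
  = (∏_i α_i! β_i!) · ∏_{k,l} (α_k + β_l + 1)` as natural numbers. -/
theorem hook_prod_frobenius
    (lam : ℕ → ℕ) (L : ℕ) (hanti : Antitone lam) (hlen : ∀ i, lam i ≠ 0 ↔ i < L)
    (d : ℕ) (hd : d = ((Finset.range L).filter fun i => i + 1 ≤ lam i).card)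
    (α β : ℕ → ℕ) (hα : ∀ i, α i = lam i - (i + 1)) (hβ : ∀ i, β i = conjP lam L i - (i + 1)) :
    hookProd lam L *
        ∏ p ∈ Finset.univ.filter (fun p : Fin d × Fin d => p.1 < p.2),
          ((α (p.1 : ℕ) - α (p.2 : ℕ)) * (β (p.1 : ℕ) - β (p.2 : ℕ))) =
      (∏ i ∈ Finset.range d, Nat.factorial (α i) * Nat.factorial (β i)) *
        ∏ k ∈ Finset.range d, ∏ l ∈ Finset.range d, (α k + β l + 1) := by
  apply main_lemma d lam L hanti hlen _ α β hα hβ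
  have hlow : ∀ a ∈ (Finset.range L).filter (fun i => i + 1 ≤ lam i), ∀ b, b < a →
      b ∈ (Finset.range L).filter (fun i => i + 1 ≤ lam i) := by
    intro a ha b hb
    rw [Finset.mem_filter, Finset.mem_range] at ha ⊢
    have h1 : lam a ≤ lam b := hanti (le_of_lt hb)
    exact ⟨(hlen b).mp (by omega), by omega⟩
  have hTr : (Finset.range L).filter (fun i => i + 1 ≤ lam i)
      = Finset.range d := by rw [hd]; exact lower_eq_range _ hlow
  intro i
  constructor
  · intro hi
    have hm : i ∈ (Finset.range L).filter (fun i => i + 1 ≤ lam i) := by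
      rw [hTr]; exact Finset.mem_range.mpr hi
    rw [Finset.mem_filter] at hm
    exact hm.2
  · intro hi
    have hm : i ∈ (Finset.range L).filter (fun i => i + 1 ≤ lam i) := by
      rw [Finset.mem_filter, Finset.mem_range]
      exact ⟨(hlen i).mp (by omega), hi⟩
    rw [hTr, Finset.mem_range] at hm
    exact hm
end

section
/- Andréief (Heine) identity: let (X, μ) be a measure space with μ σ-finite, let N ≥ 1, and let f_1,…,f_N, g_1,…,g_N : X → ℂ be measurable functions such that f_i · g_j is integrable for all i, j. Then ∫_{X^N} det_{1≤i,j≤N}( f_i(x_j) ) · det_{1≤i,j≤N}( g_i(x_j) ) dμ^{⊗N}(x_1,…,x_N) = N! · det_{1≤i,j≤N} ( ∫_X f_i(x) g_j(x) dμ(x) ). -/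
open MeasureTheory

/-- **Andréief (Heine) identity.**
For a σ-finite measure `μ` on `X`, `N ≥ 1`, and measurable functions
`f_1,…,f_N, g_1,…,g_N : X → ℂ` with `f i * g j` integrable for all `i, j`:
`∫_{X^N} det(f_i(x_j)) det(g_i(x_j)) dμ^{⊗N} = N! · det(∫ f_i g_j dμ)`. -/
theorem andreief_identity {X : Type*} [MeasurableSpace X] (μ : Measure X) [SigmaFinite μ]
    (N : ℕ) (hN : 1 ≤ N) (f g : Fin N → X → ℂ)
    (hf : ∀ i, Measurable (f i)) (hg : ∀ i, Measurable (g i))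
    (hint : ∀ i j, Integrable (fun x => f i x * g j x) μ) :
    ∫ x : Fin N → X,
        Matrix.det (Matrix.of fun i j : Fin N => f i (x j)) *
          Matrix.det (Matrix.of fun i j : Fin N => g i (x j))
        ∂(Measure.pi fun _ : Fin N => μ) =
      (Nat.factorial N : ℂ) *
        Matrix.det (Matrix.of fun i j : Fin N => ∫ t, f i t * g j t ∂μ) := by
  classical
  letI : MeasureSpace X := ⟨μ⟩
  have hvol : (Measure.pi fun _ : Fin N => μ) = (volume : Measure (Fin N → X)) := rfl
  -- expand the product of determinants pointwise
  have key : ∀ x : Fin N → X,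
      Matrix.det (Matrix.of fun i j : Fin N => f i (x j)) *
        Matrix.det (Matrix.of fun i j : Fin N => g i (x j)) =
      ∑ σ : Equiv.Perm (Fin N), ∑ τ : Equiv.Perm (Fin N),
        ((Equiv.Perm.sign σ : ℤ) : ℂ) * ((Equiv.Perm.sign τ : ℤ) : ℂ) *
          ∏ i, (f (σ i) (x i) * g (τ i) (x i)) := by
    intro x
    rw [Matrix.det_apply', Matrix.det_apply', Finset.sum_mul_sum]
    refine Finset.sum_congr rfl fun σ _ => Finset.sum_congr rfl fun τ _ => ?_
    simp only [Matrix.of_apply, Finset.prod_mul_distrib]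
    ring
  have hterm : ∀ (σ τ : Equiv.Perm (Fin N)),
      Integrable (fun x : Fin N → X => ∏ i, (f (σ i) (x i) * g (τ i) (x i))) volume := by
    intro σ τ
    exact Integrable.fintype_prod (f := fun i t => f (σ i) t * g (τ i) t)
      (fun i => hint (σ i) (τ i))
  simp only [key, hvol]
  rw [integral_finset_sum _ (fun σ _ => integrable_finset_sum _
    (fun τ _ => ((hterm σ τ).const_mul _)))]
  have step : ∀ σ : Equiv.Perm (Fin N),
      ∫ x : Fin N → X, ∑ τ : Equiv.Perm (Fin N),
        ((Equiv.Perm.sign σ : ℤ) : ℂ) * ((Equiv.Perm.sign τ : ℤ) : ℂ) *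
          ∏ i, (f (σ i) (x i) * g (τ i) (x i)) =
      ∑ τ : Equiv.Perm (Fin N),
        ((Equiv.Perm.sign σ : ℤ) : ℂ) * ((Equiv.Perm.sign τ : ℤ) : ℂ) *
          ∏ i, ∫ t, f (σ i) t * g (τ i) t ∂μ := by
    intro σ
    rw [integral_finset_sum _ (fun τ _ => ((hterm σ τ).const_mul _))]
    refine Finset.sum_congr rfl fun τ _ => ?_
    rw [integral_const_mul, ← hvol, integral_fintype_prod_eq_prod (ι := Fin N)
      (f := fun i t => f (σ i) t * g (τ i) t)]
  simp only [step]
  -- combinatorial step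
  set M : Matrix (Fin N) (Fin N) ℂ := Matrix.of fun i j : Fin N => ∫ t, f i t * g j t ∂μ with hM
  have inner : ∀ σ : Equiv.Perm (Fin N),
      ∑ τ : Equiv.Perm (Fin N),
        ((Equiv.Perm.sign σ : ℤ) : ℂ) * ((Equiv.Perm.sign τ : ℤ) : ℂ) *
          ∏ i, ∫ t, f (σ i) t * g (τ i) t ∂μ = M.det := by
    intro σ
    rw [← Equiv.sum_comp (Equiv.mulRight σ)
      (fun τ => ((Equiv.Perm.sign σ : ℤ) : ℂ) * ((Equiv.Perm.sign τ : ℤ) : ℂ) *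
        ∏ i, ∫ t, f (σ i) t * g (τ i) t ∂μ)]
    have : ∀ π : Equiv.Perm (Fin N),
        ((Equiv.Perm.sign σ : ℤ) : ℂ) * ((Equiv.Perm.sign (π * σ) : ℤ) : ℂ) *
          ∏ i, ∫ t, f (σ i) t * g ((π * σ) i) t ∂μ =
        ((Equiv.Perm.sign π : ℤ) : ℂ) * ∏ i, M i (π i) := by
      intro π
      have hs : ((Equiv.Perm.sign σ : ℤ) : ℂ) * ((Equiv.Perm.sign (π * σ) : ℤ) : ℂ) =
          ((Equiv.Perm.sign π : ℤ) : ℂ) := by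
        rw [Equiv.Perm.sign_mul]
        rcases Int.units_eq_one_or (Equiv.Perm.sign σ) with h | h <;>
          rcases Int.units_eq_one_or (Equiv.Perm.sign π) with h' | h' <;>
          simp [h, h'] <;> ring
      rw [hs]
      congr 1
      rw [← Equiv.prod_comp σ (fun j => M j (π j))]
      rfl
    simp only [Equiv.coe_mulRight, this]
    rw [← Matrix.det_transpose]
    rw [Matrix.det_apply']
    rfl
  simp only [inner, Finset.sum_const, Finset.card_univ, Fintype.card_perm, Fintype.card_fin,
    nsmul_eq_mul]
end

section
/- Double-minor expansion of det(1 + AQ): for any commutative ring R, any n ∈ ℕ, and any matrices A, Q : Matrix (Fin n) (Fin n) R, det(1 + A·Q) = Σ_{d=0}^{n} Σ_{S, T ⊆ Fin n, |S| = |T| = d} det( A.submatrix S T ) · det( Q.submatrix T S ), where A.submatrix S T is the d×d submatrix of A with rows indexed by S (in increasing order) and columns by T, and the d = 0 term equals 1. -/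
open Finset Matrix Equiv

section Aux

variable {R : Type*} [CommRing R]

private lemma image_orderEmbOfFin_comp {n d : ℕ} (T : Finset (Fin n)) (h : T.card = d)
    (σ : Equiv.Perm (Fin d)) :
    Finset.image ((T.orderEmbOfFin h) ∘ σ) Finset.univ = T := by
  apply Finset.coe_injective
  rw [Finset.coe_image, Finset.coe_univ, Set.image_univ, Set.range_comp,
    Equiv.range_eq_univ, Set.image_univ, Finset.range_orderEmbOfFin]

/-- Cauchy–Binet formula. -/
private lemma cauchyBinet {n d : ℕ} (B : Matrix (Fin d) (Fin n) R)
    (C : Matrix (Fin n) (Fin d) R) :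
    (B * C).det =
      ∑ T ∈ (Finset.powersetCard d (Finset.univ : Finset (Fin n))).attach,
        (B.submatrix id (T.1.orderEmbOfFin ((Finset.mem_powersetCard.mp T.2).2))).det *
        (C.submatrix (T.1.orderEmbOfFin ((Finset.mem_powersetCard.mp T.2).2)) id).det := by
  classical
  have step1 : (B * C).det
      = ∑ p ∈ (Finset.univ : Finset (Fin d → Fin n)),
          (B.submatrix id p).det * ∏ i, C (p i) i := by
    simp only [det_apply', mul_apply, Finset.prod_univ_sum, Finset.mul_sum,
      Fintype.piFinset_univ]
    rw [Finset.sum_comm]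
    refine Finset.sum_congr rfl fun p _ => ?_
    rw [Finset.sum_mul]
    refine Finset.sum_congr rfl fun σ _ => ?_
    simp only [submatrix_apply, id_eq]
    rw [Finset.prod_mul_distrib]
    ring
  have step2 : (∑ p ∈ (Finset.univ : Finset (Fin d → Fin n)),
        (B.submatrix id p).det * ∏ i, C (p i) i)
      = ∑ p ∈ (Finset.univ : Finset (Fin d → Fin n)).filter
            (fun p : Fin d → Fin n => Function.Injective p),
          (B.submatrix id p).det * ∏ i, C (p i) i := by
    refine (Finset.sum_filter_of_ne fun p _ hne => ?_).symm
    by_contra hinj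
    apply hne
    obtain ⟨i, j, hij, hne'⟩ : ∃ i j, p i = p j ∧ i ≠ j := by
      rw [Function.Injective] at hinj
      push_neg at hinj
      exact hinj
    rw [Matrix.det_zero_of_column_eq hne' (fun k => by simp [hij]), zero_mul]
  rw [step1, step2]
  -- rewrite the RHS: expand `det (C.submatrix e_T id)` as a sum over permutations
  have hRHS : ∀ T ∈ (Finset.powersetCard d (Finset.univ : Finset (Fin n))).attach,
      (B.submatrix id (T.1.orderEmbOfFin ((Finset.mem_powersetCard.mp T.2).2))).det *
        (C.submatrix (T.1.orderEmbOfFin ((Finset.mem_powersetCard.mp T.2).2)) id).det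
      = ∑ σ : Equiv.Perm (Fin d),
          (B.submatrix id
              ((T.1.orderEmbOfFin ((Finset.mem_powersetCard.mp T.2).2)) ∘ σ)).det *
            ∏ i, C ((T.1.orderEmbOfFin ((Finset.mem_powersetCard.mp T.2).2)) (σ i)) i := by
    intro T _
    rw [det_apply' (C.submatrix _ id), Finset.mul_sum]
    refine Finset.sum_congr rfl fun σ _ => ?_
    have hsub : B.submatrix id ((T.1.orderEmbOfFin ((Finset.mem_powersetCard.mp T.2).2)) ∘ σ)
        = (B.submatrix id (T.1.orderEmbOfFin ((Finset.mem_powersetCard.mp T.2).2))).submatrix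
            id σ := by
      rw [Matrix.submatrix_submatrix]
      rfl
    rw [hsub, Matrix.det_permute']
    simp only [submatrix_apply, id_eq, Function.comp_apply]
    ring
  rw [Finset.sum_congr rfl hRHS, ← Finset.sum_product']
  refine (Finset.sum_bij
    (i := fun (x : {T // T ∈ Finset.powersetCard d (Finset.univ : Finset (Fin n))} ×
        Equiv.Perm (Fin d)) _ =>
      ((x.1.1.orderEmbOfFin ((Finset.mem_powersetCard.mp x.1.2).2)) ∘ x.2 : Fin d → Fin n))
    ?_ ?_ ?_ ?_).symm
  · intro x _
    simp only [Finset.mem_filter, Finset.mem_univ, true_and]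
    exact ((x.1.1.orderEmbOfFin ((Finset.mem_powersetCard.mp x.1.2).2)).injective).comp
      x.2.injective
  · rintro ⟨⟨Tx, hTx⟩, σx⟩ _ ⟨⟨Ty, hTy⟩, σy⟩ _ hxy
    dsimp only at hxy
    have hT : Tx = Ty := by
      have h1 := image_orderEmbOfFin_comp Tx ((Finset.mem_powersetCard.mp hTx).2) σx
      have h2 := image_orderEmbOfFin_comp Ty ((Finset.mem_powersetCard.mp hTy).2) σy
      rw [← h1, ← h2]
      exact congrArg (fun f => Finset.image f Finset.univ) hxy
    subst hT
    have hσ : σx = σy :=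
      Equiv.ext fun i => (Tx.orderEmbOfFin ((Finset.mem_powersetCard.mp hTx).2)).injective
        (congrFun hxy i)
    subst hσ
    rfl
  · intro p hp
    simp only [Finset.mem_filter, Finset.mem_univ, true_and] at hp
    set T : Finset (Fin n) := Finset.image p Finset.univ with hTdef
    have hTcard : T.card = d := by
      rw [hTdef, Finset.card_image_of_injective _ hp, Finset.card_univ, Fintype.card_fin]
    have hTmem : T ∈ Finset.powersetCard d (Finset.univ : Finset (Fin n)) :=
      Finset.mem_powersetCard.mpr ⟨Finset.subset_univ _, hTcard⟩
    have hpT : ∀ i, p i ∈ T := fun i => Finset.mem_image_of_mem p (Finset.mem_univ i)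
    have hbij : Function.Bijective (fun i : Fin d => (⟨p i, hpT i⟩ : T)) := by
      rw [Fintype.bijective_iff_injective_and_card]
      constructor
      · intro a b hab
        exact hp (congrArg Subtype.val hab)
      · rw [Fintype.card_coe, hTcard, Fintype.card_fin]
    refine ⟨(⟨T, hTmem⟩,
      ((Equiv.ofBijective _ hbij).trans
        ((T.orderIsoOfFin ((Finset.mem_powersetCard.mp hTmem).2)).symm.toEquiv))),
      Finset.mem_product.mpr ⟨Finset.mem_attach _ _, Finset.mem_univ _⟩, ?_⟩
    dsimp only
    funext i
    simp only [Function.comp_apply, Equiv.trans_apply, Equiv.ofBijective_apply,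
      OrderIso.toEquiv_symm, RelIso.coe_fn_toEquiv]
    have : ∀ (x : T), (T.orderEmbOfFin ((Finset.mem_powersetCard.mp hTmem).2))
        ((T.orderIsoOfFin ((Finset.mem_powersetCard.mp hTmem).2)).symm x) = (x : Fin n) := by
      intro x
      rw [← Finset.coe_orderIsoOfFin_apply, OrderIso.apply_symm_apply]
    exact this _
  · rintro ⟨⟨T, hT⟩, σ⟩ _
    rfl

/-- The determinant of the matrix whose rows in `S` come from `M` and whose rows
outside `S` come from the identity equals the principal minor of `M` on `S`. -/
private lemma det_piecewise_one {n : ℕ} (S : Finset (Fin n)) (M : Matrix (Fin n) (Fin n) R) :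
    (Matrix.of (S.piecewise (M : Fin n → Fin n → R)
        ((1 : Matrix (Fin n) (Fin n) R) : Fin n → Fin n → R))).det
      = (M.submatrix (S.orderEmbOfFin rfl) (S.orderEmbOfFin rfl)).det := by
  classical
  set N : Matrix (Fin n) (Fin n) R := Matrix.of (S.piecewise (M : Fin n → Fin n → R)
    ((1 : Matrix (Fin n) (Fin n) R) : Fin n → Fin n → R)) with hN
  have hScard : S.card = S.card := rfl
  have hSc : Sᶜ.card = Sᶜ.card := rfl
  let e : Fin S.card ⊕ Fin Sᶜ.card ≃ Fin n := finSumEquivOfFinset hScard hSc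
  rw [← Matrix.det_submatrix_equiv_self e N]
  have hblocks : N.submatrix e e =
      Matrix.fromBlocks (M.submatrix (S.orderEmbOfFin hScard) (S.orderEmbOfFin hScard))
        (M.submatrix (S.orderEmbOfFin hScard) (Sᶜ.orderEmbOfFin hSc))
        0 (1 : Matrix (Fin Sᶜ.card) (Fin Sᶜ.card) R) := by
    ext i j
    cases i with
    | inl a =>
      have hrow : e (Sum.inl a) = S.orderEmbOfFin hScard a := finSumEquivOfFinset_inl hScard hSc a
      have hmem : e (Sum.inl a) ∈ S := by rw [hrow]; exact Finset.orderEmbOfFin_mem S hScard a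
      cases j with
      | inl b =>
        have hcol : e (Sum.inl b) = S.orderEmbOfFin hScard b :=
          finSumEquivOfFinset_inl hScard hSc b
        simp [N, hrow, hcol, Finset.piecewise_eq_of_mem _ _ _ hmem]
        exact congrFun (Finset.piecewise_eq_of_mem S (M : Fin n → Fin n → R) _ (Finset.orderEmbOfFin_mem S hScard a)) _
      | inr b =>
        have hcol : e (Sum.inr b) = Sᶜ.orderEmbOfFin hSc b := finSumEquivOfFinset_inr hScard hSc b
        simp [N, hrow, hcol, Finset.piecewise_eq_of_mem _ _ _ hmem]
        exact congrFun (Finset.piecewise_eq_of_mem S (M : Fin n → Fin n → R) _ (Finset.orderEmbOfFin_mem S hScard a)) _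
    | inr a =>
      have hrow : e (Sum.inr a) = Sᶜ.orderEmbOfFin hSc a := finSumEquivOfFinset_inr hScard hSc a
      have hmem : e (Sum.inr a) ∉ S := by
        rw [hrow]
        exact Finset.mem_compl.mp (Finset.orderEmbOfFin_mem Sᶜ hSc a)
      cases j with
      | inl b =>
        have hcol : e (Sum.inl b) = S.orderEmbOfFin hScard b :=
          finSumEquivOfFinset_inl hScard hSc b
        have hne : e (Sum.inr a) ≠ e (Sum.inl b) := by
          intro h
          apply hmem
          rw [h, hcol]
          exact Finset.orderEmbOfFin_mem S hScard b
        simp [N, Matrix.one_apply_ne hne]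
        exact (congrFun (Finset.piecewise_eq_of_notMem S (M : Fin n → Fin n → R) _ hmem) _).trans (Matrix.one_apply_ne hne)
      | inr b =>
        have hcol : e (Sum.inr b) = Sᶜ.orderEmbOfFin hSc b := finSumEquivOfFinset_inr hScard hSc b
        have hiff : e (Sum.inr a) = e (Sum.inr b) ↔ a = b := by
          constructor
          · intro h
            exact Sum.inr_injective (e.injective h)
          · rintro rfl; rfl
        simp only [N, submatrix_apply, Matrix.of_apply,
          Finset.piecewise_eq_of_notMem _ _ _ hmem, fromBlocks_apply₂₂]
        rw [congrFun (Finset.piecewise_eq_of_notMem S (M : Fin n → Fin n → R) (1 : Matrix (Fin n) (Fin n) R) hmem) (e (Sum.inr b)), Matrix.one_apply, Matrix.one_apply]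
        simp [hiff]
  rw [hblocks, Matrix.det_fromBlocks_zero₂₁, Matrix.det_one, mul_one]

end Aux

/-- **Double-minor (Cauchy–Binet type) expansion of `det (1 + A·Q)`.**
For a commutative ring `R` and `A Q : Matrix (Fin n) (Fin n) R`,
`det (1 + A·Q) = Σ_{d=0}^{n} Σ_{|S|=|T|=d} det(A.submatrix S T) · det(Q.submatrix T S)`,
where `A.submatrix S T` is the `d × d` submatrix with rows indexed by `S` and columns by
`T`, both taken in increasing order, and the `d = 0` term equals `1`. -/
theorem det_one_add_mul_eq_sum_double_minors
    {R : Type*} [CommRing R] (n : ℕ) (A Q : Matrix (Fin n) (Fin n) R) :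
    (1 + A * Q).det =
      ∑ d ∈ Finset.range (n + 1),
        ∑ S ∈ (Finset.powersetCard d (Finset.univ : Finset (Fin n))).attach,
          ∑ T ∈ (Finset.powersetCard d (Finset.univ : Finset (Fin n))).attach,
            (A.submatrix
                (S.1.orderEmbOfFin ((Finset.mem_powersetCard.mp S.2).2))
                (T.1.orderEmbOfFin ((Finset.mem_powersetCard.mp T.2).2))).det *
              (Q.submatrix
                (T.1.orderEmbOfFin ((Finset.mem_powersetCard.mp T.2).2))
                (S.1.orderEmbOfFin ((Finset.mem_powersetCard.mp S.2).2))).det := by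
  classical
  -- the expansion as a function of the finset `S` alone
  set g : Finset (Fin n) → R := fun S =>
    ∑ T ∈ (Finset.powersetCard S.card (Finset.univ : Finset (Fin n))).attach,
      (A.submatrix (S.orderEmbOfFin rfl)
          (T.1.orderEmbOfFin ((Finset.mem_powersetCard.mp T.2).2))).det *
        (Q.submatrix (T.1.orderEmbOfFin ((Finset.mem_powersetCard.mp T.2).2))
          (S.orderEmbOfFin rfl)).det with hg
  -- Step A: expansion over row subsets
  have hA : (1 + A * Q).det = ∑ S : Finset (Fin n),
      ((A * Q).submatrix (S.orderEmbOfFin rfl) (S.orderEmbOfFin rfl)).det := by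
    rw [add_comm]
    calc (A * Q + 1).det
        = (Matrix.detRowAlternating :
            (Fin n → R) [⋀^Fin n]→ₗ[R] R).toMultilinearMap
            ((A * Q : Fin n → Fin n → R) + ((1 : Matrix (Fin n) (Fin n) R))) := rfl
      _ = ∑ S : Finset (Fin n), (Matrix.detRowAlternating :
            (Fin n → R) [⋀^Fin n]→ₗ[R] R).toMultilinearMap
            (S.piecewise (A * Q : Fin n → Fin n → R) (1 : Matrix (Fin n) (Fin n) R)) :=
        MultilinearMap.map_add_univ _ _ _
      _ = ∑ S : Finset (Fin n),
            ((A * Q).submatrix (S.orderEmbOfFin rfl) (S.orderEmbOfFin rfl)).det := by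
        refine Finset.sum_congr rfl fun S _ => ?_
        exact det_piecewise_one S (A * Q)
  -- Step B: Cauchy–Binet on each principal minor
  have hB : ∀ S : Finset (Fin n),
      ((A * Q).submatrix (S.orderEmbOfFin rfl) (S.orderEmbOfFin rfl)).det = g S := by
    intro S
    have hfac : (A * Q).submatrix (S.orderEmbOfFin rfl) (S.orderEmbOfFin rfl)
        = (A.submatrix (S.orderEmbOfFin rfl) id) * (Q.submatrix id (S.orderEmbOfFin rfl)) := by
      ext i j
      simp [Matrix.mul_apply]
    rw [hfac, cauchyBinet, hg]
    refine Finset.sum_congr rfl fun T _ => ?_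
    rw [Matrix.submatrix_submatrix, Matrix.submatrix_submatrix]
    rfl
  rw [hA, Finset.sum_congr rfl fun S _ => hB S]
  -- regroup the sum over all subsets by cardinality
  have hgroup : (∑ S : Finset (Fin n), g S)
      = ∑ d ∈ Finset.range (n + 1), ∑ S ∈ Finset.powersetCard d (Finset.univ : Finset (Fin n)),
          g S := by
    have hmap : ∀ S ∈ (Finset.univ : Finset (Finset (Fin n))), S.card ∈ Finset.range (n + 1) :=
      fun S _ => by simpa [Nat.lt_succ_iff] using Finset.card_le_univ S
    rw [← Finset.sum_fiberwise_of_maps_to hmap]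
    refine Finset.sum_congr rfl fun d _ => ?_
    refine Finset.sum_congr ?_ fun _ _ => rfl
    ext S
    simp [Finset.mem_powersetCard]
  rw [hgroup]
  refine Finset.sum_congr rfl fun d _ => ?_
  have key : ∀ (S : Finset (Fin n)) (hS : S.card = d),
      (∑ T ∈ (Finset.powersetCard S.card (Finset.univ : Finset (Fin n))).attach,
        (A.submatrix (S.orderEmbOfFin rfl)
            (T.1.orderEmbOfFin ((Finset.mem_powersetCard.mp T.2).2))).det *
          (Q.submatrix (T.1.orderEmbOfFin ((Finset.mem_powersetCard.mp T.2).2))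
            (S.orderEmbOfFin rfl)).det)
      = ∑ T ∈ (Finset.powersetCard d (Finset.univ : Finset (Fin n))).attach,
          (A.submatrix (S.orderEmbOfFin hS)
              (T.1.orderEmbOfFin ((Finset.mem_powersetCard.mp T.2).2))).det *
            (Q.submatrix (T.1.orderEmbOfFin ((Finset.mem_powersetCard.mp T.2).2))
              (S.orderEmbOfFin hS)).det := by
    intro S hS
    subst hS
    rfl
  rw [← Finset.sum_attach (Finset.powersetCard d (Finset.univ : Finset (Fin n))) g]
  refine Finset.sum_congr rfl fun S _ => ?_
  rw [hg]
  exact key S.1 ((Finset.mem_powersetCard.mp S.2).2)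
end
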